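/- arXiv:1712.09652 — 9 statements merged into one kernel-verified Lean document; each statement's English description precedes it below -/
import Mathlib

section
/- The function J : ℝ^d → ℝ is differentiable, and for every θ ∈ ℝ^d its gradient is ∇J(θ) = (ΦᵀΞ(P^{(λ)} − I)Φ)ᵀ x_θ, where x_θ is the unique solution in span{φ(S)} of the linear system ΦᵀΞΦx = ΦᵀΞ(T^{(λ)}v_θ − v_θ). -/
/-!
Because `Ξ` is positive definite, `Π_ξ v = Φ c` holds exactly when `c` solves the normal
equations `ΦᵀΞΦ c = ΦᵀΞ v`. Hence `Π_ξ` is linear, and the solutions of the system in the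
statement are the `x` with `Φ x = Π_ξ (T v_θ - v_θ)`; exactly one of them lies in the row space,
since `ℝ^d` is the orthogonal sum of the row space and `ker Φ`. The map
`θ ↦ Π_ξ (T v_θ - v_θ)` is affine with linear part `h ↦ Π_ξ ((P - I) Φ h)`, so `J` is quadratic
with derivative `h ↦ ⟨Φ x, Π_ξ ((P - I) Φ h)⟩_ξ = ⟨Φ x, (P - I) Φ h⟩_ξ` at `θ`, the last step
by orthogonality of `Π_ξ`.
-/

open Matrix

variable {m k : Type*} [Fintype m]

section RowSpace

variable (Φ : Matrix m k ℝ)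

lemma span_row_eq_range_mulVecLin_transpose :
    Submodule.span ℝ (Set.range Φ.row) = LinearMap.range Φᵀ.mulVecLin := by
  rw [range_mulVecLin, col_transpose]

variable [Fintype k]

lemma range_mulVecLin_mul_transpose :
    LinearMap.range (Φ * Φᵀ).mulVecLin = LinearMap.range Φ.mulVecLin :=
  Submodule.eq_of_le_of_finrank_eq
    (by rw [mulVecLin_mul]; exact LinearMap.range_comp_le_range _ _) (rank_self_mul_transpose Φ)

variable {Φ} in
lemma eq_zero_of_mem_span_row_of_mulVec_eq_zero {z : k → ℝ}
    (hz : z ∈ Submodule.span ℝ (Set.range Φ.row)) (h : Φ *ᵥ z = 0) : z = 0 := by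
  rw [span_row_eq_range_mulVecLin_transpose] at hz
  obtain ⟨c, rfl⟩ := hz
  rw [mulVecLin_apply] at h ⊢
  rw [← dotProduct_self_eq_zero, dotProduct_transpose_mulVec, h, dotProduct_zero]

lemma existsUnique_mem_span_row_mulVec_eq (a : k → ℝ) :
    ∃! x, x ∈ Submodule.span ℝ (Set.range Φ.row) ∧ Φ *ᵥ x = Φ *ᵥ a := by
  obtain ⟨w, hw⟩ : Φ *ᵥ a ∈ LinearMap.range (Φ * Φᵀ).mulVecLin := by
    rw [range_mulVecLin_mul_transpose]
    exact ⟨a, rfl⟩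
  have hw_mem : Φᵀ *ᵥ w ∈ Submodule.span ℝ (Set.range Φ.row) := by
    rw [span_row_eq_range_mulVecLin_transpose]
    exact ⟨w, rfl⟩
  have hw_eq : Φ *ᵥ (Φᵀ *ᵥ w) = Φ *ᵥ a := by rwa [mulVec_mulVec]
  refine ⟨Φᵀ *ᵥ w, ⟨hw_mem, hw_eq⟩, fun x ⟨hx, hxa⟩ => ?_⟩
  refine sub_eq_zero.1 (eq_zero_of_mem_span_row_of_mulVec_eq_zero (sub_mem hx hw_mem) ?_)
  rw [mulVec_sub, hxa, hw_eq, sub_self]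

end RowSpace

section Projection

variable [Fintype k] {Ξ : Matrix m m ℝ} {Φ : Matrix m k ℝ}

lemma Matrix.PosDef.mulVec_eq_of_transpose_mul_mul_mulVec_eq (hΞ : Ξ.PosDef) {a c : k → ℝ}
    (h : (Φᵀ * Ξ * Φ) *ᵥ a = (Φᵀ * Ξ * Φ) *ᵥ c) : Φ *ᵥ a = Φ *ᵥ c := by
  have key : (a - c) ⬝ᵥ (Φᵀ * Ξ * Φ) *ᵥ (a - c) = Φ *ᵥ (a - c) ⬝ᵥ Ξ *ᵥ Φ *ᵥ (a - c) := by
    rw [← mulVec_mulVec, ← mulVec_mulVec, dotProduct_transpose_mulVec, dotProduct_comm]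
  rw [mulVec_sub, h, sub_self, dotProduct_zero] at key
  by_contra hne
  have hpos := hΞ.dotProduct_mulVec_pos (sub_ne_zero.2 hne)
  rw [star_trivial, ← mulVec_sub, ← key] at hpos
  exact hpos.false

variable {proj : (m → ℝ) → m → ℝ}

lemma transpose_mul_mul_mulVec_eq_of_proj_eq
    (horth : ∀ v θ, Φ *ᵥ θ ⬝ᵥ Ξ *ᵥ (v - proj v) = 0) {v : m → ℝ} {a : k → ℝ}
    (ha : proj v = Φ *ᵥ a) :
    (Φᵀ * Ξ * Φ) *ᵥ a = (Φᵀ * Ξ) *ᵥ v := by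
  have h : (Φᵀ * Ξ) *ᵥ (v - Φ *ᵥ a) = 0 := by
    refine dotProduct_eq_zero _ fun θ => ?_
    rw [dotProduct_comm, ← mulVec_mulVec, dotProduct_transpose_mulVec, dotProduct_comm, ← ha]
    exact horth v θ
  rw [mulVec_sub, sub_eq_zero, mulVec_mulVec] at h
  exact h.symm

lemma proj_eq_iff (hΞ : Ξ.PosDef) (hmem : ∀ v, ∃ θ, proj v = Φ *ᵥ θ)
    (horth : ∀ v θ, Φ *ᵥ θ ⬝ᵥ Ξ *ᵥ (v - proj v) = 0) {v : m → ℝ} {c : k → ℝ} :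
    proj v = Φ *ᵥ c ↔ (Φᵀ * Ξ * Φ) *ᵥ c = (Φᵀ * Ξ) *ᵥ v := by
  obtain ⟨a, ha⟩ := hmem v
  refine ⟨transpose_mul_mul_mulVec_eq_of_proj_eq horth, fun hc => ?_⟩
  rw [ha]
  exact hΞ.mulVec_eq_of_transpose_mul_mul_mulVec_eq
    ((transpose_mul_mul_mulVec_eq_of_proj_eq horth ha).trans hc.symm)

lemma isLinearMap_proj (hΞ : Ξ.PosDef) (hmem : ∀ v, ∃ θ, proj v = Φ *ᵥ θ)
    (horth : ∀ v θ, Φ *ᵥ θ ⬝ᵥ Ξ *ᵥ (v - proj v) = 0) : IsLinearMap ℝ proj where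
  map_add u v := by
    obtain ⟨a, ha⟩ := hmem u
    obtain ⟨b, hb⟩ := hmem v
    rw [ha, hb, ← mulVec_add, proj_eq_iff hΞ hmem horth, mulVec_add, mulVec_add,
      (proj_eq_iff hΞ hmem horth).1 ha, (proj_eq_iff hΞ hmem horth).1 hb]
  map_smul t v := by
    obtain ⟨a, ha⟩ := hmem v
    rw [ha, ← mulVec_smul, proj_eq_iff hΞ hmem horth, mulVec_smul, mulVec_smul,
      (proj_eq_iff hΞ hmem horth).1 ha]

lemma dotProduct_mulVec_proj (horth : ∀ v θ, Φ *ᵥ θ ⬝ᵥ Ξ *ᵥ (v - proj v) = 0)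
    (v : m → ℝ) (θ : k → ℝ) : Φ *ᵥ θ ⬝ᵥ Ξ *ᵥ proj v = Φ *ᵥ θ ⬝ᵥ Ξ *ᵥ v := by
  have h := horth v θ
  rwa [mulVec_sub, dotProduct_sub, sub_eq_zero, eq_comm] at h

end Projection

lemma HasFDerivAt.half_dotProduct_mulVec_self {E : Type*} [NormedAddCommGroup E]
    [NormedSpace ℝ E] {Ξ : Matrix m m ℝ} (hΞ : Ξᵀ = Ξ) {u : E → m → ℝ} {U : E →L[ℝ] m → ℝ}
    {x : E} (hu : HasFDerivAt u U x) {ℓ : E →L[ℝ] ℝ} (hℓ : ∀ h, ℓ h = u x ⬝ᵥ Ξ *ᵥ U h) :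
    HasFDerivAt (fun y => 1 / 2 * (u y ⬝ᵥ Ξ *ᵥ u y)) ℓ x := by
  have hΞu : HasFDerivAt (fun y => Ξ *ᵥ u y)
      ((LinearMap.toContinuousLinearMap Ξ.mulVecLin).comp U) x :=
    (LinearMap.toContinuousLinearMap Ξ.mulVecLin).hasFDerivAt.comp x hu
  have hsum : HasFDerivAt (fun y => ∑ i, u y i * (Ξ *ᵥ u y) i) _ x :=
    HasFDerivAt.fun_sum (u := Finset.univ) fun i _ =>
      (hasFDerivAt_pi'.1 hu i).fun_mul (hasFDerivAt_pi'.1 hΞu i)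
  refine (hsum.const_mul (1 / 2 : ℝ)).congr_fderiv (ContinuousLinearMap.ext fun h => ?_)
  have hsymm : Ξ *ᵥ u x ⬝ᵥ U h = u x ⬝ᵥ Ξ *ᵥ U h := by
    rw [dotProduct_comm, ← dotProduct_transpose_mulVec, hΞ]
  simp only [_root_.smul_apply, _root_.sum_apply, _root_.add_apply,
    ContinuousLinearMap.comp_apply, ContinuousLinearMap.proj_apply,
    LinearMap.coe_toContinuousLinearMap', mulVecLin_apply, smul_eq_mul, Finset.sum_add_distrib]
  change 1 / 2 * (u x ⬝ᵥ Ξ *ᵥ U h + Ξ *ᵥ u x ⬝ᵥ U h) = ℓ h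
  rw [hsymm, hℓ]
  ring

lemma hasFDerivAt_linearMap_add_mulVec [Fintype k] (L : (m → ℝ) →ₗ[ℝ] m → ℝ) (b : m → ℝ)
    (M : Matrix m k ℝ) (θ : EuclideanSpace ℝ k) :
    HasFDerivAt (fun θ' : EuclideanSpace ℝ k => L (b + M *ᵥ θ'))
      (LinearMap.toContinuousLinearMap
        (L ∘ₗ M.mulVecLin ∘ₗ (WithLp.linearEquiv 2 ℝ (k → ℝ)).toLinearMap)) θ := by
  simp_rw [map_add]
  exact (L ∘ₗ M.mulVecLin ∘ₗ (WithLp.linearEquiv 2 ℝ (k → ℝ)).toLinearMap).toContinuousLinearMap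
    |>.hasFDerivAt.const_add (L b)

theorem stmt_1_general
    (n d : ℕ)
    (Φ : Matrix (Fin n) (Fin d) ℝ)
    (ξ : Fin n → ℝ) (hξ : ∀ i, 0 < ξ i)
    (Ξ : Matrix (Fin n) (Fin n) ℝ) (hΞ : Ξ = Matrix.diagonal ξ)
    -- `proj` is the ⟨·,·⟩_ξ-orthogonal projection onto the column space of Φ
    (proj : (Fin n → ℝ) → (Fin n → ℝ))
    (hproj_mem : ∀ v : Fin n → ℝ, ∃ θ : Fin d → ℝ, proj v = Φ.mulVec θ)
    (hproj_orth : ∀ (v : Fin n → ℝ) (θ : Fin d → ℝ),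
      Φ.mulVec θ ⬝ᵥ Ξ.mulVec (v - proj v) = 0)
    -- the affine generalized Bellman operator `T v = r + P v`
    (P : Matrix (Fin n) (Fin n) ℝ) (r : Fin n → ℝ)
    (T : (Fin n → ℝ) → (Fin n → ℝ)) (hT : ∀ v, T v = r + P.mulVec v)
    -- the objective function `J(θ) = ½‖Π_ξ(T v_θ − v_θ)‖²_ξ`
    (J : EuclideanSpace ℝ (Fin d) → ℝ)
    (hJ : ∀ θ : EuclideanSpace ℝ (Fin d),
      J θ = (1 / 2) * (proj (T (Φ.mulVec θ) - Φ.mulVec θ) ⬝ᵥ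
          Ξ.mulVec (proj (T (Φ.mulVec θ) - Φ.mulVec θ)))) :
    ∀ θ : EuclideanSpace ℝ (Fin d),
      (∃! x : Fin d → ℝ,
        x ∈ Submodule.span ℝ (Set.range (fun i : Fin n => Φ i)) ∧
        (Φᵀ * Ξ * Φ).mulVec x = (Φᵀ * Ξ).mulVec (T (Φ.mulVec θ) - Φ.mulVec θ)) ∧
      (∀ x : Fin d → ℝ,
        x ∈ Submodule.span ℝ (Set.range (fun i : Fin n => Φ i)) →
        (Φᵀ * Ξ * Φ).mulVec x = (Φᵀ * Ξ).mulVec (T (Φ.mulVec θ) - Φ.mulVec θ) →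
        HasGradientAt J (WithLp.toLp 2 ((Φᵀ * Ξ * (P - 1) * Φ)ᵀ.mulVec x)) θ) := by
  have hΞpos : Ξ.PosDef := hΞ ▸ posDef_diagonal_iff.2 hξ
  have hsolve {v x} : (Φᵀ * Ξ * Φ) *ᵥ x = (Φᵀ * Ξ) *ᵥ v ↔ proj v = Φ *ᵥ x :=
    (proj_eq_iff hΞpos hproj_mem hproj_orth).symm
  intro θ
  refine ⟨?_, fun x _ hx => ?_⟩
  · obtain ⟨a, ha⟩ := hproj_mem (T (Φ *ᵥ θ) - Φ *ᵥ θ)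
    have h := existsUnique_mem_span_row_mulVec_eq Φ a
    simp only [hsolve, ha, eq_comm] at h ⊢
    exact h
  let projₗ := IsLinearMap.mk' proj (isLinearMap_proj hΞpos hproj_mem hproj_orth)
  have herr (θ' : Fin d → ℝ) : T (Φ *ᵥ θ') - Φ *ᵥ θ' = r + ((P - 1) * Φ) *ᵥ θ' := by
    rw [hT, Matrix.sub_mul, Matrix.one_mul, sub_mulVec, ← mulVec_mulVec]
    abel
  have hJ' : J = fun θ' => 1 / 2 * (projₗ (r + ((P - 1) * Φ) *ᵥ θ'.ofLp) ⬝ᵥ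
      Ξ *ᵥ projₗ (r + ((P - 1) * Φ) *ᵥ θ'.ofLp)) :=
    funext fun θ' => by rw [hJ, herr]; rfl
  rw [hasGradientAt_iff_hasFDerivAt, hJ']
  refine (hasFDerivAt_linearMap_add_mulVec projₗ r _ θ).half_dotProduct_mulVec_self
    (hΞ ▸ diagonal_transpose ξ) fun h => ?_
  rw [IsLinearMap.mk'_apply, ← herr, hsolve.1 hx, InnerProductSpace.toDual_apply_apply,
    EuclideanSpace.inner_eq_star_dotProduct, star_trivial, WithLp.ofLp_toLp,
    dotProduct_transpose_mulVec]
  calc x ⬝ᵥ (Φᵀ * Ξ * (P - 1) * Φ) *ᵥ h.ofLp = Φ *ᵥ x ⬝ᵥ Ξ *ᵥ ((P - 1) * Φ) *ᵥ h.ofLp := by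
        simp only [← mulVec_mulVec]
        rw [dotProduct_transpose_mulVec, dotProduct_comm]
    _ = Φ *ᵥ x ⬝ᵥ Ξ *ᵥ projₗ (((P - 1) * Φ) *ᵥ h.ofLp) :=
        (dotProduct_mulVec_proj hproj_orth _ x).symm

/-- The projected-Bellman-error objective `J` is differentiable with
`∇J(θ) = (ΦᵀΞ(P^{(λ)} − I)Φ)ᵀ x_θ`, where `x_θ` is the unique solution in `span{φ(S)}`
of the linear system `ΦᵀΞΦx = ΦᵀΞ(T^{(λ)}v_θ − v_θ)`. -/
theorem stmt_1
    (n d : ℕ) (hn : 0 < n) (hd : 0 < d)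
    (Φ : Matrix (Fin n) (Fin d) ℝ) (hΦ : Φ ≠ 0)
    (ξ : Fin n → ℝ) (hξ : ∀ i, 0 < ξ i)
    (Ξ : Matrix (Fin n) (Fin n) ℝ) (hΞ : Ξ = Matrix.diagonal ξ)
    -- `proj` is the ⟨·,·⟩_ξ-orthogonal projection onto the column space of Φ
    (proj : (Fin n → ℝ) → (Fin n → ℝ))
    (hproj_mem : ∀ v : Fin n → ℝ, ∃ θ : Fin d → ℝ, proj v = Φ.mulVec θ)
    (hproj_orth : ∀ (v : Fin n → ℝ) (θ : Fin d → ℝ),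
      Φ.mulVec θ ⬝ᵥ Ξ.mulVec (v - proj v) = 0)
    -- the affine generalized Bellman operator `T v = r + P v`
    (P : Matrix (Fin n) (Fin n) ℝ) (r : Fin n → ℝ)
    (T : (Fin n → ℝ) → (Fin n → ℝ)) (hT : ∀ v, T v = r + P.mulVec v)
    -- the objective function `J(θ) = ½‖Π_ξ(T v_θ − v_θ)‖²_ξ`
    (J : EuclideanSpace ℝ (Fin d) → ℝ)
    (hJ : ∀ θ : EuclideanSpace ℝ (Fin d),
      J θ = (1 / 2) * (proj (T (Φ.mulVec θ) - Φ.mulVec θ) ⬝ᵥ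
          Ξ.mulVec (proj (T (Φ.mulVec θ) - Φ.mulVec θ)))) :
    ∀ θ : EuclideanSpace ℝ (Fin d),
      (∃! x : Fin d → ℝ,
        x ∈ Submodule.span ℝ (Set.range (fun i : Fin n => Φ i)) ∧
        (Φᵀ * Ξ * Φ).mulVec x = (Φᵀ * Ξ).mulVec (T (Φ.mulVec θ) - Φ.mulVec θ)) ∧
      (∀ x : Fin d → ℝ,
        x ∈ Submodule.span ℝ (Set.range (fun i : Fin n => Φ i)) →
        (Φᵀ * Ξ * Φ).mulVec x = (Φᵀ * Ξ).mulVec (T (Φ.mulVec θ) - Φ.mulVec θ) →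
        HasGradientAt J (WithLp.toLp 2 ((Φᵀ * Ξ * (P - 1) * Φ)ᵀ.mulVec x)) θ) :=
  stmt_1_general n d Φ ξ hξ Ξ hΞ proj hproj_mem hproj_orth P r T hT J hJ
end

section
/- Let B_θ ⊆ ℝ^d be nonempty and compact, and define the dual function q(x) = inf_{θ ∈ B_θ} ψ^o(θ, x) for x ∈ ℝ^d. Then q is real-valued; q(x + w) = q(x) for every x ∈ ℝ^d and every w in the kernel of Φ; q is strictly concave on span{φ(S)}; q(x) → −∞ as ‖x‖₂ → ∞ with x ∈ span{φ(S)}; and q has a unique maximizer x_opt over span{φ(S)}. -/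
open Matrix

private lemma dot_diag {n : ℕ} (ξ u v : Fin n → ℝ) :
    u ⬝ᵥ (Matrix.diagonal ξ).mulVec v = ∑ i, ξ i * (u i * v i) := by
  simp only [dotProduct, Matrix.mulVec_diagonal]
  exact Finset.sum_congr rfl fun i _ => by ring

private lemma quad_combo {n : ℕ} (ξ u v w : Fin n → ℝ) (a b : ℝ) (hab : a + b = 1) :
    (a • u + b • v) ⬝ᵥ (Matrix.diagonal ξ).mulVec w
      - (1/2) * ((a • u + b • v) ⬝ᵥ (Matrix.diagonal ξ).mulVec (a • u + b • v))
    = a * (u ⬝ᵥ (Matrix.diagonal ξ).mulVec w - (1/2) * (u ⬝ᵥ (Matrix.diagonal ξ).mulVec u))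
      + b * (v ⬝ᵥ (Matrix.diagonal ξ).mulVec w - (1/2) * (v ⬝ᵥ (Matrix.diagonal ξ).mulVec v))
      + (1/2) * (a * b) * ((u - v) ⬝ᵥ (Matrix.diagonal ξ).mulVec (u - v)) := by
  have hb : b = 1 - a := by linarith
  subst hb
  simp only [dot_diag, Finset.mul_sum, ← Finset.sum_sub_distrib, ← Finset.sum_add_distrib]
  refine Finset.sum_congr rfl fun i _ => ?_
  simp only [Pi.add_apply, Pi.smul_apply, Pi.sub_apply, smul_eq_mul]
  ring


/-- For nonempty compact `B_θ ⊆ ℝ^d` and the dual function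
`q(x) = inf_{θ ∈ B_θ} ψ^o(θ, x)`: `q` is real-valued (the infimum is a genuine greatest
lower bound); `q(x + w) = q(x)` for `w` in the kernel of `Φ`; `q` is strictly concave on
`span{φ(S)}`; `q(x) → −∞` as `‖x‖₂ → ∞` within `span{φ(S)}`; and `q` has a unique
maximizer over `span{φ(S)}`. -/
theorem stmt_4
    (n d : ℕ) (hn : 0 < n) (hd : 0 < d)
    (Φ : Matrix (Fin n) (Fin d) ℝ) (hΦ : Φ ≠ 0)
    (ξ : Fin n → ℝ) (hξ : ∀ i, 0 < ξ i)
    (Ξ : Matrix (Fin n) (Fin n) ℝ) (hΞ : Ξ = Matrix.diagonal ξ)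
    (P : Matrix (Fin n) (Fin n) ℝ) (r : Fin n → ℝ)
    (T : (Fin n → ℝ) → (Fin n → ℝ)) (hT : ∀ v, T v = r + P.mulVec v)
    (p : (Fin d → ℝ) → ℝ)
    (hp_conv : ConvexOn ℝ Set.univ p) (hp_diff : Differentiable ℝ p)
    (Bθ : Set (Fin d → ℝ)) (hBθ_ne : Bθ.Nonempty) (hBθ_cpt : IsCompact Bθ)
    -- `ψ^o(θ,x) = ⟨Φx, T v_θ − v_θ⟩_ξ − ½‖Φx‖²_ξ + p(θ)`
    (ψ : (Fin d → ℝ) → (Fin d → ℝ) → ℝ)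
    (hψ : ∀ θ x : Fin d → ℝ,
      ψ θ x = Φ.mulVec x ⬝ᵥ Ξ.mulVec (T (Φ.mulVec θ) - Φ.mulVec θ)
        - (1 / 2) * (Φ.mulVec x ⬝ᵥ Ξ.mulVec (Φ.mulVec x)) + p θ)
    (q : (Fin d → ℝ) → ℝ)
    (hq : ∀ x : Fin d → ℝ, q x = sInf ((fun θ => ψ θ x) '' Bθ)) :
    (∀ x : Fin d → ℝ, IsGLB ((fun θ => ψ θ x) '' Bθ) (q x)) ∧
    (∀ x w : Fin d → ℝ, Φ.mulVec w = 0 → q (x + w) = q x) ∧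
    StrictConcaveOn ℝ
      ((Submodule.span ℝ (Set.range (fun i : Fin n => Φ i)) : Submodule ℝ (Fin d → ℝ)) :
        Set (Fin d → ℝ)) q ∧
    (∀ M : ℝ, ∃ R : ℝ, ∀ x : Fin d → ℝ,
      x ∈ Submodule.span ℝ (Set.range (fun i : Fin n => Φ i)) →
      R ≤ Real.sqrt (x ⬝ᵥ x) → q x ≤ M) ∧
    (∃! x : Fin d → ℝ,
      x ∈ Submodule.span ℝ (Set.range (fun i : Fin n => Φ i)) ∧
      ∀ y ∈ Submodule.span ℝ (Set.range (fun i : Fin n => Φ i)), q y ≤ q x) := by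
  subst hΞ
  set V : Submodule ℝ (Fin d → ℝ) := Submodule.span ℝ (Set.range (fun i : Fin n => Φ i)) with hVdef
  set Q : (Fin d → ℝ) → ℝ :=
    fun z => Φ.mulVec z ⬝ᵥ (Matrix.diagonal ξ).mulVec (Φ.mulVec z) with hQdef
  -- continuity of ψ in θ
  have hmv : ∀ (m k : ℕ) (A : Matrix (Fin m) (Fin k) ℝ),
      Continuous fun z : Fin k → ℝ => A.mulVec z := fun m k A =>
    (A.mulVecLin).continuous_of_finiteDimensional
  have hdot : ∀ (c : Fin n → ℝ), Continuous fun v : Fin n → ℝ => c ⬝ᵥ v := by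
    intro c
    unfold dotProduct
    exact continuous_finset_sum _ fun i _ => continuous_const.mul (continuous_apply i)
  have hcont : ∀ x : Fin d → ℝ, Continuous fun θ : Fin d → ℝ => ψ θ x := by
    intro x
    have : (fun θ : Fin d → ℝ => ψ θ x) = fun θ =>
        Φ.mulVec x ⬝ᵥ (Matrix.diagonal ξ).mulVec (r + P.mulVec (Φ.mulVec θ) - Φ.mulVec θ)
          - (1 / 2) * (Φ.mulVec x ⬝ᵥ (Matrix.diagonal ξ).mulVec (Φ.mulVec x)) + p θ := by
      funext θ; rw [hψ, hT]
    rw [this]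
    exact ((((hdot _).comp ((hmv n n (Matrix.diagonal ξ)).comp
      ((continuous_const.add ((hmv n n P).comp (hmv n d Φ))).sub (hmv n d Φ)))).sub
      continuous_const).add hp_diff.continuous)
  -- Part 1
  have part1 : ∀ x : Fin d → ℝ, IsGLB ((fun θ => ψ θ x) '' Bθ) (q x) := by
    intro x
    rw [hq]
    exact isGLB_csInf (hBθ_ne.image _) (hBθ_cpt.image (hcont x)).bddBelow
  have hq_le : ∀ (x θ : Fin d → ℝ), θ ∈ Bθ → q x ≤ ψ θ x := by
    intro x θ hθ
    exact (part1 x).1 ⟨θ, hθ, rfl⟩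
  have hq_ge : ∀ (x : Fin d → ℝ) (c : ℝ), (∀ θ ∈ Bθ, c ≤ ψ θ x) → c ≤ q x := by
    intro x c hc
    exact (part1 x).2 fun y ⟨θ, hθ, hy⟩ => hy ▸ hc θ hθ
  -- Part 2
  have part2 : ∀ x w : Fin d → ℝ, Φ.mulVec w = 0 → q (x + w) = q x := by
    intro x w hw
    rw [hq, hq]
    congr 1
    apply Set.image_congr
    intro θ _
    rw [hψ, hψ, Matrix.mulVec_add, hw, add_zero]
  -- key identity
  have hkey : ∀ (θ x y : Fin d → ℝ) (a b : ℝ), a + b = 1 →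
      ψ θ (a • x + b • y) = a * ψ θ x + b * ψ θ y + (1/2) * (a * b) * Q (x - y) := by
    intro θ x y a b hab
    have e1 : Φ.mulVec (a • x + b • y) = a • Φ.mulVec x + b • Φ.mulVec y := by
      rw [Matrix.mulVec_add, Matrix.mulVec_smul, Matrix.mulVec_smul]
    have e2 : Φ.mulVec (x - y) = Φ.mulVec x - Φ.mulVec y := Matrix.mulVec_sub Φ x y
    rw [hψ, hψ, hψ]
    simp only [hQdef]
    rw [e1, e2]
    have h := quad_combo ξ (Φ.mulVec x) (Φ.mulVec y)
      (T (Φ.mulVec θ) - Φ.mulVec θ) a b hab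
    linear_combination h - p θ * hab
  -- Q nonneg and positivity
  have hQ0 : ∀ z : Fin d → ℝ, 0 ≤ Q z := by
    intro z
    rw [hQdef]
    simp only [dot_diag]
    exact Finset.sum_nonneg fun i _ => mul_nonneg (hξ i).le (mul_self_nonneg _)
  have hker : ∀ z ∈ V, Φ.mulVec z = 0 → z = 0 := by
    intro z hz h0
    have hall : ∀ y ∈ V, y ⬝ᵥ z = 0 := by
      intro y hy
      induction hy using Submodule.span_induction with
      | mem y hy =>
          obtain ⟨i, rfl⟩ := hy
          have : Φ.mulVec z i = 0 := by rw [h0]; rfl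
          simpa [Matrix.mulVec, dotProduct, mul_comm] using this
      | zero => simp
      | add y₁ y₂ _ _ h1 h2 => rw [add_dotProduct, h1, h2, add_zero]
      | smul c y₁ _ h1 => rw [smul_dotProduct, h1, smul_zero]
    exact dotProduct_self_eq_zero.mp (hall z hz)
  have hQpos : ∀ z : Fin d → ℝ, z ∈ V → z ≠ 0 → 0 < Q z := by
    intro z hz hz0
    have hu : Φ.mulVec z ≠ 0 := fun h => hz0 (hker z hz h)
    obtain ⟨i, hi⟩ := Function.ne_iff.mp hu
    rw [hQdef]
    simp only [dot_diag]
    apply Finset.sum_pos' (fun j _ => mul_nonneg (hξ j).le (mul_self_nonneg _))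
    exact ⟨i, Finset.mem_univ i, mul_pos (hξ i)
      (by simpa [mul_self_pos] using hi)⟩
  -- concavity on univ
  have hconc : ConcaveOn ℝ Set.univ q := by
    refine ⟨convex_univ, fun x _ y _ a b ha hb hab => ?_⟩
    apply hq_ge
    intro θ hθ
    rw [hkey θ x y a b hab]
    simp only [smul_eq_mul]
    have h1 := hq_le x θ hθ
    have h2 := hq_le y θ hθ
    nlinarith [hQ0 (x - y), mul_nonneg (mul_nonneg ha hb) (hQ0 (x - y)),
      mul_le_mul_of_nonneg_left h1 ha, mul_le_mul_of_nonneg_left h2 hb]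
  -- Part 3: strict concavity on V
  have part3 : StrictConcaveOn ℝ (V : Set (Fin d → ℝ)) q := by
    refine ⟨V.convex, fun x hx y hy hxy a b ha hb hab => ?_⟩
    have hd : x - y ∈ V := V.sub_mem hx hy
    have hQxy : 0 < Q (x - y) := hQpos _ hd (sub_ne_zero.mpr hxy)
    have hstep : a * q x + b * q y + (1/2) * (a * b) * Q (x - y) ≤ q (a • x + b • y) := by
      apply hq_ge
      intro θ hθ
      rw [hkey θ x y a b hab]
      have h1 := hq_le x θ hθ
      have h2 := hq_le y θ hθ
      nlinarith [mul_le_mul_of_nonneg_left h1 ha.le, mul_le_mul_of_nonneg_left h2 hb.le]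
    simp only [smul_eq_mul]
    nlinarith [mul_pos (mul_pos ha hb) hQxy]
  -- smul scaling of Q
  have hQsmul : ∀ (c : ℝ) (z : Fin d → ℝ), Q (c • z) = c^2 * Q z := by
    intro c z
    rw [hQdef]
    simp only [Matrix.mulVec_smul, smul_dotProduct, Matrix.mulVec_smul, dotProduct_smul,
      smul_eq_mul]
    ring
  have hds : ∀ z : Fin d → ℝ, 0 ≤ z ⬝ᵥ z :=
    fun z => Finset.sum_nonneg fun i _ => mul_self_nonneg _
  have hdssmul : ∀ (c : ℝ) (z : Fin d → ℝ), (c • z) ⬝ᵥ (c • z) = c^2 * (z ⬝ᵥ z) := by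
    intro c z
    rw [smul_dotProduct, dotProduct_smul, smul_eq_mul, smul_eq_mul]; ring
  have hdot2 : ∀ {k m : ℕ} (f g : (Fin k → ℝ) → (Fin m → ℝ)), Continuous f → Continuous g →
      Continuous fun z => f z ⬝ᵥ g z := by
    intro k m f g hf hg
    unfold dotProduct
    exact continuous_finset_sum _ fun i _ =>
      ((continuous_apply i).comp hf).mul ((continuous_apply i).comp hg)
  have hQcont : Continuous Q := by
    rw [hQdef]
    exact hdot2 _ _ (hmv n d Φ) ((hmv n n _).comp (hmv n d Φ))
  have hdcont : Continuous fun z : Fin d → ℝ => z ⬝ᵥ z :=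
    hdot2 _ _ continuous_id continuous_id
  have hdpos : ∀ z : Fin d → ℝ, z ≠ 0 → 0 < z ⬝ᵥ z := by
    intro z hz
    rcases (hds z).lt_or_eq with h | h
    · exact h
    · exact absurd (dotProduct_self_eq_zero.mp h.symm) hz
  have hunit : ∀ z : Fin d → ℝ, z ∈ V → z ≠ 0 →
      ((Real.sqrt (z ⬝ᵥ z))⁻¹ • z ∈ V ∧
        ((Real.sqrt (z ⬝ᵥ z))⁻¹ • z) ⬝ᵥ ((Real.sqrt (z ⬝ᵥ z))⁻¹ • z) = 1) := by
    intro z hz hz0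
    have hs := hdpos z hz0
    have hsq : Real.sqrt (z ⬝ᵥ z) ^ 2 = z ⬝ᵥ z := Real.sq_sqrt (hds z)
    have hsne : Real.sqrt (z ⬝ᵥ z) ≠ 0 := by positivity
    refine ⟨V.smul_mem _ hz, ?_⟩
    rw [hdssmul, inv_pow, hsq]
    exact inv_mul_cancel₀ hs.ne'
  -- coercivity constant: Q z ≥ c * (z ⬝ᵥ z) on V
  have hcoer : ∃ c : ℝ, 0 < c ∧ ∀ z ∈ V, c * (z ⬝ᵥ z) ≤ Q z := by
    set S : Set (Fin d → ℝ) := {z | z ∈ V ∧ z ⬝ᵥ z = 1} with hSdef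
    have hrow : ∃ i : Fin n, Φ i ≠ 0 := by
      by_contra h
      push_neg at h
      exact hΦ (by ext i j; rw [h i]; rfl)
    obtain ⟨i0, hi0⟩ := hrow
    have hz0V : Φ i0 ∈ V := Submodule.subset_span ⟨i0, rfl⟩
    have hSne : S.Nonempty := by
      obtain ⟨h1, h2⟩ := hunit (Φ i0) hz0V hi0
      exact ⟨_, h1, h2⟩
    have hScl : IsClosed S := by
      have : S = (V : Set (Fin d → ℝ)) ∩ ((fun z => z ⬝ᵥ z) ⁻¹' {1}) := rfl
      rw [this]
      exact (Submodule.closed_of_finiteDimensional V).inter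
        (isClosed_singleton.preimage hdcont)
    have hSbdd : Bornology.IsBounded S := by
      apply (Metric.isBounded_closedBall (x := (0 : Fin d → ℝ)) (r := 1)).subset
      intro z hz
      rw [Metric.mem_closedBall, dist_zero_right]
      rw [pi_norm_le_iff_of_nonneg zero_le_one]
      intro i
      rw [Real.norm_eq_abs]
      have h1 : z i * z i ≤ 1 := by
        rw [← hz.2]
        exact Finset.single_le_sum (f := fun j => z j * z j)
          (fun j _ => mul_self_nonneg _) (Finset.mem_univ i)
      exact abs_le.mpr ⟨by nlinarith, by nlinarith⟩
    have hScpt : IsCompact S := Metric.isCompact_of_isClosed_isBounded hScl hSbdd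
    obtain ⟨z₁, hz₁S, hmin⟩ := hScpt.exists_isMinOn hSne hQcont.continuousOn
    have hz₁0 : z₁ ≠ 0 := by
      intro h
      rw [h] at hz₁S
      simp [hSdef, dotProduct] at hz₁S
    refine ⟨Q z₁, hQpos z₁ hz₁S.1 hz₁0, fun z hz => ?_⟩
    rcases eq_or_ne z 0 with rfl | hz0
    · simp [hQdef, Matrix.mulVec_zero]
    · have hs := hdpos z hz0
      have hsq : Real.sqrt (z ⬝ᵥ z) ^ 2 = z ⬝ᵥ z := Real.sq_sqrt (hds z)
      have hsne : Real.sqrt (z ⬝ᵥ z) ≠ 0 := by positivity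
      obtain ⟨h1, h2⟩ := hunit z hz hz0
      have := hmin ⟨h1, h2⟩
      simp only [Set.mem_setOf_eq] at this
      rw [hQsmul] at this
      have h3 : Q z₁ * (z ⬝ᵥ z) ≤ ((Real.sqrt (z ⬝ᵥ z))⁻¹ ^ 2 * Q z) * (z ⬝ᵥ z) :=
        mul_le_mul_of_nonneg_right this (hds z)
      have h4 : (Real.sqrt (z ⬝ᵥ z))⁻¹ ^ 2 * (z ⬝ᵥ z) = 1 := by
        rw [inv_pow, hsq]
        exact inv_mul_cancel₀ hs.ne'
      have h5 : (Real.sqrt (z ⬝ᵥ z))⁻¹ ^ 2 * Q z * (z ⬝ᵥ z) = Q z := by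
        rw [mul_right_comm, h4, one_mul]
      rw [h5] at h3
      exact h3
  -- Part 4
  obtain ⟨c, hc, hcoer'⟩ := hcoer
  obtain ⟨θ0, hθ0⟩ := hBθ_ne
  have hbound : ∃ C : ℝ, ∀ x : Fin d → ℝ, q x ≤ C - (1/4) * Q x := by
    set K1 : Fin n → ℝ := T (Φ.mulVec θ0) - Φ.mulVec θ0 with hK1
    refine ⟨(∑ i, ξ i * (K1 i * K1 i)) + p θ0, fun x => ?_⟩
    have h0 := hq_le x θ0 hθ0
    rw [hψ] at h0
    have hlin : Φ.mulVec x ⬝ᵥ (Matrix.diagonal ξ).mulVec K1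
        ≤ (1/4) * Q x + ∑ i, ξ i * (K1 i * K1 i) := by
      rw [dot_diag]
      have hQx : Q x = ∑ i, ξ i * (Φ.mulVec x i * Φ.mulVec x i) := by
        rw [hQdef]; exact dot_diag ξ _ _
      rw [hQx, Finset.mul_sum, ← Finset.sum_add_distrib]
      refine Finset.sum_le_sum fun i _ => ?_
      have := hξ i
      nlinarith [sq_nonneg (Φ.mulVec x i / 2 - K1 i)]
    have hQx' : Φ.mulVec x ⬝ᵥ (Matrix.diagonal ξ).mulVec (Φ.mulVec x) = Q x := by
      rw [hQdef]
    rw [hQx'] at h0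
    linarith [h0, hlin]
  obtain ⟨C, hC⟩ := hbound
  have part4 : ∀ M : ℝ, ∃ R : ℝ, ∀ x : Fin d → ℝ,
      x ∈ V → R ≤ Real.sqrt (x ⬝ᵥ x) → q x ≤ M := by
    intro M
    refine ⟨Real.sqrt (max 0 ((C - M) * 4 / c)), fun x hx hR => ?_⟩
    have hm : (0:ℝ) ≤ max 0 ((C - M) * 4 / c) := le_max_left _ _
    have hms : max 0 ((C - M) * 4 / c) ≤ x ⬝ᵥ x := by
      have := Real.sqrt_le_sqrt (le_of_eq (rfl : x ⬝ᵥ x = x ⬝ᵥ x))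
      calc max 0 ((C - M) * 4 / c) = Real.sqrt (max 0 ((C - M) * 4 / c)) ^ 2 :=
            (Real.sq_sqrt hm).symm
        _ ≤ Real.sqrt (x ⬝ᵥ x) ^ 2 := by
            apply pow_le_pow_left₀ (Real.sqrt_nonneg _) hR
        _ = x ⬝ᵥ x := Real.sq_sqrt (hds x)
    have h1 : (C - M) * 4 / c ≤ x ⬝ᵥ x := le_trans (le_max_right _ _) hms
    have h2 : c * ((C - M) * 4 / c) ≤ c * (x ⬝ᵥ x) := mul_le_mul_of_nonneg_left h1 hc.le
    have h3 : c * ((C - M) * 4 / c) = (C - M) * 4 := by field_simp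
    have h4 := hcoer' x hx
    have h5 := hC x
    nlinarith [h2, h3, h4, h5]
  -- Part 5
  have part5 : ∃! x : Fin d → ℝ, x ∈ V ∧ ∀ y ∈ V, q y ≤ q x := by
    obtain ⟨R, hR⟩ := part4 (q 0)
    set R' : ℝ := max R 0 with hR'def
    have hR'0 : (0:ℝ) ≤ R' := le_max_right _ _
    set K : Set (Fin d → ℝ) := {x | x ∈ V ∧ Real.sqrt (x ⬝ᵥ x) ≤ R'} with hKdef
    have h0K : (0 : Fin d → ℝ) ∈ K := by
      refine ⟨V.zero_mem, ?_⟩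
      have : (0 : Fin d → ℝ) ⬝ᵥ (0 : Fin d → ℝ) = 0 := zero_dotProduct _
      rw [this, Real.sqrt_zero]
      exact hR'0
    have hKcl : IsClosed K := by
      have : K = (V : Set (Fin d → ℝ)) ∩ ((fun z => Real.sqrt (z ⬝ᵥ z)) ⁻¹' Set.Iic R') := rfl
      rw [this]
      exact (Submodule.closed_of_finiteDimensional V).inter
        (isClosed_Iic.preimage (Real.continuous_sqrt.comp hdcont))
    have hKbdd : Bornology.IsBounded K := by
      apply (Metric.isBounded_closedBall (x := (0 : Fin d → ℝ)) (r := R')).subset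
      intro z hz
      rw [Metric.mem_closedBall, dist_zero_right]
      rw [pi_norm_le_iff_of_nonneg hR'0]
      intro i
      rw [Real.norm_eq_abs]
      have hs1 : z ⬝ᵥ z ≤ R' ^ 2 := by
        calc z ⬝ᵥ z = Real.sqrt (z ⬝ᵥ z) ^ 2 := (Real.sq_sqrt (hds z)).symm
          _ ≤ R' ^ 2 := pow_le_pow_left₀ (Real.sqrt_nonneg _) hz.2 2
      have h1 : z i * z i ≤ R' ^ 2 := by
        refine le_trans ?_ hs1
        exact Finset.single_le_sum (f := fun j => z j * z j)
          (fun j _ => mul_self_nonneg _) (Finset.mem_univ i)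
      exact abs_le.mpr ⟨by nlinarith, by nlinarith⟩
    have hKcpt : IsCompact K := Metric.isCompact_of_isClosed_isBounded hKcl hKbdd
    have hqc : Continuous q := hconc.locallyLipschitz.continuous
    obtain ⟨xo, hxoK, hmax⟩ := hKcpt.exists_isMaxOn ⟨0, h0K⟩ hqc.continuousOn
    have hglob : ∀ y ∈ V, q y ≤ q xo := by
      intro y hy
      by_cases hyK : Real.sqrt (y ⬝ᵥ y) ≤ R'
      · exact hmax ⟨hy, hyK⟩
      · push_neg at hyK
        have : R ≤ Real.sqrt (y ⬝ᵥ y) := le_trans (le_max_left R 0) hyK.le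
        exact le_trans (hR y hy this) (hmax h0K)
    refine ⟨xo, ⟨hxoK.1, hglob⟩, ?_⟩
    rintro y ⟨hyV, hymax⟩
    by_contra hne
    have hqeq : q y = q xo := le_antisymm (hglob y hyV) (hymax xo hxoK.1)
    have hmid := part3.2 hyV hxoK.1 hne (by norm_num : (0:ℝ) < 1/2)
      (by norm_num : (0:ℝ) < 1/2) (by norm_num : (1/2:ℝ) + 1/2 = 1)
    have hmidV : (1/2 : ℝ) • y + (1/2 : ℝ) • xo ∈ V :=
      V.add_mem (V.smul_mem _ hyV) (V.smul_mem _ hxoK.1)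
    have := hglob _ hmidV
    simp only [smul_eq_mul] at hmid
    nlinarith [hmid, this, hqeq]
  exact ⟨part1, part2, part3, part4, part5⟩
end

section
/- Let B_θ ⊆ ℝ^d be nonempty compact convex, let B_x ⊆ ℝ^d be a closed Euclidean ball centered at the origin, let Θ_opt be the set of minimizers of θ ↦ J(θ) + p(θ) over B_θ, and suppose x_opt ∈ span{φ(S)} maximizes x ↦ inf_{θ∈B_θ} ψ^o(θ,x) over span{φ(S)} and lies in the interior of B_x. Then for every θ̄ ∈ B_θ and every x̄ ∈ B_x ∩ span{φ(S)}, the pair (θ̄, x̄) is a saddle point of the constrained minimax problem inf_{θ∈B_θ} sup_{x∈B_x} ψ^o(θ,x) — i.e. ψ^o(θ, x̄) ≥ ψ^o(θ̄, x̄) ≥ ψ^o(θ̄, x) for all θ ∈ B_θ and all x ∈ B_x — if and only if θ̄ ∈ Θ_opt and x̄ = x_opt. -/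
open Matrix

lemma ip_comm {n : ℕ} (ξ : Fin n → ℝ) (u v : Fin n → ℝ) :
    u ⬝ᵥ (diagonal ξ).mulVec v = v ⬝ᵥ (diagonal ξ).mulVec u := by
  simp only [dotProduct, mulVec_diagonal]
  exact Finset.sum_congr rfl fun i _ => by ring

lemma ip_nonneg {n : ℕ} {ξ : Fin n → ℝ} (hξ : ∀ i, 0 < ξ i) (u : Fin n → ℝ) :
    0 ≤ u ⬝ᵥ (diagonal ξ).mulVec u := by
  simp only [dotProduct, mulVec_diagonal]
  exact Finset.sum_nonneg fun i _ => by nlinarith [(hξ i).le, mul_self_nonneg (u i)]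

lemma ip_eq_zero {n : ℕ} {ξ : Fin n → ℝ} (hξ : ∀ i, 0 < ξ i) (u : Fin n → ℝ)
    (h : u ⬝ᵥ (diagonal ξ).mulVec u = 0) : u = 0 := by
  simp only [dotProduct, mulVec_diagonal] at h
  funext i
  have hterm := (Finset.sum_eq_zero_iff_of_nonneg
    (fun i _ => by nlinarith [(hξ i).le, mul_self_nonneg (u i)] :
      ∀ i ∈ Finset.univ, (0:ℝ) ≤ u i * (ξ i * u i))).mp h i (Finset.mem_univ i)
  have h2 : ξ i * (u i * u i) = 0 := by linarith [hterm, (by ring : u i * (ξ i * u i) = ξ i * (u i * u i))]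
  have := (mul_eq_zero.mp h2).resolve_left (ne_of_gt (hξ i))
  simpa [mul_self_eq_zero] using this

lemma master_decomp {n : ℕ} (ξ : Fin n → ℝ) (a w v : Fin n → ℝ)
    (horth : a ⬝ᵥ (diagonal ξ).mulVec (v - w) = 0) :
    a ⬝ᵥ (diagonal ξ).mulVec v - (1/2)*(a ⬝ᵥ (diagonal ξ).mulVec a)
      = (1/2)*(w ⬝ᵥ (diagonal ξ).mulVec w)
        - (1/2)*((a - w) ⬝ᵥ (diagonal ξ).mulVec (a - w)) := by
  have hcomm := ip_comm ξ w a
  simp only [Matrix.mulVec_sub, dotProduct_sub, sub_dotProduct] at *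
  linarith

lemma midpt {n : ℕ} (ξ : Fin n → ℝ) (u v m : Fin n → ℝ) :
    ((1/2:ℝ) • (u + v)) ⬝ᵥ (diagonal ξ).mulVec m
      - (1/2)*(((1/2:ℝ) • (u + v)) ⬝ᵥ (diagonal ξ).mulVec ((1/2:ℝ) • (u + v)))
    = (1/2)*(u ⬝ᵥ (diagonal ξ).mulVec m - (1/2)*(u ⬝ᵥ (diagonal ξ).mulVec u))
      + (1/2)*(v ⬝ᵥ (diagonal ξ).mulVec m - (1/2)*(v ⬝ᵥ (diagonal ξ).mulVec v))
      + (1/8)*((u - v) ⬝ᵥ (diagonal ξ).mulVec (u - v)) := by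
  have hcomm := ip_comm ξ v u
  simp only [Matrix.mulVec_add, Matrix.mulVec_smul, Matrix.mulVec_sub, dotProduct_add,
    add_dotProduct, smul_dotProduct, dotProduct_smul, sub_dotProduct, dotProduct_sub,
    smul_eq_mul] at *
  linarith

lemma smul_quad {n : ℕ} (ξ : Fin n → ℝ) (t : ℝ) (u : Fin n → ℝ) :
    (t • u) ⬝ᵥ (diagonal ξ).mulVec (t • u) = t^2 * (u ⬝ᵥ (diagonal ξ).mulVec u) := by
  simp only [Matrix.mulVec_smul, smul_dotProduct, dotProduct_smul, smul_eq_mul]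
  ring

lemma cont_mulVec {a b : ℕ} (A : Matrix (Fin a) (Fin b) ℝ) :
    Continuous fun v => A.mulVec v := by
  apply continuous_pi; intro i
  simp only [Matrix.mulVec, dotProduct]
  exact continuous_finset_sum _ fun j _ => continuous_const.mul (continuous_apply j)

lemma cont_dot {a : ℕ} (u : Fin a → ℝ) : Continuous fun v => u ⬝ᵥ v := by
  simp only [dotProduct]
  exact continuous_finset_sum _ fun j _ => continuous_const.mul (continuous_apply j)

lemma exists_span_mulVec {n d : ℕ} (Φ : Matrix (Fin n) (Fin d) ℝ) (z : Fin d → ℝ) :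
    ∃ x ∈ Submodule.span ℝ (Set.range fun i : Fin n => Φ i), Φ.mulVec x = Φ.mulVec z := by
  have hr : LinearMap.range (Φ * Φᵀ).mulVecLin = LinearMap.range Φ.mulVecLin := by
    apply Submodule.eq_of_le_of_finrank_eq
    · rw [Matrix.mulVecLin_mul]; exact LinearMap.range_comp_le_range _ _
    · exact Matrix.rank_self_mul_transpose Φ
  have hz : Φ.mulVec z ∈ LinearMap.range Φ.mulVecLin := ⟨z, rfl⟩
  rw [← hr] at hz
  obtain ⟨c, hc⟩ := hz
  refine ⟨Φᵀ.mulVec c, ?_, ?_⟩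
  · rw [Submodule.mem_span_range_iff_exists_fun]
    refine ⟨c, ?_⟩
    funext j
    simp [Matrix.mulVec, Matrix.transpose_apply, dotProduct, Finset.sum_apply, mul_comm]
  · rw [Matrix.mulVec_mulVec]; exact hc

/-- Let `B_θ` be nonempty compact convex, `B_x` a closed Euclidean ball
centered at the origin, `Θ_opt` the set of minimizers of `J + p` over `B_θ`, and suppose
`x_opt ∈ span{φ(S)}` maximizes `x ↦ inf_{θ∈B_θ} ψ^o(θ,x)` over `span{φ(S)}` and lies in the
interior of `B_x`.  Then for all `θ̄ ∈ B_θ` and `x̄ ∈ B_x ∩ span{φ(S)}`, `(θ̄, x̄)` is a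
saddle point of `inf_{θ∈B_θ} sup_{x∈B_x} ψ^o(θ,x)` iff `θ̄ ∈ Θ_opt` and `x̄ = x_opt`. -/
theorem stmt_7
    (n d : ℕ) (hn : 0 < n) (hd : 0 < d)
    (Φ : Matrix (Fin n) (Fin d) ℝ) (hΦ : Φ ≠ 0)
    (ξ : Fin n → ℝ) (hξ : ∀ i, 0 < ξ i)
    (Ξ : Matrix (Fin n) (Fin n) ℝ) (hΞ : Ξ = Matrix.diagonal ξ)
    (proj : (Fin n → ℝ) → (Fin n → ℝ))
    (hproj_mem : ∀ v : Fin n → ℝ, ∃ θ : Fin d → ℝ, proj v = Φ.mulVec θ)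
    (hproj_orth : ∀ (v : Fin n → ℝ) (θ : Fin d → ℝ),
      Φ.mulVec θ ⬝ᵥ Ξ.mulVec (v - proj v) = 0)
    (P : Matrix (Fin n) (Fin n) ℝ) (r : Fin n → ℝ)
    (T : (Fin n → ℝ) → (Fin n → ℝ)) (hT : ∀ v, T v = r + P.mulVec v)
    (J : (Fin d → ℝ) → ℝ)
    (hJ : ∀ θ : Fin d → ℝ,
      J θ = (1 / 2) * (proj (T (Φ.mulVec θ) - Φ.mulVec θ) ⬝ᵥ
          Ξ.mulVec (proj (T (Φ.mulVec θ) - Φ.mulVec θ))))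
    (p : (Fin d → ℝ) → ℝ)
    (hp_conv : ConvexOn ℝ Set.univ p) (hp_diff : Differentiable ℝ p)
    (ψ : (Fin d → ℝ) → (Fin d → ℝ) → ℝ)
    (hψ : ∀ θ x : Fin d → ℝ,
      ψ θ x = Φ.mulVec x ⬝ᵥ Ξ.mulVec (T (Φ.mulVec θ) - Φ.mulVec θ)
        - (1 / 2) * (Φ.mulVec x ⬝ᵥ Ξ.mulVec (Φ.mulVec x)) + p θ)
    (Bθ : Set (Fin d → ℝ)) (hBθ_ne : Bθ.Nonempty) (hBθ_cpt : IsCompact Bθ)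
    (hBθ_conv : Convex ℝ Bθ)
    -- `B_x` is a closed Euclidean ball centered at the origin
    (rx : ℝ) (hrx : 0 ≤ rx)
    (Bx : Set (Fin d → ℝ)) (hBx : Bx = {x : Fin d → ℝ | Real.sqrt (x ⬝ᵥ x) ≤ rx})
    -- `x_opt` maximizes the dual function `x ↦ inf_{θ ∈ B_θ} ψ(θ,x)` over `span{φ(S)}`
    (xopt : Fin d → ℝ)
    (hxopt_span : xopt ∈ Submodule.span ℝ (Set.range (fun i : Fin n => Φ i)))
    (hxopt_max : ∀ x : Fin d → ℝ, x ∈ Submodule.span ℝ (Set.range (fun i : Fin n => Φ i)) →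
      sInf ((fun θ => ψ θ x) '' Bθ) ≤ sInf ((fun θ => ψ θ xopt) '' Bθ))
    (hxopt_int : xopt ∈ interior Bx) :
    ∀ θb : Fin d → ℝ, θb ∈ Bθ →
      ∀ xb : Fin d → ℝ, xb ∈ Bx →
        xb ∈ Submodule.span ℝ (Set.range (fun i : Fin n => Φ i)) →
        (((∀ θ ∈ Bθ, ψ θb xb ≤ ψ θ xb) ∧ (∀ x ∈ Bx, ψ θb x ≤ ψ θb xb)) ↔
          ((∀ θ ∈ Bθ, J θb + p θb ≤ J θ + p θ) ∧ xb = xopt)) := by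
  subst hΞ
  intro θb hθb xb hxbBx hxbSpan
  -- continuity of ψ in θ
  have hcont : ∀ x, Continuous fun θ => ψ θ x := by
    intro x
    have hre : (fun θ => ψ θ x) = fun θ =>
        Φ.mulVec x ⬝ᵥ (diagonal ξ).mulVec (r + P.mulVec (Φ.mulVec θ) - Φ.mulVec θ)
          - (1/2)*(Φ.mulVec x ⬝ᵥ (diagonal ξ).mulVec (Φ.mulVec x)) + p θ := by
      funext θ; rw [hψ, hT]
    rw [hre]
    refine Continuous.add (Continuous.sub ?_ continuous_const) hp_diff.continuous
    exact ((cont_dot _).comp (cont_mulVec _)).comp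
      ((continuous_const.add ((cont_mulVec P).comp (cont_mulVec Φ))).sub (cont_mulVec Φ))
  have hDle : ∀ (x θ : Fin d → ℝ), θ ∈ Bθ → sInf ((fun θ => ψ θ x) '' Bθ) ≤ ψ θ x :=
    fun x θ hθ => csInf_le (hBθ_cpt.image (hcont x)).bddBelow ⟨θ, hθ, rfl⟩
  have hDge : ∀ (x : Fin d → ℝ) (m : ℝ), (∀ θ ∈ Bθ, m ≤ ψ θ x) →
      m ≤ sInf ((fun θ => ψ θ x) '' Bθ) := by
    intro x m hm
    refine le_csInf (hBθ_ne.image _) ?_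
    rintro _ ⟨θ, hθ, rfl⟩; exact hm θ hθ
  -- decomposition
  have decomp : ∀ θ x : Fin d → ℝ, ψ θ x = (J θ + p θ)
      - (1/2)*((Φ.mulVec x - proj (T (Φ.mulVec θ) - Φ.mulVec θ)) ⬝ᵥ
          (diagonal ξ).mulVec (Φ.mulVec x - proj (T (Φ.mulVec θ) - Φ.mulVec θ))) := by
    intro θ x
    have hm := master_decomp ξ (Φ.mulVec x) (proj (T (Φ.mulVec θ) - Φ.mulVec θ))
      (T (Φ.mulVec θ) - Φ.mulVec θ) (hproj_orth _ x)
    rw [hψ, hJ]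
    linarith
  have ψ_le : ∀ θ x : Fin d → ℝ, ψ θ x ≤ J θ + p θ := by
    intro θ x
    have := ip_nonneg hξ (Φ.mulVec x - proj (T (Φ.mulVec θ) - Φ.mulVec θ))
    rw [decomp θ x]; linarith
  -- uniqueness of projection & linearity
  have proj_unique : ∀ (v : Fin n → ℝ) (θw : Fin d → ℝ),
      (∀ θ : Fin d → ℝ, Φ.mulVec θ ⬝ᵥ (diagonal ξ).mulVec (v - Φ.mulVec θw) = 0) →
      Φ.mulVec θw = proj v := by
    intro v θw hw
    obtain ⟨θp, hθp⟩ := hproj_mem v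
    have key : ∀ θ, Φ.mulVec θ ⬝ᵥ (diagonal ξ).mulVec (Φ.mulVec θw - proj v) = 0 := by
      intro θ
      have h3 : Φ.mulVec θw - proj v = (v - proj v) - (v - Φ.mulVec θw) := by abel
      rw [h3, Matrix.mulVec_sub, dotProduct_sub, hproj_orth v θ, hw θ, sub_zero]
    have h4 := key (θw - θp)
    rw [Matrix.mulVec_sub, ← hθp] at h4
    exact sub_eq_zero.mp (ip_eq_zero hξ _ h4)
  have proj_comb : ∀ (a b : ℝ) (v w : Fin n → ℝ),
      proj (a • v + b • w) = a • proj v + b • proj w := by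
    intro a b v w
    obtain ⟨θv, hθv⟩ := hproj_mem v
    obtain ⟨θw, hθw⟩ := hproj_mem w
    have hc : a • proj v + b • proj w = Φ.mulVec (a • θv + b • θw) := by
      rw [hθv, hθw, Matrix.mulVec_add, Matrix.mulVec_smul, Matrix.mulVec_smul]
    have horth : ∀ θ, Φ.mulVec θ ⬝ᵥ (diagonal ξ).mulVec
        ((a•v+b•w) - (a • proj v + b • proj w)) = 0 := by
      intro θ
      have h3 : (a•v+b•w) - (a • proj v + b • proj w)
          = a • (v - proj v) + b • (w - proj w) := by
        funext i
        simp only [Pi.add_apply, Pi.sub_apply, Pi.smul_apply, smul_eq_mul]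
        ring
      rw [h3, Matrix.mulVec_add, dotProduct_add, Matrix.mulVec_smul, Matrix.mulVec_smul,
        dotProduct_smul, dotProduct_smul, hproj_orth v θ, hproj_orth w θ,
        smul_zero, smul_zero, add_zero]
    have hu := proj_unique (a•v+b•w) (a • θv + b • θw) (by rw [← hc]; exact horth)
    rw [← hu, ← hc]
  -- affinity of the Bellman residual
  have hΔcomb : ∀ (s t : ℝ) (θ1 θ2 : Fin d → ℝ), s + t = 1 →
      T (Φ.mulVec (s•θ1 + t•θ2)) - Φ.mulVec (s•θ1 + t•θ2)
        = s • (T (Φ.mulVec θ1) - Φ.mulVec θ1) + t • (T (Φ.mulVec θ2) - Φ.mulVec θ2) := by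
    intro s t θ1 θ2 hst
    have h1 : Φ.mulVec (s•θ1 + t•θ2) = s • Φ.mulVec θ1 + t • Φ.mulVec θ2 := by
      rw [Matrix.mulVec_add, Matrix.mulVec_smul, Matrix.mulVec_smul]
    rw [hT, hT, hT, h1, Matrix.mulVec_add, Matrix.mulVec_smul, Matrix.mulVec_smul]
    funext i
    simp only [Pi.add_apply, Pi.sub_apply, Pi.smul_apply, smul_eq_mul]
    linear_combination (-(r i)) * hst
  -- span injectivity
  have hinj : ∀ y : Fin d → ℝ,
      y ∈ Submodule.span ℝ (Set.range fun i : Fin n => Φ i) → Φ.mulVec y = 0 → y = 0 := by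
    intro y hy h0
    rw [Submodule.mem_span_range_iff_exists_fun] at hy
    obtain ⟨cc, hcc⟩ := hy
    have hy2 : y = Φᵀ.mulVec cc := by
      rw [← hcc]; funext j
      simp [Matrix.mulVec, Matrix.transpose_apply, dotProduct, Finset.sum_apply, mul_comm]
    have hself : y ⬝ᵥ y = 0 := by
      calc y ⬝ᵥ y = y ⬝ᵥ (Φᵀ.mulVec cc) := by rw [← hy2]
        _ = (Matrix.vecMul y Φᵀ) ⬝ᵥ cc := by rw [Matrix.dotProduct_mulVec]
        _ = (Φ.mulVec y) ⬝ᵥ cc := by rw [Matrix.vecMul_transpose]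
        _ = 0 := by rw [h0, zero_dotProduct]
    exact dotProduct_self_eq_zero.mp hself
  -- small perturbations inside Bx at xopt
  have hball : ∀ h : Fin d → ℝ, ∃ t : ℝ, 0 < t ∧ t < 2 ∧ xopt + t • h ∈ Bx := by
    intro h
    have hc : Continuous fun t : ℝ => xopt + t • h :=
      continuous_const.add (continuous_id.smul continuous_const)
    have hmem : Bx ∈ nhds xopt := mem_interior_iff_mem_nhds.mp hxopt_int
    have hev : ∀ᶠ t in nhds (0:ℝ), xopt + t • h ∈ Bx := by
      have hca := hc.continuousAt (x := (0:ℝ))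
      apply hca.preimage_mem_nhds
      simpa using hmem
    have hev2 : ∀ᶠ t in nhds (0:ℝ), t < 2 := by
      filter_upwards [Iio_mem_nhds (show (0:ℝ) < 2 by norm_num)] with t ht
      exact ht
    have hev3 : ∀ᶠ t in nhdsWithin (0:ℝ) (Set.Ioi 0), t ∈ Set.Ioi (0:ℝ) :=
      self_mem_nhdsWithin
    obtain ⟨t, ht, ht0⟩ :=
      (((hev.and hev2).filter_mono nhdsWithin_le_nhds).and hev3).exists
    exact ⟨t, ht0, ht.2, ht.1⟩
  constructor
  · -- forward
    rintro ⟨hA, hB⟩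
    have hxoptBx : xopt ∈ Bx := interior_subset hxopt_int
    have hDxb : sInf ((fun θ => ψ θ xb) '' Bθ) = ψ θb xb :=
      le_antisymm (hDle xb θb hθb) (hDge xb _ hA)
    have hDopt_le : sInf ((fun θ => ψ θ xopt) '' Bθ) ≤ sInf ((fun θ => ψ θ xb) '' Bθ) := by
      calc sInf ((fun θ => ψ θ xopt) '' Bθ) ≤ ψ θb xopt := hDle xopt θb hθb
        _ ≤ ψ θb xb := hB xopt hxoptBx
        _ = sInf ((fun θ => ψ θ xb) '' Bθ) := hDxb.symm
    have hzspan : ((1/2:ℝ) • xb + (1/2:ℝ) • xopt) ∈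
        Submodule.span ℝ (Set.range fun i : Fin n => Φ i) :=
      Submodule.add_mem _ (Submodule.smul_mem _ _ hxbSpan) (Submodule.smul_mem _ _ hxopt_span)
    have hQmid : ∀ θ : Fin d → ℝ, ψ θ ((1/2:ℝ) • xb + (1/2:ℝ) • xopt)
        = (1/2)*(ψ θ xb) + (1/2)*(ψ θ xopt)
          + (1/8)*((Φ.mulVec xb - Φ.mulVec xopt) ⬝ᵥ
              (diagonal ξ).mulVec (Φ.mulVec xb - Φ.mulVec xopt)) := by
      intro θ
      have hz : Φ.mulVec ((1/2:ℝ) • xb + (1/2:ℝ) • xopt)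
          = (1/2:ℝ) • (Φ.mulVec xb + Φ.mulVec xopt) := by
        rw [Matrix.mulVec_add, Matrix.mulVec_smul, Matrix.mulVec_smul, smul_add]
      have hm := midpt ξ (Φ.mulVec xb) (Φ.mulVec xopt) (T (Φ.mulVec θ) - Φ.mulVec θ)
      rw [hψ, hψ, hψ, hz]
      linarith
    have hQ := ip_nonneg hξ (Φ.mulVec xb - Φ.mulVec xopt)
    have hDz : (1/2)*sInf ((fun θ => ψ θ xb) '' Bθ) + (1/2)*sInf ((fun θ => ψ θ xopt) '' Bθ)
        + (1/8)*((Φ.mulVec xb - Φ.mulVec xopt) ⬝ᵥ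
            (diagonal ξ).mulVec (Φ.mulVec xb - Φ.mulVec xopt))
        ≤ sInf ((fun θ => ψ θ ((1/2:ℝ) • xb + (1/2:ℝ) • xopt)) '' Bθ) := by
      apply hDge
      intro θ hθ
      rw [hQmid θ]
      have h1 := hDle xb θ hθ
      have h2 := hDle xopt θ hθ
      linarith
    have hDzle := hxopt_max _ hzspan
    have hQ0 : (Φ.mulVec xb - Φ.mulVec xopt) ⬝ᵥ
        (diagonal ξ).mulVec (Φ.mulVec xb - Φ.mulVec xopt) = 0 := by
      apply le_antisymm _ hQ
      linarith
    have hxe : xb = xopt := by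
      have h0 : Φ.mulVec (xb - xopt) = 0 := by
        rw [Matrix.mulVec_sub]; exact ip_eq_zero hξ _ hQ0
      have := hinj (xb - xopt) (Submodule.sub_mem _ hxbSpan hxopt_span) h0
      exact sub_eq_zero.mp this
    subst hxe
    refine ⟨?_, rfl⟩
    -- interior argument : residual at xb is zero
    obtain ⟨θ', hθ'⟩ := hproj_mem (T (Φ.mulVec θb) - Φ.mulVec θb)
    obtain ⟨t, ht0, ht2, htBx⟩ := hball (θ' - xb)
    have hBt := hB _ htBx
    rw [decomp θb (xb + t • (θ' - xb)), decomp θb xb, hθ'] at hBt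
    have harg : Φ.mulVec (xb + t • (θ' - xb)) - Φ.mulVec θ'
        = (1-t) • (Φ.mulVec xb - Φ.mulVec θ') := by
      rw [Matrix.mulVec_add, Matrix.mulVec_smul, Matrix.mulVec_sub]
      funext i
      simp only [Pi.add_apply, Pi.sub_apply, Pi.smul_apply, smul_eq_mul]
      ring
    rw [harg, smul_quad] at hBt
    have hNge0 := ip_nonneg hξ (Φ.mulVec xb - Φ.mulVec θ')
    have hNle : (Φ.mulVec xb - Φ.mulVec θ') ⬝ᵥ
        (diagonal ξ).mulVec (Φ.mulVec xb - Φ.mulVec θ') ≤ 0 := by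
      nlinarith [mul_pos ht0 (show (0:ℝ) < 2 - t by linarith)]
    have hu0 : Φ.mulVec xb - Φ.mulVec θ' = 0 := ip_eq_zero hξ _ (le_antisymm hNle hNge0)
    have hpsib : ψ θb xb = J θb + p θb := by
      rw [decomp θb xb, hθ', hu0]
      simp
    intro θ hθ
    calc J θb + p θb = ψ θb xb := hpsib.symm
      _ ≤ ψ θ xb := hA θ hθ
      _ ≤ J θ + p θ := ψ_le θ xb
  · -- backward
    rintro ⟨hmin, hxe⟩
    subst hxe
    obtain ⟨θ', hθ'⟩ := hproj_mem (T (Φ.mulVec θb) - Φ.mulVec θb)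
    obtain ⟨xs, hxsSpan, hxs⟩ := exists_span_mulVec Φ θ'
    have hxsw : Φ.mulVec xs = proj (T (Φ.mulVec θb) - Φ.mulVec θb) := hxs.trans hθ'.symm
    have hψbs : ψ θb xs = J θb + p θb := by
      rw [decomp θb xs, hxsw]
      simp
    have hstep2 : ∀ θ1 ∈ Bθ, ψ θb xs ≤ ψ θ1 xs := by
      intro θ1 hθ1
      by_contra hlt
      push_neg at hlt
      have hδ : 0 < ψ θb xs - ψ θ1 xs := by linarith
      set δ := ψ θb xs - ψ θ1 xs with hδdef
      have hc0 := ip_nonneg hξ (proj (T (Φ.mulVec θ1) - Φ.mulVec θ1)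
        - proj (T (Φ.mulVec θb) - Φ.mulVec θb))
      set c := (1/2) * ((proj (T (Φ.mulVec θ1) - Φ.mulVec θ1)
          - proj (T (Φ.mulVec θb) - Φ.mulVec θb)) ⬝ᵥ (diagonal ξ).mulVec
          (proj (T (Φ.mulVec θ1) - Φ.mulVec θ1)
          - proj (T (Φ.mulVec θb) - Φ.mulVec θb))) with hcdef
    -- 0 ≤ c
      have hc0' : 0 ≤ c := by rw [hcdef]; linarith
      set t := min 1 (δ/(c+1)) with htdef
      have ht0 : 0 < t := lt_min one_pos (div_pos hδ (by linarith))
      have ht1 : t ≤ 1 := min_le_left _ _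
      have htc : t * (c+1) ≤ δ := by
        have h1 : t ≤ δ/(c+1) := min_le_right _ _
        exact (le_div_iff₀ (by linarith)).mp h1
      set θt := (1-t) • θb + t • θ1 with hθtdef
      have hθtB : θt ∈ Bθ := hBθ_conv hθb hθ1 (by linarith) ht0.le (by ring)
      clear_value δ c t θt
      have hΔt := hΔcomb (1-t) t θb θ1 (by ring)
      rw [← hθtdef] at hΔt
      have hlin : Φ.mulVec xs ⬝ᵥ (diagonal ξ).mulVec (T (Φ.mulVec θt) - Φ.mulVec θt)
          = (1-t)*(Φ.mulVec xs ⬝ᵥ (diagonal ξ).mulVec (T (Φ.mulVec θb) - Φ.mulVec θb))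
          + t*(Φ.mulVec xs ⬝ᵥ (diagonal ξ).mulVec (T (Φ.mulVec θ1) - Φ.mulVec θ1)) := by
        rw [hΔt, Matrix.mulVec_add, dotProduct_add, Matrix.mulVec_smul, Matrix.mulVec_smul,
          dotProduct_smul, dotProduct_smul, smul_eq_mul, smul_eq_mul]
      have hpconv := hp_conv.2 (Set.mem_univ θb) (Set.mem_univ θ1)
        (show (0:ℝ) ≤ 1 - t by linarith) ht0.le (by ring)
      rw [← hθtdef] at hpconv
      simp only [smul_eq_mul] at hpconv
      have hψt : ψ θt xs ≤ ψ θb xs - t*δ := by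
        have e1 := hψ θb xs
        have e2 := hψ θ1 xs
        have e3 := hψ θt xs
        have hcomb2 : ψ θt xs - (1-t)*ψ θb xs - t*ψ θ1 xs
            = p θt - (1-t)*p θb - t*p θ1 := by
          linear_combination e3 - (1-t)*e1 - t*e2 + hlin
        rw [hδdef]
        linarith only [hcomb2, hpconv]
      have hprojt : proj (T (Φ.mulVec θt) - Φ.mulVec θt)
          = (1-t) • proj (T (Φ.mulVec θb) - Φ.mulVec θb)
            + t • proj (T (Φ.mulVec θ1) - Φ.mulVec θ1) := by
        rw [hΔt]; exact proj_comb (1-t) t _ _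
      have harg2 : Φ.mulVec xs - proj (T (Φ.mulVec θt) - Φ.mulVec θt)
          = (-t) • (proj (T (Φ.mulVec θ1) - Φ.mulVec θ1)
              - proj (T (Φ.mulVec θb) - Φ.mulVec θb)) := by
        rw [hprojt, hxsw]
        funext i
        simp only [Pi.add_apply, Pi.sub_apply, Pi.smul_apply, Pi.neg_apply, smul_eq_mul]
        ring
      have hdecompt := decomp θt xs
      rw [harg2, smul_quad] at hdecompt
      have hNc : (proj (T (Φ.mulVec θ1) - Φ.mulVec θ1)
          - proj (T (Φ.mulVec θb) - Φ.mulVec θb)) ⬝ᵥ (diagonal ξ).mulVec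
          (proj (T (Φ.mulVec θ1) - Φ.mulVec θ1)
          - proj (T (Φ.mulVec θb) - Φ.mulVec θb)) = 2*c := by
        rw [hcdef]; ring
      rw [hNc] at hdecompt
      have hcontr := hmin θt hθtB
      -- hdecompt : ψ θt xs = J θt + p θt - (1/2)*((-t)^2*(2*c))
      have hkey : t*(t*(c+1)) ≤ t*δ := mul_le_mul_of_nonneg_left htc ht0.le
      nlinarith only [hcontr, hdecompt, hψt, hkey, ht0, mul_pos ht0 ht0, hψbs]
    have hDxs : sInf ((fun θ => ψ θ xs) '' Bθ) = J θb + p θb := by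
      apply le_antisymm
      · calc sInf ((fun θ => ψ θ xs) '' Bθ) ≤ ψ θb xs := hDle xs θb hθb
          _ = J θb + p θb := hψbs
      · apply hDge
        intro θ hθ
        calc J θb + p θb = ψ θb xs := hψbs.symm
          _ ≤ ψ θ xs := hstep2 θ hθ
    have h4a : J θb + p θb ≤ sInf ((fun θ => ψ θ xb) '' Bθ) := by
      rw [← hDxs]; exact hxopt_max xs hxsSpan
    have h4b : sInf ((fun θ => ψ θ xb) '' Bθ) ≤ ψ θb xb := hDle xb θb hθb
    have h4c : ψ θb xb ≤ J θb + p θb := ψ_le θb xb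
    have heq : ψ θb xb = sInf ((fun θ => ψ θ xb) '' Bθ) := by linarith
    constructor
    · intro θ hθ
      rw [heq]
      exact hDle xb θ hθ
    · intro x hx
      calc ψ θb x ≤ J θb + p θb := ψ_le θb x
        _ = ψ θb xb := by linarith
end

section
/- The set E = ⋂_{t ≥ 0} F(t,·)''K is nonempty and compact; E equals the limit set ⋂_{τ ≥ 0} closure({F(t, y) : y ∈ K, t ≥ τ}); E is invariant (F(t,·)''E = E for all t ≥ 0); and every invariant subset D ⊆ K satisfies D ⊆ E (E is the largest invariant subset of K). -/
/-!
The sets `F t '' K`, `t ≥ 0`, are compact (each `F t` is continuous, being nonexpansive) and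
decrease in `t` by the semigroup law, so their intersection `E` is nonempty and compact, and
each of them already equals the tail `{F s y : y ∈ K, s ≥ t}`, which gives the limit-set
description. For `F t '' E ⊇ E`, given `x ∈ E` the compact sets
`F s '' K ∩ (K ∩ (F t)⁻¹{x})` are nonempty and decreasing in `s`, and a point `z` common to all
of them lies in `E` with `F t z = x`.
-/

open Set

theorem nonempty_biInter_Ici_of_antitoneOn {X : Type*} [TopologicalSpace X] {S : ℝ → Set X}
    {a : ℝ} (hS : AntitoneOn S (Ici a)) (hne : ∀ t ∈ Ici a, (S t).Nonempty)
    (hcpt : ∀ t ∈ Ici a, IsCompact (S t)) (hcl : ∀ t ∈ Ici a, IsClosed (S t)) :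
    (⋂ t ∈ Ici a, S t).Nonempty := by
  rw [biInter_eq_iInter]
  refine IsCompact.nonempty_iInter_of_directed_nonempty_isCompact_isClosed _ ?_
    (fun t => hne t t.2) (fun t => hcpt t t.2) (fun t => hcl t t.2)
  intro s t
  have hmax : max (s : ℝ) t ∈ Ici a := le_max_of_le_left s.2.out
  exact ⟨⟨_, hmax⟩, hS s.2 hmax (le_max_left _ _), hS t.2 hmax (le_max_right _ _)⟩

section Semiflow

variable {X : Type*} {K : Set X} {F : ℝ → X → X}

def eventualImage (F : ℝ → X → X) (K : Set X) : Set X :=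
  ⋂ t ∈ Ici (0 : ℝ), F t '' K

theorem mem_eventualImage {x : X} : x ∈ eventualImage F K ↔ ∀ t, 0 ≤ t → x ∈ F t '' K := by
  simp only [eventualImage, mem_iInter₂, mem_Ici]

theorem antitoneOn_image_of_semiflow
    (hFadd : ∀ s t : ℝ, 0 ≤ s → 0 ≤ t → ∀ y ∈ K, F (s + t) y = F s (F t y))
    (hFK : ∀ t : ℝ, 0 ≤ t → ∀ y ∈ K, F t y ∈ K) :
    AntitoneOn (fun t => F t '' K) (Ici 0) := by
  rintro s (hs : 0 ≤ s) t - hst _ ⟨y, hy, rfl⟩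
  refine ⟨F (t - s) y, hFK _ (sub_nonneg.2 hst) y hy, ?_⟩
  rw [← hFadd s (t - s) hs (sub_nonneg.2 hst) y hy, add_sub_cancel]

theorem eventualImage_subset (hFK : ∀ t : ℝ, 0 ≤ t → ∀ y ∈ K, F t y ∈ K) :
    eventualImage F K ⊆ K := fun _ hx =>
  MapsTo.image_subset (hFK 0 le_rfl) (mem_eventualImage.1 hx 0 le_rfl)

theorem setOf_orbit_tail_eq_image
    (hFadd : ∀ s t : ℝ, 0 ≤ s → 0 ≤ t → ∀ y ∈ K, F (s + t) y = F s (F t y))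
    (hFK : ∀ t : ℝ, 0 ≤ t → ∀ y ∈ K, F t y ∈ K) {τ : ℝ} (hτ : 0 ≤ τ) :
    {z : X | ∃ y ∈ K, ∃ t : ℝ, τ ≤ t ∧ z = F t y} = F τ '' K := by
  ext z
  constructor
  · rintro ⟨y, hy, t, hτt, rfl⟩
    exact antitoneOn_image_of_semiflow hFadd hFK hτ (hτ.trans hτt) hτt ⟨y, hy, rfl⟩
  · rintro ⟨y, hy, rfl⟩
    exact ⟨y, hy, τ, le_rfl, rfl⟩

theorem image_eventualImage_subset
    (hFadd : ∀ s t : ℝ, 0 ≤ s → 0 ≤ t → ∀ y ∈ K, F (s + t) y = F s (F t y))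
    (hFK : ∀ t : ℝ, 0 ≤ t → ∀ y ∈ K, F t y ∈ K) {t : ℝ} (ht : 0 ≤ t) :
    F t '' eventualImage F K ⊆ eventualImage F K := by
  rintro _ ⟨x, hx, rfl⟩
  refine mem_eventualImage.2 fun s hs => ?_
  obtain ⟨y, hy, rfl⟩ := mem_eventualImage.1 hx s hs
  refine ⟨F t y, hFK t ht y hy, ?_⟩
  rw [← hFadd s t hs ht y hy, add_comm, hFadd t s ht hs y hy]

theorem subset_eventualImage_of_invariant {D : Set X} (hDK : D ⊆ K)
    (hD : ∀ t : ℝ, 0 ≤ t → F t '' D = D) : D ⊆ eventualImage F K := fun _ hx =>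
  mem_eventualImage.2 fun t ht => image_mono hDK ((hD t ht).symm ▸ hx)

variable [TopologicalSpace X]

theorem isCompact_image_of_continuousOn (hK : IsCompact K)
    (hcont : ∀ t : ℝ, 0 ≤ t → ContinuousOn (F t) K) {t : ℝ} (ht : 0 ≤ t) :
    IsCompact (F t '' K) :=
  hK.image_of_continuousOn (hcont t ht)

theorem eventualImage_nonempty [T2Space X] (hK_ne : K.Nonempty) (hK : IsCompact K)
    (hFadd : ∀ s t : ℝ, 0 ≤ s → 0 ≤ t → ∀ y ∈ K, F (s + t) y = F s (F t y))
    (hFK : ∀ t : ℝ, 0 ≤ t → ∀ y ∈ K, F t y ∈ K)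
    (hcont : ∀ t : ℝ, 0 ≤ t → ContinuousOn (F t) K) :
    (eventualImage F K).Nonempty :=
  nonempty_biInter_Ici_of_antitoneOn (antitoneOn_image_of_semiflow hFadd hFK)
    (fun _ _ => hK_ne.image _) (fun _ ht => isCompact_image_of_continuousOn hK hcont ht)
    (fun _ ht => (isCompact_image_of_continuousOn hK hcont ht).isClosed)

theorem isCompact_eventualImage [T2Space X] (hK : IsCompact K)
    (hFK : ∀ t : ℝ, 0 ≤ t → ∀ y ∈ K, F t y ∈ K)
    (hcont : ∀ t : ℝ, 0 ≤ t → ContinuousOn (F t) K) :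
    IsCompact (eventualImage F K) :=
  hK.of_isClosed_subset
    (isClosed_biInter fun _ ht => (isCompact_image_of_continuousOn hK hcont ht).isClosed)
    (eventualImage_subset hFK)

theorem eventualImage_eq_biInter_closure_orbit_tail [T2Space X] (hK : IsCompact K)
    (hFadd : ∀ s t : ℝ, 0 ≤ s → 0 ≤ t → ∀ y ∈ K, F (s + t) y = F s (F t y))
    (hFK : ∀ t : ℝ, 0 ≤ t → ∀ y ∈ K, F t y ∈ K)
    (hcont : ∀ t : ℝ, 0 ≤ t → ContinuousOn (F t) K) :
    eventualImage F K =
      ⋂ τ ∈ Ici (0 : ℝ), closure {z : X | ∃ y ∈ K, ∃ t : ℝ, τ ≤ t ∧ z = F t y} :=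
  iInter₂_congr fun _ hτ => by
    rw [setOf_orbit_tail_eq_image hFadd hFK hτ,
      (isCompact_image_of_continuousOn hK hcont hτ).isClosed.closure_eq]

theorem subset_image_eventualImage [T2Space X] (hK : IsCompact K)
    (hFadd : ∀ s t : ℝ, 0 ≤ s → 0 ≤ t → ∀ y ∈ K, F (s + t) y = F s (F t y))
    (hFK : ∀ t : ℝ, 0 ≤ t → ∀ y ∈ K, F t y ∈ K)
    (hcont : ∀ t : ℝ, 0 ≤ t → ContinuousOn (F t) K) {t : ℝ} (ht : 0 ≤ t) :
    eventualImage F K ⊆ F t '' eventualImage F K := by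
  intro x hx
  have hfiber : IsClosed (K ∩ F t ⁻¹' {x}) :=
    (hcont t ht).preimage_isClosed_of_isClosed hK.isClosed isClosed_singleton
  have hcpt : ∀ s ∈ Ici (0 : ℝ), IsCompact (F s '' K ∩ (K ∩ F t ⁻¹' {x})) :=
    fun _ hs => (isCompact_image_of_continuousOn hK hcont hs).inter_right hfiber
  have hne : ∀ s ∈ Ici (0 : ℝ), (F s '' K ∩ (K ∩ F t ⁻¹' {x})).Nonempty := by
    intro s (hs : 0 ≤ s)
    obtain ⟨y, hy, hyx⟩ := mem_eventualImage.1 hx (t + s) (add_nonneg ht hs)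
    refine ⟨F s y, ⟨y, hy, rfl⟩, hFK s hs y hy, ?_⟩
    rw [mem_preimage, ← hFadd t s ht hs y hy, hyx, mem_singleton_iff]
  obtain ⟨z, hz⟩ := nonempty_biInter_Ici_of_antitoneOn
    (fun _ hr _ hs hrs =>
      inter_subset_inter_left _ (antitoneOn_image_of_semiflow hFadd hFK hr hs hrs))
    hne hcpt (fun s hs => (hcpt s hs).isClosed)
  rw [mem_iInter₂] at hz
  exact ⟨z, mem_eventualImage.2 fun s hs => (hz s hs).1, (hz 0 self_mem_Ici).2.2⟩

end Semiflow

theorem stmt_8_general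
    {M : Type*} [MetricSpace M]
    (K : Set M) (hK_ne : K.Nonempty) (hK_cpt : IsCompact K)
    (F : ℝ → M → M)
    (hFadd : ∀ s t : ℝ, 0 ≤ s → 0 ≤ t → ∀ y ∈ K, F (s + t) y = F s (F t y))
    (hFK : ∀ t : ℝ, 0 ≤ t → ∀ y ∈ K, F t y ∈ K)
    (hFne : ∀ t : ℝ, 0 ≤ t → ∀ y₁ ∈ K, ∀ y₂ ∈ K, dist (F t y₁) (F t y₂) ≤ dist y₁ y₂)
    (E : Set M) (hE : E = ⋂ t ∈ Set.Ici (0 : ℝ), F t '' K) :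
    E.Nonempty ∧ IsCompact E ∧
    (E = ⋂ τ ∈ Set.Ici (0 : ℝ), closure {z : M | ∃ y ∈ K, ∃ t : ℝ, τ ≤ t ∧ z = F t y}) ∧
    (∀ t : ℝ, 0 ≤ t → F t '' E = E) ∧
    (∀ D : Set M, D ⊆ K → (∀ t : ℝ, 0 ≤ t → F t '' D = D) → D ⊆ E) := by
  have hcont : ∀ t : ℝ, 0 ≤ t → ContinuousOn (F t) K := fun t ht =>
    (LipschitzOnWith.of_dist_le_mul (K := 1) fun y₁ hy₁ y₂ hy₂ => by
      simpa using hFne t ht y₁ hy₁ y₂ hy₂).continuousOn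
  change E = eventualImage F K at hE
  subst hE
  exact ⟨eventualImage_nonempty hK_ne hK_cpt hFadd hFK hcont,
    isCompact_eventualImage hK_cpt hFK hcont,
    eventualImage_eq_biInter_closure_orbit_tail hK_cpt hFadd hFK hcont,
    fun t ht => (image_eventualImage_subset hFadd hFK ht).antisymm
      (subset_image_eventualImage hK_cpt hFadd hFK hcont ht),
    fun _ => subset_eventualImage_of_invariant⟩

/-- For a nonexpansive semiflow `F` on a nonempty compact set `K`, the set
`E = ⋂_{t ≥ 0} F(t,·)''K` is nonempty and compact; it equals the limit set
`⋂_{τ ≥ 0} closure {F(t,y) : y ∈ K, t ≥ τ}`; it is invariant; and it is the largest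
invariant subset of `K`. -/
theorem stmt_8
    {M : Type*} [MetricSpace M]
    (K : Set M) (hK_ne : K.Nonempty) (hK_cpt : IsCompact K)
    (F : ℝ → M → M)
    (hF0 : ∀ y ∈ K, F 0 y = y)
    (hFadd : ∀ s t : ℝ, 0 ≤ s → 0 ≤ t → ∀ y ∈ K, F (s + t) y = F s (F t y))
    (hFK : ∀ t : ℝ, 0 ≤ t → ∀ y ∈ K, F t y ∈ K)
    (hFne : ∀ t : ℝ, 0 ≤ t → ∀ y₁ ∈ K, ∀ y₂ ∈ K, dist (F t y₁) (F t y₂) ≤ dist y₁ y₂)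
    (E : Set M) (hE : E = ⋂ t ∈ Set.Ici (0 : ℝ), F t '' K) :
    E.Nonempty ∧ IsCompact E ∧
    (E = ⋂ τ ∈ Set.Ici (0 : ℝ), closure {z : M | ∃ y ∈ K, ∃ t : ℝ, τ ≤ t ∧ z = F t y}) ∧
    (∀ t : ℝ, 0 ≤ t → F t '' E = E) ∧
    (∀ D : Set M, D ⊆ K → (∀ t : ℝ, 0 ≤ t → F t '' D = D) → D ⊆ E) :=
  stmt_8_general K hK_ne hK_cpt F hFadd hFK hFne E hE
end

section
/- Let ȳ ∈ E. Then there exists a sequence of times τ_i → ∞ such that F(τ_i, ȳ) → ȳ as i → ∞. -/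
/-- For a nonexpansive semiflow `F` on a nonempty compact set `K` and a
point `ȳ` of `E = ⋂_{t ≥ 0} F(t,·)''K`, there exist times `τ_i → ∞` with
`F(τ_i, ȳ) → ȳ`. -/
theorem stmt_9
    {M : Type*} [MetricSpace M]
    (K : Set M) (hK_ne : K.Nonempty) (hK_cpt : IsCompact K)
    (F : ℝ → M → M)
    (hF0 : ∀ y ∈ K, F 0 y = y)
    (hFadd : ∀ s t : ℝ, 0 ≤ s → 0 ≤ t → ∀ y ∈ K, F (s + t) y = F s (F t y))
    (hFK : ∀ t : ℝ, 0 ≤ t → ∀ y ∈ K, F t y ∈ K)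
    (hFne : ∀ t : ℝ, 0 ≤ t → ∀ y₁ ∈ K, ∀ y₂ ∈ K, dist (F t y₁) (F t y₂) ≤ dist y₁ y₂)
    (ybar : M) (hybar : ybar ∈ ⋂ t ∈ Set.Ici (0 : ℝ), F t '' K) :
    ∃ τ : ℕ → ℝ, (∀ i, 0 ≤ τ i) ∧
      Filter.Tendsto τ Filter.atTop Filter.atTop ∧
      Filter.Tendsto (fun i => F (τ i) ybar) Filter.atTop (nhds ybar) := by
  classical
  have hpre : ∀ t : ℝ, 0 ≤ t → ∃ z ∈ K, F t z = ybar := by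
    intro t ht
    exact Set.mem_iInter₂.1 hybar t ht
  have key : ∀ ε : ℝ, 0 < ε → ∀ T : ℝ, 0 < T →
      ∃ τ, T ≤ τ ∧ dist (F τ ybar) ybar < ε := by
    intro ε hε T hT
    obtain ⟨s, hsfin, hscov⟩ :=
      (Metric.totallyBounded_iff.1 hK_cpt.totallyBounded) (ε / 2) (by linarith)
    set sF := hsfin.toFinset with hsF
    set n := sF.card with hn
    obtain ⟨z, hzK, hzF⟩ := hpre ((n : ℝ) * T) (by positivity)
    set w : ℕ → M := fun m => F ((m : ℝ) * T) z with hw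
    have hwK : ∀ m, w m ∈ K := fun m => hFK _ (by positivity) z hzK
    have hwadd : ∀ a b : ℕ, w (a + b) = F ((a : ℝ) * T) (w b) := by
      intro a b
      simp only [hw]
      push_cast
      rw [add_mul]
      exact hFadd _ _ (by positivity) (by positivity) z hzK
    have hcover : ∀ m : ℕ, ∃ c, c ∈ sF ∧ dist (w m) c < ε / 2 := by
      intro m
      have := hscov (hwK m)
      rw [Set.mem_iUnion₂] at this
      obtain ⟨c, hc, hmem⟩ := this
      exact ⟨c, hsfin.mem_toFinset.2 hc, Metric.mem_ball.1 hmem⟩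
    set f : ℕ → M := fun m => (hcover m).choose with hf
    have hfmem : ∀ m, f m ∈ sF := fun m => (hcover m).choose_spec.1
    have hfdist : ∀ m, dist (w m) (f m) < ε / 2 := fun m => (hcover m).choose_spec.2
    obtain ⟨a, ha, b, hb, hab, hfab⟩ :=
      Finset.exists_ne_map_eq_of_card_lt_of_maps_to
        (s := Finset.range (n + 1)) (t := sF)
        (by simp [hn]) (fun m _ => hfmem m)
    obtain ⟨j, k, hjk, hkn, hfjk⟩ : ∃ j k : ℕ, j < k ∧ k ≤ n ∧ f j = f k := by
      rcases lt_or_gt_of_ne hab with h | h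
      · exact ⟨a, b, h, Nat.lt_succ_iff.1 (Finset.mem_range.1 hb), hfab⟩
      · exact ⟨b, a, h, Nat.lt_succ_iff.1 (Finset.mem_range.1 ha), hfab.symm⟩
    have hwdist : dist (w k) (w j) < ε := by
      calc dist (w k) (w j) ≤ dist (w k) (f k) + dist (f k) (w j) := dist_triangle _ _ _
        _ = dist (w k) (f k) + dist (w j) (f j) := by rw [hfjk, dist_comm (f k) (w j)]
        _ < ε / 2 + ε / 2 := add_lt_add (hfdist k) (hfdist j)
        _ = ε := by ring
    refine ⟨((k - j : ℕ) : ℝ) * T, ?_, ?_⟩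
    · have h1 : (1 : ℝ) ≤ ((k - j : ℕ) : ℝ) := by
        have : 1 ≤ k - j := by omega
        exact_mod_cast this
      nlinarith
    · have hyw : ybar = w n := by rw [hw]; exact hzF.symm
      have h1 : F (((k - j : ℕ) : ℝ) * T) ybar = F (((n - j : ℕ) : ℝ) * T) (w k) := by
        rw [hyw, ← hwadd]
        have : (k - j) + n = (n - j) + k := by omega
        rw [this, hwadd]
      have h2 : ybar = F (((n - j : ℕ) : ℝ) * T) (w j) := by
        rw [hyw, ← hwadd]
        congr 1
        omega
      calc dist (F (((k - j : ℕ) : ℝ) * T) ybar) ybar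
          = dist (F (((n - j : ℕ) : ℝ) * T) (w k)) (F (((n - j : ℕ) : ℝ) * T) (w j)) := by
            rw [h1, h2]
        _ ≤ dist (w k) (w j) := hFne _ (by positivity) _ (hwK k) _ (hwK j)
        _ < ε := hwdist
  -- assemble the sequence
  have hkey : ∀ i : ℕ, ∃ τ, ((i : ℝ) + 1) ≤ τ ∧ dist (F τ ybar) ybar < 1 / ((i : ℝ) + 1) := by
    intro i
    exact key (1 / ((i : ℝ) + 1)) (by positivity) ((i : ℝ) + 1) (by positivity)
  choose τ hτ₁ hτ₂ using hkey
  refine ⟨τ, ?_, ?_, ?_⟩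
  · intro i
    have h := hτ₁ i
    have : (0 : ℝ) ≤ (i : ℝ) + 1 := by positivity
    linarith
  · apply Filter.tendsto_atTop_mono (fun i => le_trans (by push_cast; linarith) (hτ₁ i))
    exact tendsto_natCast_atTop_atTop
  · rw [Metric.tendsto_atTop]
    intro ε hε
    obtain ⟨N, hN⟩ := exists_nat_gt (1 / ε)
    refine ⟨N, fun m hm => ?_⟩
    have h1 : dist (F (τ m) ybar) ybar < 1 / ((m : ℝ) + 1) := hτ₂ m
    have h2 : (1 : ℝ) / ε < (m : ℝ) + 1 := by
      have : (N : ℝ) ≤ (m : ℝ) := by exact_mod_cast hm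
      linarith
    have h3 : (1 : ℝ) / ((m : ℝ) + 1) < ε := by
      rw [div_lt_iff₀ (by positivity)]
      rw [div_lt_iff₀ hε] at h2
      nlinarith
    linarith
end

section
/- Let ȳ ∈ E and let V : K → ℝ be a continuous function such that the map t ↦ V(F(t, ȳ)) is nonincreasing on [0,∞). Then t ↦ V(F(t, ȳ)) is constant on [0,∞). -/
/-- For a nonexpansive semiflow `F` on a nonempty compact set `K`, a point
`ȳ` of `E = ⋂_{t ≥ 0} F(t,·)''K`, and a continuous `V : K → ℝ` such that `t ↦ V(F(t,ȳ))` is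
nonincreasing on `[0,∞)`, the map `t ↦ V(F(t,ȳ))` is constant on `[0,∞)`. -/
theorem stmt_10
    {M : Type*} [MetricSpace M]
    (K : Set M) (hK_ne : K.Nonempty) (hK_cpt : IsCompact K)
    (F : ℝ → M → M)
    (hF0 : ∀ y ∈ K, F 0 y = y)
    (hFadd : ∀ s t : ℝ, 0 ≤ s → 0 ≤ t → ∀ y ∈ K, F (s + t) y = F s (F t y))
    (hFK : ∀ t : ℝ, 0 ≤ t → ∀ y ∈ K, F t y ∈ K)
    (hFne : ∀ t : ℝ, 0 ≤ t → ∀ y₁ ∈ K, ∀ y₂ ∈ K, dist (F t y₁) (F t y₂) ≤ dist y₁ y₂)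
    (ybar : M) (hybar : ybar ∈ ⋂ t ∈ Set.Ici (0 : ℝ), F t '' K)
    (V : M → ℝ) (hV_cont : ContinuousOn V K)
    (hV_mono : AntitoneOn (fun t : ℝ => V (F t ybar)) (Set.Ici (0 : ℝ))) :
    ∀ t : ℝ, 0 ≤ t → V (F t ybar) = V (F 0 ybar) := by
  -- ybar ∈ K
  have hyK : ybar ∈ K := by
    obtain ⟨w, hwK, hw⟩ := Set.mem_iInter₂.mp hybar 0 (Set.mem_Ici.mpr (le_refl 0))
    rw [hF0 w hwK] at hw
    rwa [← hw]
  -- for each n, a backward point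
  have hchoice : ∀ n : ℕ, ∃ w, w ∈ K ∧ F (n : ℝ) w = ybar := by
    intro n
    obtain ⟨w, hwK, hw⟩ := Set.mem_iInter₂.mp hybar (n : ℝ) (Set.mem_Ici.mpr (Nat.cast_nonneg n))
    exact ⟨w, hwK, hw⟩
  choose g hgK hgF using hchoice
  obtain ⟨z, hzK, φ, hφ, hconv⟩ := hK_cpt.tendsto_subseq hgK
  -- recurrence: for every δ > 0 and every t, there is s ≥ t with F s ybar close to ybar
  have key : ∀ δ : ℝ, 0 < δ → ∀ t : ℝ, 0 ≤ t →
      ∃ s : ℝ, t ≤ s ∧ 0 ≤ s ∧ dist (F s ybar) ybar < δ := by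
    intro δ hδ t ht
    obtain ⟨N, hN⟩ := Metric.tendsto_atTop.mp hconv (δ / 2) (by linarith)
    set k := N with hk
    set l := N + Nat.ceil t with hl
    have gap : ∀ m : ℕ, φ k + m ≤ φ (k + m) := by
      intro m
      induction m with
      | zero => simp
      | succ m ih =>
        have h2 : φ (k + m) < φ (k + m + 1) := hφ (by omega)
        have h3 : k + (m + 1) = k + m + 1 := by omega
        rw [h3]
        omega
    have hkl : φ k + Nat.ceil t ≤ φ l := gap (Nat.ceil t)
    set s : ℝ := (φ l : ℝ) - (φ k : ℝ) with hs
    have hts : t ≤ s := by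
      have h1 : t ≤ (Nat.ceil t : ℝ) := Nat.le_ceil t
      have h2 : ((φ k : ℕ) : ℝ) + (Nat.ceil t : ℝ) ≤ (φ l : ℝ) := by
        exact_mod_cast hkl
      simp only [hs]; linarith
    have hs0 : (0 : ℝ) ≤ s := le_trans ht hts
    refine ⟨s, hts, hs0, ?_⟩
    -- F s ybar = F (φ l) (g (φ k))
    have hFs : F s ybar = F (φ l : ℝ) (g (φ k)) := by
      conv_lhs => rw [← hgF (φ k)]
      rw [← hFadd s (φ k : ℝ) hs0 (Nat.cast_nonneg _) (g (φ k)) (hgK (φ k))]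
      congr 1
      simp only [hs]; ring
    rw [hFs]
    have h1 : dist (F (φ l : ℝ) (g (φ k))) (F (φ l : ℝ) z) ≤ dist (g (φ k)) z :=
      hFne (φ l : ℝ) (Nat.cast_nonneg _) (g (φ k)) (hgK _) z hzK
    have h2 : dist (F (φ l : ℝ) z) (F (φ l : ℝ) (g (φ l))) ≤ dist z (g (φ l)) :=
      hFne (φ l : ℝ) (Nat.cast_nonneg _) z hzK (g (φ l)) (hgK _)
    have h3 : dist (F (φ l : ℝ) (g (φ k))) ybar ≤
        dist (F (φ l : ℝ) (g (φ k))) (F (φ l : ℝ) z) + dist (F (φ l : ℝ) z) ybar := by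
      exact dist_triangle _ _ _
    have h4 : dist (F (φ l : ℝ) z) ybar ≤ dist z (g (φ l)) := by
      rw [← hgF (φ l)]; exact h2
    have h5 : dist ((g ∘ φ) k) z < δ / 2 := hN k (le_refl N)
    have h6 : dist ((g ∘ φ) l) z < δ / 2 := hN l (Nat.le_add_right _ _)
    simp only [Function.comp_apply] at h5 h6
    have h7 : dist z (g (φ l)) < δ / 2 := by rwa [dist_comm] at h6
    linarith
  -- conclusion
  intro t ht
  rw [hF0 ybar hyK]
  have hle : V (F t ybar) ≤ V ybar := by
    have := hV_mono (Set.mem_Ici.mpr (le_refl (0 : ℝ))) (Set.mem_Ici.mpr ht) ht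
    simpa [hF0 ybar hyK] using this
  have hge : V ybar ≤ V (F t ybar) := by
    refine le_of_forall_pos_le_add ?_
    intro ε hε
    have hVc := (hV_cont ybar hyK)
    rw [Metric.continuousWithinAt_iff] at hVc
    obtain ⟨δ, hδ, hδ'⟩ := hVc ε hε
    obtain ⟨s, hts, hs0, hclose⟩ := key δ hδ t ht
    have hsK : F s ybar ∈ K := hFK s hs0 ybar hyK
    have hVs : dist (V (F s ybar)) (V ybar) < ε := hδ' hsK hclose
    have hmono : V (F s ybar) ≤ V (F t ybar) :=
      hV_mono (Set.mem_Ici.mpr ht) (Set.mem_Ici.mpr hs0) hts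
    rw [Real.dist_eq, abs_lt] at hVs
    linarith
  linarith
end

section
/- Let B_x be a closed Euclidean ball in ℝ^d centered at the origin with positive radius, and define J̃_p(θ) = sup_{x ∈ B_x} ψ^o(θ, x). Then: (i) for each θ ∈ ℝ^d there is a unique maximizer x̃(θ) of ψ^o(θ, ·) over B_x that lies in span{φ(S)}, and every maximizer x̂ of ψ^o(θ, ·) over B_x satisfies Φx̂ = Φx̃(θ); (ii) J̃_p is convex and differentiable on ℝ^d with ∇J̃_p(θ) = ∇_θψ^o(θ, x̃(θ)) = (ΦᵀΞ(P^{(λ)} − I)Φ)ᵀ x̃(θ) + ∇p(θ); (iii) the map θ ↦ x̃(θ) is continuous. -/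
/-!
With `L x = diag(√ξ) Φ x` one has `ψ^o(θ, x) = ⟪x, a θ⟫ - ‖L x‖² / 2 + p(θ)`, where
`a θ = ΦᵀΞ(T v_θ - v_θ)` is affine in `θ` and lies in `(ker L)ᗮ = span φ(S)`. Projecting `x`
orthogonally onto `(ker L)ᗮ` changes neither `ψ^o(θ, x)` nor `Φx` and does not increase `‖x‖`, so
it suffices to maximize over the compact convex set `B_x ∩ (ker L)ᗮ`, on which `L` is injective and
hence the objective strongly concave. Strong concavity gives uniqueness there, equality of `Φx̂`
for all maximizers, and a Lipschitz bound for `a ↦ x̃`. Finally `J̃_p - p` is a pointwise maximum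
of functions affine in `θ`, attained at `x̃(θ)`: it is convex, and comparing the affine minorants
at `x̃(θ)` and `x̃(θ')` together with the continuity of `x̃` gives its gradient (Danskin).
-/

open Matrix

/-- The canonical identification of `ℝ^d` (as a plain function type) with
`EuclideanSpace ℝ (Fin d)`. -/
noncomputable def toEuc {d : ℕ} (v : Fin d → ℝ) : EuclideanSpace ℝ (Fin d) :=
  (WithLp.equiv 2 (Fin d → ℝ)).symm v

open RealInnerProductSpace Set Metric LinearMap
open scoped NNReal
open WithLp (toLp ofLp)

section ConcaveQuadratic

variable {E F : Type*} [NormedAddCommGroup E] [InnerProductSpace ℝ E]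
  [NormedAddCommGroup F] [InnerProductSpace ℝ F]

noncomputable def concaveQuadratic (L : E →ₗ[ℝ] F) (a x : E) : ℝ := ⟪x, a⟫ - ‖L x‖ ^ 2 / 2

variable {L : E →ₗ[ℝ] F}

lemma concaveQuadratic_add_left (a b x : E) :
    concaveQuadratic L (a + b) x = concaveQuadratic L a x + ⟪x, b⟫ := by
  simp only [concaveQuadratic, inner_add_right]
  ring

lemma concaveQuadratic_midpoint (a u y : E) :
    concaveQuadratic L a ((1 / 2 : ℝ) • u + (1 / 2 : ℝ) • y) =
      (concaveQuadratic L a u + concaveQuadratic L a y) / 2 + ‖L (u - y)‖ ^ 2 / 8 := by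
  simp only [concaveQuadratic, map_add, map_smul, map_sub, inner_add_left,
    norm_add_sq_real, norm_sub_sq_real, norm_smul, inner_smul_left, inner_smul_right]
  norm_num
  ring

lemma concaveQuadratic_add_le_of_isMaxOn {S : Set E} (hS : Convex ℝ S) {a m y : E} (hm : m ∈ S)
    (hmax : IsMaxOn (concaveQuadratic L a) S m) (hy : y ∈ S) :
    concaveQuadratic L a y + ‖L (m - y)‖ ^ 2 / 4 ≤ concaveQuadratic L a m := by
  have hmid := hmax (hS hm hy (by norm_num : (0 : ℝ) ≤ 1 / 2) (by norm_num : (0 : ℝ) ≤ 1 / 2)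
    (by norm_num))
  rw [mem_ofPred_eq, concaveQuadratic_midpoint] at hmid
  linarith

lemma norm_map_sub_sq_le_of_isMaxOn {S : Set E} (hS : Convex ℝ S) {a a' m m' : E} (hm : m ∈ S)
    (hm' : m' ∈ S) (hmax : IsMaxOn (concaveQuadratic L a) S m)
    (hmax' : IsMaxOn (concaveQuadratic L a') S m') :
    ‖L (m - m')‖ ^ 2 ≤ 2 * ⟪m - m', a - a'⟫ := by
  have h := concaveQuadratic_add_le_of_isMaxOn hS hm hmax hm'
  have h' := concaveQuadratic_add_le_of_isMaxOn hS hm' hmax' hm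
  rw [← norm_neg, ← map_neg, neg_sub] at h'
  simp only [concaveQuadratic, inner_sub_left, inner_sub_right] at h h' ⊢
  linarith

lemma map_eq_of_isMaxOn {S : Set E} (hS : Convex ℝ S) {a m m' : E} (hm : m ∈ S) (hm' : m' ∈ S)
    (hmax : IsMaxOn (concaveQuadratic L a) S m) (hmax' : IsMaxOn (concaveQuadratic L a) S m') :
    L m = L m' := by
  have h := norm_map_sub_sq_le_of_isMaxOn hS hm hm' hmax hmax'
  rw [sub_self, inner_zero_right, mul_zero] at h
  rw [← sub_eq_zero, ← map_sub, ← norm_eq_zero]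
  exact pow_eq_zero_iff two_ne_zero |>.1 (le_antisymm h (sq_nonneg _))

lemma eq_of_isMaxOn_of_mem_orthogonal_ker {S : Set E} (hS : Convex ℝ S) {a m m' : E} (hm : m ∈ S)
    (hm' : m' ∈ S) (hmL : m ∈ (ker L)ᗮ) (hmL' : m' ∈ (ker L)ᗮ)
    (hmax : IsMaxOn (concaveQuadratic L a) S m) (hmax' : IsMaxOn (concaveQuadratic L a) S m') :
    m = m' := by
  refine sub_eq_zero.1 (Submodule.disjoint_def.1 (ker L).orthogonal_disjoint _ ?_ ?_)
  · rw [mem_ker, map_sub, map_eq_of_isMaxOn hS hm hm' hmax hmax', sub_self]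
  · exact Submodule.sub_mem _ hmL hmL'

lemma exists_norm_le_mul_norm_map [FiniteDimensional ℝ E] (L : E →ₗ[ℝ] F) :
    ∃ K : ℝ≥0, ∀ v ∈ (ker L)ᗮ, ‖v‖ ≤ K * ‖L v‖ := by
  have hinj : Function.Injective (L.domRestrict (ker L)ᗮ) := by
    rw [← ker_eq_bot, Submodule.eq_bot_iff]
    intro v hv
    exact Subtype.ext (Submodule.disjoint_def.1 (ker L).orthogonal_disjoint _ hv v.2)
  obtain ⟨K, -, hK⟩ := (L.domRestrict (ker L)ᗮ).injective_iff_antilipschitz.1 hinj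
  exact ⟨K, fun v hv => hK.le_mul_norm (map_zero _) ⟨v, hv⟩⟩

lemma lipschitzWith_of_isMaxOn_concaveQuadratic {S : Set E} (hS : Convex ℝ S) {K : ℝ≥0}
    (hK : ∀ v ∈ (ker L)ᗮ, ‖v‖ ≤ K * ‖L v‖) {m : E → E} (hmS : ∀ a, m a ∈ S)
    (hmL : ∀ a, m a ∈ (ker L)ᗮ) (hmax : ∀ a, IsMaxOn (concaveQuadratic L a) S (m a)) :
    LipschitzWith (2 * K ^ 2) m := by
  refine LipschitzWith.of_dist_le_mul fun a a' => ?_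
  rw [dist_eq_norm, dist_eq_norm]
  set δ := m a - m a'
  have hδ : ‖δ‖ ≤ K * ‖L δ‖ := hK δ (Submodule.sub_mem _ (hmL a) (hmL a'))
  have hLδ : ‖L δ‖ ^ 2 ≤ 2 * (‖δ‖ * ‖a - a'‖) :=
    (norm_map_sub_sq_le_of_isMaxOn hS (hmS a) (hmS a') (hmax a) (hmax a')).trans
      (mul_le_mul_of_nonneg_left (real_inner_le_norm _ _) zero_le_two)
  have hsq : ‖δ‖ * ‖δ‖ ≤ ‖δ‖ * (2 * K ^ 2 * ‖a - a'‖) := by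
    calc ‖δ‖ * ‖δ‖ ≤ K ^ 2 * ‖L δ‖ ^ 2 := by nlinarith [norm_nonneg δ]
      _ ≤ ‖δ‖ * (2 * K ^ 2 * ‖a - a'‖) := by nlinarith [sq_nonneg (K : ℝ)]
  rcases (norm_nonneg δ).eq_or_lt with h0 | hpos
  · rw [← h0]; positivity
  · push_cast
    exact le_of_mul_le_mul_left hsq hpos

variable [FiniteDimensional ℝ E]

lemma continuous_concaveQuadratic (a : E) : Continuous (concaveQuadratic L a) :=
  (continuous_id.inner continuous_const).sub
    ((L.continuous_of_finiteDimensional.norm.pow 2).div_const 2)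

lemma exists_isMaxOn_concaveQuadratic (L : E →ₗ[ℝ] F) {R : ℝ} (hR : 0 ≤ R) (a : E) :
    ∃ m ∈ closedBall 0 R ∩ (ker L)ᗮ,
      IsMaxOn (concaveQuadratic L a) (closedBall 0 R ∩ (ker L)ᗮ) m :=
  ((isCompact_closedBall 0 R).inter_right (ker L).isClosed_orthogonal).exists_isMaxOn
    ⟨0, mem_closedBall_self hR, Submodule.zero_mem _⟩
    (continuous_concaveQuadratic (L := L) a).continuousOn

lemma concaveQuadratic_starProjection {a : E} (ha : a ∈ (ker L)ᗮ) (x : E) :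
    concaveQuadratic L a ((ker L)ᗮ.starProjection x) = concaveQuadratic L a x := by
  have hx : x - (ker L)ᗮ.starProjection x ∈ ker L := by
    have := Submodule.sub_starProjection_mem_orthogonal (K := (ker L)ᗮ) x
    rwa [Submodule.orthogonal_orthogonal] at this
  have hLx : L ((ker L)ᗮ.starProjection x) = L x := by
    rw [← sub_eq_zero, ← map_sub, ← neg_sub, map_neg, mem_ker.1 hx, neg_zero]
  have hax : ⟪(ker L)ᗮ.starProjection x, a⟫ = ⟪x, a⟫ := by
    rw [← sub_eq_zero, ← inner_sub_left, ← neg_sub, inner_neg_left,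
      Submodule.inner_right_of_mem_orthogonal hx ha, neg_zero]
  rw [concaveQuadratic, concaveQuadratic, hLx, hax]

lemma isMaxOn_closedBall_of_isMaxOn_inter {R : ℝ} {a m : E} (ha : a ∈ (ker L)ᗮ)
    (hmax : IsMaxOn (concaveQuadratic L a) (closedBall 0 R ∩ (ker L)ᗮ) m) :
    IsMaxOn (concaveQuadratic L a) (closedBall 0 R) m := by
  intro x hx
  rw [mem_ofPred_eq, ← concaveQuadratic_starProjection ha x]
  refine hmax ⟨?_, Submodule.starProjection_apply_mem _ x⟩
  rw [mem_closedBall_zero_iff] at hx ⊢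
  exact (Submodule.norm_starProjection_apply_le _ x).trans hx

theorem exists_continuous_isMaxOn_concaveQuadratic {X : Type*} [TopologicalSpace X]
    (L : E →ₗ[ℝ] F) {R : ℝ} (hR : 0 ≤ R) {a : X → E} (ha : Continuous a)
    (haL : ∀ θ, a θ ∈ (ker L)ᗮ) :
    ∃ xt : X → E, Continuous xt ∧ ∀ θ, xt θ ∈ closedBall 0 R ∧ xt θ ∈ (ker L)ᗮ ∧
      IsMaxOn (concaveQuadratic L (a θ)) (closedBall 0 R) (xt θ) := by
  choose m hmS hmax using exists_isMaxOn_concaveQuadratic L hR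
  obtain ⟨K, hK⟩ := exists_norm_le_mul_norm_map L
  have hm : LipschitzWith (2 * K ^ 2) m :=
    lipschitzWith_of_isMaxOn_concaveQuadratic ((convex_closedBall 0 R).inter (ker L)ᗮ.convex) hK
      hmS (fun a => (hmS a).2) hmax
  exact ⟨m ∘ a, hm.continuous.comp ha, fun θ =>
    ⟨(hmS _).1, (hmS _).2, isMaxOn_closedBall_of_isMaxOn_inter (haL θ) (hmax _)⟩⟩

end ConcaveQuadratic

section MaxOfAffine

variable {E X : Type*} [NormedAddCommGroup E] [InnerProductSpace ℝ E] {S : Set X} {c : X → ℝ}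
  {G : X → E} {m : E → X}

theorem convexOn_of_isMaxOn_affine (hmS : ∀ θ, m θ ∈ S)
    (hmax : ∀ θ, IsMaxOn (fun x => c x + ⟪G x, θ⟫) S (m θ)) :
    ConvexOn ℝ univ fun θ => c (m θ) + ⟪G (m θ), θ⟫ := by
  refine ⟨convex_univ, fun θ₀ _ θ₁ _ t s ht hs hts => ?_⟩
  set μ := m (t • θ₀ + s • θ₁)
  have h₀ : c μ + ⟪G μ, θ₀⟫ ≤ c (m θ₀) + ⟪G (m θ₀), θ₀⟫ := hmax θ₀ (hmS _)
  have h₁ : c μ + ⟪G μ, θ₁⟫ ≤ c (m θ₁) + ⟪G (m θ₁), θ₁⟫ := hmax θ₁ (hmS _)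
  calc c μ + ⟪G μ, t • θ₀ + s • θ₁⟫ = t * (c μ + ⟪G μ, θ₀⟫) + s * (c μ + ⟪G μ, θ₁⟫) := by
        rw [inner_add_right, real_inner_smul_right, real_inner_smul_right]
        linear_combination c μ * hts.symm
    _ ≤ _ := by simp only [smul_eq_mul]; gcongr

theorem hasGradientAt_of_isMaxOn_affine [CompleteSpace E] (hmS : ∀ θ, m θ ∈ S)
    (hmax : ∀ θ, IsMaxOn (fun x => c x + ⟪G x, θ⟫) S (m θ)) {θ : E}
    (hG : ContinuousAt (G ∘ m) θ) :
    HasGradientAt (fun θ => c (m θ) + ⟪G (m θ), θ⟫) (G (m θ)) θ := by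
  rw [hasGradientAt_iff_isLittleO]
  -- the remainder lies between `0` and `⟪G (m θ') - G (m θ), θ' - θ⟫`
  have hbound : ∀ θ', ‖c (m θ') + ⟪G (m θ'), θ'⟫ - (c (m θ) + ⟪G (m θ), θ⟫) - ⟪G (m θ), θ' - θ⟫‖
      ≤ ‖G (m θ') - G (m θ)‖ * ‖θ' - θ‖ := by
    intro θ'
    have hlow : c (m θ) + ⟪G (m θ), θ'⟫ ≤ c (m θ') + ⟪G (m θ'), θ'⟫ := hmax θ' (hmS θ)
    have hup : c (m θ') + ⟪G (m θ'), θ⟫ ≤ c (m θ) + ⟪G (m θ), θ⟫ := hmax θ (hmS θ')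
    have hcs := real_inner_le_norm (G (m θ') - G (m θ)) (θ' - θ)
    simp only [inner_sub_left, inner_sub_right] at hcs ⊢
    rw [Real.norm_eq_abs, abs_le]
    constructor <;> linarith
  refine Asymptotics.isLittleO_iff.2 fun ε hε => ?_
  filter_upwards [hG.eventually (closedBall_mem_nhds _ hε)] with θ' hθ'
  rw [Function.comp_apply, Function.comp_apply, dist_eq_norm] at hθ'
  exact (hbound θ').trans (mul_le_mul_of_nonneg_right hθ' (norm_nonneg _))

theorem HasGradientAt.add [CompleteSpace E] {f g : E → ℝ} {f' g' x : E}
    (hf : HasGradientAt f f' x) (hg : HasGradientAt g g' x) :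
    HasGradientAt (f + g) (f' + g') x := by
  rw [hasGradientAt_iff_hasFDerivAt, map_add]
  exact hf.hasFDerivAt.add hg.hasFDerivAt

end MaxOfAffine

section FeatureMatrix

variable {n d : ℕ}

lemma inner_toLp_transpose_mulVec {ι κ : Type*} [Fintype ι] [Fintype κ] (M : Matrix ι κ ℝ)
    (x : EuclideanSpace ℝ κ) (w : ι → ℝ) : ⟪x, toLp 2 (Mᵀ *ᵥ w)⟫ = M *ᵥ ofLp x ⬝ᵥ w := by
  rw [EuclideanSpace.inner_eq_star_dotProduct, star_trivial, mulVec_transpose, ← dotProduct_mulVec,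
    dotProduct_comm]

lemma inner_toLp_mulVec {ι κ : Type*} [Fintype ι] [Fintype κ] (M : Matrix ι κ ℝ)
    (x : EuclideanSpace ℝ ι) (y : EuclideanSpace ℝ κ) :
    ⟪x, toLp 2 (M *ᵥ ofLp y)⟫ = ⟪toLp 2 (Mᵀ *ᵥ ofLp x), y⟫ := by
  rw [← transpose_transpose M, inner_toLp_transpose_mulVec, transpose_transpose,
    EuclideanSpace.inner_eq_star_dotProduct, star_trivial, dotProduct_comm]

lemma mulVec_mulVec_add_mulVec_sub {R ι κ ν μ : Type*} [CommRing R] [Fintype κ] [Fintype ν]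
    [Fintype μ] [DecidableEq ν] (A : Matrix ι κ R) (B : Matrix κ ν R) (P : Matrix ν ν R)
    (Φ : Matrix ν μ R) (r : ν → R) (θ : μ → R) :
    A *ᵥ (B *ᵥ (r + P *ᵥ (Φ *ᵥ θ) - Φ *ᵥ θ)) = A *ᵥ (B *ᵥ r) + (A * B * (P - 1) * Φ) *ᵥ θ := by
  rw [← mulVec_mulVec, ← mulVec_mulVec, ← mulVec_mulVec, sub_mulVec, one_mulVec, ← mulVec_add,
    ← mulVec_add, add_sub_assoc]

noncomputable def weightedFeatureMap (ξ : Fin n → ℝ) (Φ : Matrix (Fin n) (Fin d) ℝ) :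
    EuclideanSpace ℝ (Fin d) →ₗ[ℝ] EuclideanSpace ℝ (Fin n) :=
  toLpLin 2 2 (diagonal (fun i => √(ξ i)) * Φ)

variable {ξ : Fin n → ℝ} {Φ : Matrix (Fin n) (Fin d) ℝ}

lemma weightedFeatureMap_apply (x : EuclideanSpace ℝ (Fin d)) (i : Fin n) :
    weightedFeatureMap ξ Φ x i = √(ξ i) * (Φ *ᵥ ofLp x) i := by
  rw [weightedFeatureMap, toLpLin_apply, PiLp.toLp_apply, ← mulVec_mulVec, mulVec_diagonal]

lemma norm_weightedFeatureMap_sq (hξ : ∀ i, 0 ≤ ξ i) (x : EuclideanSpace ℝ (Fin d)) :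
    ‖weightedFeatureMap ξ Φ x‖ ^ 2 = Φ *ᵥ ofLp x ⬝ᵥ diagonal ξ *ᵥ (Φ *ᵥ ofLp x) := by
  simp only [EuclideanSpace.norm_sq_eq, weightedFeatureMap_apply, Real.norm_eq_abs, sq_abs,
    mul_pow, Real.sq_sqrt (hξ _), dotProduct, mulVec_diagonal]
  exact Finset.sum_congr rfl fun i _ => by ring

lemma mem_ker_weightedFeatureMap (hξ : ∀ i, 0 < ξ i) (x : EuclideanSpace ℝ (Fin d)) :
    x ∈ ker (weightedFeatureMap ξ Φ) ↔ Φ *ᵥ ofLp x = 0 := by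
  have hsqrt : ∀ i, √(ξ i) ≠ 0 := fun i => (Real.sqrt_pos.2 (hξ i)).ne'
  simp [PiLp.ext_iff, funext_iff, weightedFeatureMap_apply, hsqrt]

lemma dotProduct_diagonal_sub_half_eq_concaveQuadratic (hξ : ∀ i, 0 ≤ ξ i) (w : Fin n → ℝ)
    (x : EuclideanSpace ℝ (Fin d)) :
    Φ *ᵥ ofLp x ⬝ᵥ diagonal ξ *ᵥ w - 1 / 2 * (Φ *ᵥ ofLp x ⬝ᵥ diagonal ξ *ᵥ (Φ *ᵥ ofLp x)) =
      concaveQuadratic (weightedFeatureMap ξ Φ) (toLp 2 (Φᵀ *ᵥ (diagonal ξ *ᵥ w))) x := by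
  rw [concaveQuadratic, norm_weightedFeatureMap_sq hξ, inner_toLp_transpose_mulVec]
  ring

lemma toLp_transpose_mulVec_mem_orthogonal_ker (hξ : ∀ i, 0 < ξ i) (w : Fin n → ℝ) :
    toLp 2 (Φᵀ *ᵥ w) ∈ (ker (weightedFeatureMap ξ Φ))ᗮ := by
  intro u hu
  rw [inner_toLp_transpose_mulVec, (mem_ker_weightedFeatureMap hξ u).1 hu, zero_dotProduct]

lemma mem_orthogonal_ker_weightedFeatureMap (hξ : ∀ i, 0 < ξ i) (x : EuclideanSpace ℝ (Fin d)) :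
    x ∈ (ker (weightedFeatureMap ξ Φ))ᗮ ↔ ofLp x ∈ Submodule.span ℝ (range fun i => Φ i) := by
  set W := Submodule.span ℝ (range fun i => toLp 2 (Φ i))
  have hrow : ∀ i, toLp 2 (Φ i) = toLp 2 (Φᵀ *ᵥ Pi.single i 1) := by simp [row_apply']
  have hW : (ker (weightedFeatureMap ξ Φ))ᗮ = W := by
    refine le_antisymm ?_ ?_
    · rw [← W.orthogonal_orthogonal]
      refine Submodule.orthogonal_le fun u hu => (mem_ker_weightedFeatureMap hξ u).2 ?_
      ext i
      have hi : ⟪toLp 2 (Φ i), u⟫ = 0 := hu _ (Submodule.subset_span ⟨i, rfl⟩)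
      rwa [hrow, real_inner_comm, inner_toLp_transpose_mulVec, dotProduct_single_one] at hi
    · rw [Submodule.span_le]
      rintro _ ⟨i, rfl⟩
      dsimp only
      rw [hrow]
      exact toLp_transpose_mulVec_mem_orthogonal_ker hξ _
  have hWmap : W = (Submodule.span ℝ (range fun i => Φ i)).map
      ((WithLp.linearEquiv 2 ℝ (Fin d → ℝ)).symm : (Fin d → ℝ) →ₗ[ℝ] _) := by
    rw [← Submodule.span_image_linearEquiv, ← Set.range_comp]
    rfl
  rw [hW, hWmap, Submodule.mem_map_equiv]
  rfl

end FeatureMatrix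

theorem stmt_11_general
    (n d : ℕ)
    (Φ : Matrix (Fin n) (Fin d) ℝ)
    (ξ : Fin n → ℝ) (hξ : ∀ i, 0 < ξ i)
    (Ξ : Matrix (Fin n) (Fin n) ℝ) (hΞ : Ξ = Matrix.diagonal ξ)
    (P : Matrix (Fin n) (Fin n) ℝ) (r : Fin n → ℝ)
    (T : (Fin n → ℝ) → (Fin n → ℝ)) (hT : ∀ v, T v = r + P.mulVec v)
    (p : EuclideanSpace ℝ (Fin d) → ℝ)
    (gradp : EuclideanSpace ℝ (Fin d) → EuclideanSpace ℝ (Fin d))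
    (hp_conv : ConvexOn ℝ Set.univ p)
    (hp_grad : ∀ θ, HasGradientAt p (gradp θ) θ)
    -- the closed Euclidean ball `B_x` of positive radius centered at the origin
    (rx : ℝ) (hrx : 0 < rx)
    (Bx : Set (EuclideanSpace ℝ (Fin d)))
    (hBx : Bx = Metric.closedBall (0 : EuclideanSpace ℝ (Fin d)) rx)
    -- `ψ^o(θ,x) = ⟨Φx, T v_θ − v_θ⟩_ξ − ½‖Φx‖²_ξ + p(θ)`
    (ψ : EuclideanSpace ℝ (Fin d) → EuclideanSpace ℝ (Fin d) → ℝ)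
    (hψ : ∀ θ x : EuclideanSpace ℝ (Fin d),
      ψ θ x = Φ.mulVec x ⬝ᵥ Ξ.mulVec (T (Φ.mulVec θ) - Φ.mulVec θ)
        - (1 / 2) * (Φ.mulVec x ⬝ᵥ Ξ.mulVec (Φ.mulVec x)) + p θ)
    -- `J̃_p(θ) = sup_{x ∈ B_x} ψ^o(θ, x)`
    (Jt : EuclideanSpace ℝ (Fin d) → ℝ)
    (hJt : ∀ θ : EuclideanSpace ℝ (Fin d), Jt θ = sSup ((fun x => ψ θ x) '' Bx)) :
    ∃ xt : EuclideanSpace ℝ (Fin d) → EuclideanSpace ℝ (Fin d),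
      (∀ θ : EuclideanSpace ℝ (Fin d),
        xt θ ∈ Bx ∧
        (xt θ : Fin d → ℝ) ∈ Submodule.span ℝ (Set.range (fun i : Fin n => Φ i)) ∧
        (∀ x ∈ Bx, ψ θ x ≤ ψ θ (xt θ)) ∧
        (∀ x' : EuclideanSpace ℝ (Fin d), x' ∈ Bx →
          (x' : Fin d → ℝ) ∈ Submodule.span ℝ (Set.range (fun i : Fin n => Φ i)) →
          (∀ x ∈ Bx, ψ θ x ≤ ψ θ x') → x' = xt θ) ∧
        (∀ xhat : EuclideanSpace ℝ (Fin d), xhat ∈ Bx →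
          (∀ x ∈ Bx, ψ θ x ≤ ψ θ xhat) → Φ.mulVec xhat = Φ.mulVec (xt θ))) ∧
      ConvexOn ℝ Set.univ Jt ∧
      (∀ θ : EuclideanSpace ℝ (Fin d),
        HasGradientAt Jt (toEuc ((Φᵀ * Ξ * (P - 1) * Φ)ᵀ.mulVec (xt θ)) + gradp θ) θ) ∧
      Continuous xt := by
  subst hΞ hBx
  set L := weightedFeatureMap ξ Φ
  set C := Φᵀ * diagonal ξ * (P - 1) * Φ
  set a : EuclideanSpace ℝ (Fin d) → EuclideanSpace ℝ (Fin d) :=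
    fun θ => toLp 2 (Φᵀ *ᵥ (diagonal ξ *ᵥ (T (Φ *ᵥ ofLp θ) - Φ *ᵥ ofLp θ)))
  have ha : ∀ θ, a θ = a 0 + toLp 2 (C *ᵥ ofLp θ) := fun θ => by
    simp only [a, hT, mulVec_mulVec_add_mulVec_sub, WithLp.ofLp_zero, mulVec_zero,
      WithLp.toLp_zero, add_zero, WithLp.toLp_add]
    rfl
  have hψa : ∀ θ x, ψ θ x = concaveQuadratic L (a θ) x + p θ := fun θ x => by
    rw [hψ, dotProduct_diagonal_sub_half_eq_concaveQuadratic fun i => (hξ i).le]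
  have hψC : ∀ θ x, ψ θ x = concaveQuadratic L (a 0) x + ⟪toLp 2 (Cᵀ *ᵥ ofLp x), θ⟫ + p θ :=
    fun θ x => by rw [hψa, ha, concaveQuadratic_add_left, inner_toLp_mulVec]
  have hmax_iff : ∀ θ x₀, IsMaxOn (ψ θ) (closedBall 0 rx) x₀ ↔
      IsMaxOn (concaveQuadratic L (a θ)) (closedBall 0 rx) x₀ := fun θ x₀ => by
    simp only [isMaxOn_iff, hψa, add_le_add_iff_right]
  obtain ⟨xt, hxt, hxt_spec⟩ := exists_continuous_isMaxOn_concaveQuadratic L hrx.le (a := a)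
    (by rw [funext ha]; fun_prop) fun θ => toLp_transpose_mulVec_mem_orthogonal_ker hξ _
  choose hxt_mem hxt_perp hxt_max using hxt_spec
  have hmax : ∀ θ, IsMaxOn (ψ θ) (closedBall 0 rx) (xt θ) := fun θ => (hmax_iff θ _).2 (hxt_max θ)
  have hmaxC : ∀ θ, IsMaxOn (fun x => concaveQuadratic L (a 0) x + ⟪toLp 2 (Cᵀ *ᵥ ofLp x), θ⟫)
      (closedBall 0 rx) (xt θ) := fun θ => by
    simpa only [isMaxOn_iff, hψC, add_le_add_iff_right] using hmax θ
  have hJ : Jt =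
      (fun θ => concaveQuadratic L (a 0) (xt θ) + ⟪toLp 2 (Cᵀ *ᵥ ofLp (xt θ)), θ⟫) + p :=
    funext fun θ => by
      rw [hJt, IsGreatest.csSup_eq ⟨mem_image_of_mem _ (hxt_mem θ),
        forall_mem_image.2 (isMaxOn_iff.1 (hmax θ))⟩, hψC]
      rfl
  refine ⟨xt, fun θ => ⟨hxt_mem θ, (mem_orthogonal_ker_weightedFeatureMap hξ _).1 (hxt_perp θ),
    hmax θ, ?_, ?_⟩, ?_, fun θ => ?_, hxt⟩
  · intro x' hx' hspan hx'_max
    exact eq_of_isMaxOn_of_mem_orthogonal_ker (convex_closedBall 0 rx) hx' (hxt_mem θ)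
      ((mem_orthogonal_ker_weightedFeatureMap hξ _).2 hspan) (hxt_perp θ)
      ((hmax_iff θ _).1 hx'_max) (hxt_max θ)
  · intro xhat hxhat hxhat_max
    have hL := map_eq_of_isMaxOn (convex_closedBall 0 rx) hxhat (hxt_mem θ)
      ((hmax_iff θ _).1 hxhat_max) (hxt_max θ)
    rw [← sub_eq_zero, ← mulVec_sub, ← WithLp.ofLp_sub, ← mem_ker_weightedFeatureMap hξ, mem_ker,
      map_sub, hL, sub_self]
  · rw [hJ]
    exact (convexOn_of_isMaxOn_affine hxt_mem hmaxC).add hp_conv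
  · rw [hJ]
    exact (hasGradientAt_of_isMaxOn_affine hxt_mem hmaxC (by fun_prop)).add (hp_grad θ)

/-- With `B_x` a closed Euclidean ball centered at the origin of positive
radius and `J̃_p(θ) = sup_{x ∈ B_x} ψ^o(θ,x)`: (i) for each `θ` there is a unique maximizer
`x̃(θ)` of `ψ^o(θ,·)` over `B_x` lying in `span{φ(S)}`, and every maximizer `x̂` satisfies
`Φx̂ = Φx̃(θ)`; (ii) `J̃_p` is convex and differentiable with
`∇J̃_p(θ) = (ΦᵀΞ(P−I)Φ)ᵀ x̃(θ) + ∇p(θ)`; (iii) `θ ↦ x̃(θ)` is continuous. -/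
theorem stmt_11
    (n d : ℕ) (hn : 0 < n) (hd : 0 < d)
    (Φ : Matrix (Fin n) (Fin d) ℝ) (hΦ : Φ ≠ 0)
    (ξ : Fin n → ℝ) (hξ : ∀ i, 0 < ξ i)
    (Ξ : Matrix (Fin n) (Fin n) ℝ) (hΞ : Ξ = Matrix.diagonal ξ)
    (P : Matrix (Fin n) (Fin n) ℝ) (r : Fin n → ℝ)
    (T : (Fin n → ℝ) → (Fin n → ℝ)) (hT : ∀ v, T v = r + P.mulVec v)
    (p : EuclideanSpace ℝ (Fin d) → ℝ)
    (gradp : EuclideanSpace ℝ (Fin d) → EuclideanSpace ℝ (Fin d))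
    (hp_conv : ConvexOn ℝ Set.univ p)
    (hp_grad : ∀ θ, HasGradientAt p (gradp θ) θ)
    -- the closed Euclidean ball `B_x` of positive radius centered at the origin
    (rx : ℝ) (hrx : 0 < rx)
    (Bx : Set (EuclideanSpace ℝ (Fin d)))
    (hBx : Bx = Metric.closedBall (0 : EuclideanSpace ℝ (Fin d)) rx)
    -- `ψ^o(θ,x) = ⟨Φx, T v_θ − v_θ⟩_ξ − ½‖Φx‖²_ξ + p(θ)`
    (ψ : EuclideanSpace ℝ (Fin d) → EuclideanSpace ℝ (Fin d) → ℝ)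
    (hψ : ∀ θ x : EuclideanSpace ℝ (Fin d),
      ψ θ x = Φ.mulVec x ⬝ᵥ Ξ.mulVec (T (Φ.mulVec θ) - Φ.mulVec θ)
        - (1 / 2) * (Φ.mulVec x ⬝ᵥ Ξ.mulVec (Φ.mulVec x)) + p θ)
    -- `J̃_p(θ) = sup_{x ∈ B_x} ψ^o(θ, x)`
    (Jt : EuclideanSpace ℝ (Fin d) → ℝ)
    (hJt : ∀ θ : EuclideanSpace ℝ (Fin d), Jt θ = sSup ((fun x => ψ θ x) '' Bx)) :
    ∃ xt : EuclideanSpace ℝ (Fin d) → EuclideanSpace ℝ (Fin d),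
      (∀ θ : EuclideanSpace ℝ (Fin d),
        xt θ ∈ Bx ∧
        (xt θ : Fin d → ℝ) ∈ Submodule.span ℝ (Set.range (fun i : Fin n => Φ i)) ∧
        (∀ x ∈ Bx, ψ θ x ≤ ψ θ (xt θ)) ∧
        (∀ x' : EuclideanSpace ℝ (Fin d), x' ∈ Bx →
          (x' : Fin d → ℝ) ∈ Submodule.span ℝ (Set.range (fun i : Fin n => Φ i)) →
          (∀ x ∈ Bx, ψ θ x ≤ ψ θ x') → x' = xt θ) ∧
        (∀ xhat : EuclideanSpace ℝ (Fin d), xhat ∈ Bx →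
          (∀ x ∈ Bx, ψ θ x ≤ ψ θ xhat) → Φ.mulVec xhat = Φ.mulVec (xt θ))) ∧
      ConvexOn ℝ Set.univ Jt ∧
      (∀ θ : EuclideanSpace ℝ (Fin d),
        HasGradientAt Jt (toEuc ((Φᵀ * Ξ * (P - 1) * Φ)ᵀ.mulVec (xt θ)) + gradp θ) θ) ∧
      Continuous xt :=
  stmt_11_general n d Φ ξ hξ Ξ hΞ P r T hT p gradp hp_conv hp_grad rx hrx Bx hBx ψ hψ Jt hJt
end

section
/- (i) If the set of minimizers of J_p over ℝ^d is nonempty and θ = 0 is the unique minimizer of f_∞ over ℝ^d, then the set of minimizers of J_p over ℝ^d is compact. (ii) If instead the set of minimizers of J_p over ℝ^d is nonempty, ∇p(θ) ∈ span{φ(S)} for every θ ∈ span{φ(S)}, and θ = 0 is the unique minimizer of f_∞ over span{φ(S)}, then the set of minimizers of J_p that lie in span{φ(S)} is nonempty and compact. -/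
/-!
The objective `J_p` is convex, and along rays it grows like the recession function:
`J_p(a u) / a² → f_∞(u)`. If a sublevel set of `J_p` (inside a subspace `V`) were unbounded,
normalizing points of it and extracting a convergent subsequence would give a unit vector `u ∈ V`
along whose ray `J_p` stays bounded, by convexity; then `f_∞(u) ≤ 0 = f_∞(0)`, contradicting
that `0` is the unique minimizer of `f_∞` on `V`. Hence minimizer sets are closed and bounded.

For (ii), with `V = span φ(S)`, orthogonal projection onto `V` does not increase `J_p`: the
quadratic part only sees `Φθ`, which is blind to `Vᗮ`, and the gradient inequality gives
`p θ ≥ p (πθ) + ⟪∇p(πθ), θ - πθ⟫ = p (πθ)` because `∇p(πθ) ∈ V`. So a minimizer over `V`,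
which exists since sublevel sets in `V` are compact, is a global minimizer.
-/

open Matrix Filter Topology Set

namespace Matrix

variable {ι κ : Type*} [Fintype ι] [Fintype κ] {Ξ : Matrix ι ι ℝ}

theorem smul_dotProduct_mulVec_smul (a : ℝ) (x : ι → ℝ) :
    (a • x) ⬝ᵥ Ξ *ᵥ (a • x) = a ^ 2 * (x ⬝ᵥ Ξ *ᵥ x) := by
  simp only [mulVec_smul, smul_dotProduct, dotProduct_smul, smul_eq_mul]
  ring

theorem PosSemidef.convexOn_dotProduct_mulVec (hΞ : Ξ.PosSemidef) :
    ConvexOn ℝ univ fun x : ι → ℝ => x ⬝ᵥ Ξ *ᵥ x := by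
  refine ⟨convex_univ, fun x _ y _ a b ha hb hab => ?_⟩
  have hxy := hΞ.dotProduct_mulVec_nonneg (x - y)
  simp only [star_trivial] at hxy
  have key : a • (x ⬝ᵥ Ξ *ᵥ x) + b • (y ⬝ᵥ Ξ *ᵥ y) - (a • x + b • y) ⬝ᵥ Ξ *ᵥ (a • x + b • y)
      = a * b * ((x - y) ⬝ᵥ Ξ *ᵥ (x - y)) := by
    obtain rfl : b = 1 - a := by linarith
    simp only [mulVec_add, mulVec_sub, mulVec_smul, add_dotProduct, sub_dotProduct,
      dotProduct_add, dotProduct_sub, smul_dotProduct, dotProduct_smul, smul_eq_mul]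
    ring
  nlinarith [mul_nonneg (mul_nonneg ha hb) hxy]

theorem PosDef.mulVec_eq_of_forall_dotProduct_mulVec_sub_eq_zero (hΞ : Ξ.PosDef)
    {Φ : Matrix ι κ ℝ} {v : ι → ℝ} {α β : κ → ℝ} (hα : ∀ θ, Φ *ᵥ θ ⬝ᵥ Ξ *ᵥ (v - Φ *ᵥ α) = 0)
    (hβ : ∀ θ, Φ *ᵥ θ ⬝ᵥ Ξ *ᵥ (v - Φ *ᵥ β) = 0) : Φ *ᵥ α = Φ *ᵥ β := by
  have hzero : (Φ *ᵥ (β - α)) ⬝ᵥ Ξ *ᵥ (Φ *ᵥ (β - α)) = 0 := by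
    have h : Φ *ᵥ (β - α) = (v - Φ *ᵥ α) - (v - Φ *ᵥ β) := by
      rw [mulVec_sub]; abel
    calc (Φ *ᵥ (β - α)) ⬝ᵥ Ξ *ᵥ (Φ *ᵥ (β - α))
        = (Φ *ᵥ (β - α)) ⬝ᵥ Ξ *ᵥ ((v - Φ *ᵥ α) - (v - Φ *ᵥ β)) := by rw [← h]
      _ = 0 := by rw [Ξ.mulVec_sub, dotProduct_sub, hα, hβ, sub_zero]
  by_contra hne
  have hpos := hΞ.dotProduct_mulVec_pos (x := Φ *ᵥ (β - α))
    (by rw [mulVec_sub, sub_ne_zero]; exact Ne.symm hne)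
  simp only [star_trivial, hzero] at hpos
  exact lt_irrefl _ hpos

theorem PosDef.isLinearMap_of_forall_dotProduct_mulVec_sub_eq_zero (hΞ : Ξ.PosDef)
    {Φ : Matrix ι κ ℝ} {proj : (ι → ℝ) → ι → ℝ} (hmem : ∀ v, ∃ θ, proj v = Φ *ᵥ θ)
    (horth : ∀ v θ, Φ *ᵥ θ ⬝ᵥ Ξ *ᵥ (v - proj v) = 0) : IsLinearMap ℝ proj := by
  choose coord hcoord using hmem
  have horth' (v θ) : Φ *ᵥ θ ⬝ᵥ Ξ *ᵥ (v - Φ *ᵥ coord v) = 0 :=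
    hcoord v ▸ horth v θ
  refine ⟨fun x y => ?_, fun a x => ?_⟩
  · rw [hcoord, hcoord, hcoord, ← mulVec_add]
    refine hΞ.mulVec_eq_of_forall_dotProduct_mulVec_sub_eq_zero (horth' _) fun θ => ?_
    rw [mulVec_add, add_sub_add_comm, mulVec_add, dotProduct_add, horth', horth', add_zero]
  · rw [hcoord, hcoord, ← mulVec_smul]
    refine hΞ.mulVec_eq_of_forall_dotProduct_mulVec_sub_eq_zero (horth' _) fun θ => ?_
    rw [mulVec_smul, ← smul_sub, mulVec_smul, dotProduct_smul, horth', smul_zero]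

theorem tendsto_dotProduct_mulVec_add_smul_div_sq (c x : ι → ℝ) :
    Tendsto (fun a : ℝ => (c + a • x) ⬝ᵥ Ξ *ᵥ (c + a • x) / a ^ 2) atTop
      (𝓝 (x ⬝ᵥ Ξ *ᵥ x)) := by
  have hcont : Continuous fun v : ι → ℝ => v ⬝ᵥ Ξ *ᵥ v := by fun_prop
  have hlim : Tendsto (fun a : ℝ => a⁻¹ • c + x) atTop (𝓝 x) := by
    simpa using ((tendsto_inv_atTop_zero (𝕜 := ℝ)).smul_const c).add_const x
  refine ((hcont.tendsto x).comp hlim).congr' ?_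
  filter_upwards [eventually_ne_atTop 0] with a ha
  have hsplit : c + a • x = a • (a⁻¹ • c + x) := by
    rw [smul_add, smul_smul, mul_inv_cancel₀ ha, one_smul]
  rw [Function.comp_apply, hsplit, smul_dotProduct_mulVec_smul,
    mul_div_cancel_left₀ _ (pow_ne_zero 2 ha)]

end Matrix

theorem Matrix.mulVec_ofLp_starProjection {ι κ : Type*} [Fintype κ] {Φ : Matrix ι κ ℝ}
    {V : Submodule ℝ (EuclideanSpace ℝ κ)} (hrow : ∀ i, WithLp.toLp 2 (Φ i) ∈ V)
    (θ : EuclideanSpace ℝ κ) : Φ *ᵥ (V.starProjection θ).ofLp = Φ *ᵥ θ.ofLp := by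
  rw [eq_comm, ← sub_eq_zero, ← mulVec_sub, ← WithLp.ofLp_sub]
  funext i
  simpa [EuclideanSpace.inner_eq_star_dotProduct, mulVec, dotProduct_comm] using
    Submodule.inner_right_of_mem_orthogonal (hrow i) (V.sub_starProjection_mem_orthogonal θ)

section QuadraticModel

variable {E ι : Type*} [NormedAddCommGroup E] [NormedSpace ℝ E] [Fintype ι]
  {Ξ : Matrix ι ι ℝ} (w : E →ₗ[ℝ] ι → ℝ) (c : ι → ℝ) {p : E → ℝ}

theorem convexOn_half_dotProduct_mulVec_add (hΞ : Ξ.PosSemidef) (hp : ConvexOn ℝ univ p) :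
    ConvexOn ℝ univ fun θ => 1 / 2 * ((c + w θ) ⬝ᵥ Ξ *ᵥ (c + w θ)) + p θ := by
  let ℓ : E →ᵃ[ℝ] ι → ℝ := w.toAffineMap + AffineMap.const ℝ E c
  have hq : ConvexOn ℝ univ fun θ => 1 / 2 * ((c + w θ) ⬝ᵥ Ξ *ᵥ (c + w θ)) := by
    simpa [ℓ, add_comm] using
      (hΞ.convexOn_dotProduct_mulVec.comp_affineMap ℓ).smul (by norm_num : (0:ℝ) ≤ 1 / 2)
  exact hq.add hp

theorem tendsto_half_dotProduct_mulVec_add_div_sq {pinf : E → ℝ} {u : E}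
    (hp : Tendsto (fun a : ℝ => p (a • u) / a ^ 2) atTop (𝓝 (pinf u))) :
    Tendsto
      (fun a : ℝ => (1 / 2 * ((c + w (a • u)) ⬝ᵥ Ξ *ᵥ (c + w (a • u))) + p (a • u)) / a ^ 2)
      atTop (𝓝 (1 / 2 * (w u ⬝ᵥ Ξ *ᵥ w u) + pinf u)) := by
  simp only [add_div, mul_div_assoc, map_smul]
  exact ((tendsto_dotProduct_mulVec_add_smul_div_sq c (w u)).const_mul _).add hp

end QuadraticModel

section Recession

variable {E : Type*} [NormedAddCommGroup E] [NormedSpace ℝ E] [FiniteDimensional ℝ E]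
  {f : E → ℝ}

theorem ConvexOn.exists_norm_eq_one_forall_smul_le_of_not_isBounded (hf : ConvexOn ℝ univ f)
    (hfc : Continuous f) {V : Submodule ℝ E} {m : ℝ}
    (hunb : ¬ Bornology.IsBounded {x | x ∈ V ∧ f x ≤ m}) :
    ∃ u ∈ V, ‖u‖ = 1 ∧ ∀ a : ℝ, 0 ≤ a → f (a • u) ≤ max m (f 0) := by
  rw [isBounded_iff_forall_norm_le] at hunb
  push Not at hunb
  choose x hx hnorm using fun k : ℕ => hunb k
  have hpos (k : ℕ) : 0 < ‖x k‖ := (Nat.cast_nonneg k).trans_lt (hnorm k)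
  have hsphere (k : ℕ) : ‖x k‖⁻¹ • x k ∈ Metric.sphere (0 : E) 1 := by
    simp [norm_smul, (hpos k).ne']
  obtain ⟨u, hu, φ, hφ, hconv⟩ := (isCompact_sphere (0 : E) 1).tendsto_subseq hsphere
  have hnorm_atTop : Tendsto (fun j => ‖x (φ j)‖) atTop atTop :=
    tendsto_atTop_mono (fun j => (Nat.cast_le.2 hφ.le_apply).trans (hnorm (φ j)).le)
      tendsto_natCast_atTop_atTop
  refine ⟨u, V.closed_of_finiteDimensional.mem_of_tendsto hconv
    (Eventually.of_forall fun j => V.smul_mem _ (hx (φ j)).1), by simpa using hu, fun a ha => ?_⟩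
  refine le_of_tendsto ((hfc.tendsto _).comp (hconv.const_smul a)) ?_
  filter_upwards [hnorm_atTop.eventually_ge_atTop a] with j hj
  have ht : a / ‖x (φ j)‖ ≤ 1 := div_le_one_of_le₀ hj (norm_nonneg _)
  have hseg := hf.le_on_segment' (mem_univ (x (φ j))) (mem_univ 0)
    (div_nonneg ha (norm_nonneg _)) (sub_nonneg.2 ht) (add_sub_cancel _ _)
  rw [smul_zero, add_zero] at hseg
  simp only [Function.comp_apply, smul_smul, ← div_eq_mul_inv]
  exact hseg.trans (max_le_max_right _ (hx (φ j)).2)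

theorem ConvexOn.isBounded_sublevel_of_isMinOn (hf : ConvexOn ℝ univ f)
    (hfc : Continuous f) {g : E → ℝ}
    (hg : ∀ u, Tendsto (fun a : ℝ => f (a • u) / a ^ 2) atTop (𝓝 (g u)))
    {V : Submodule ℝ E} (hmin : IsMinOn g V 0) (huniq : ∀ u ∈ V, IsMinOn g V u → u = 0)
    (m : ℝ) : Bornology.IsBounded {x | x ∈ V ∧ f x ≤ m} := by
  have hg0 : g 0 = 0 := by
    refine tendsto_nhds_unique (hg 0) ?_
    simpa using (tendsto_const_nhds (x := f 0)).div_atTop (tendsto_pow_atTop two_ne_zero)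
  by_contra hunb
  obtain ⟨u, huV, hu, hray⟩ := hf.exists_norm_eq_one_forall_smul_le_of_not_isBounded hfc hunb
  have hgu : g u ≤ 0 := by
    refine le_of_tendsto_of_tendsto (hg u)
      ((tendsto_const_nhds (x := max m (f 0))).div_atTop (tendsto_pow_atTop two_ne_zero)) ?_
    filter_upwards [eventually_gt_atTop 0] with a ha
    exact div_le_div_of_nonneg_right (hray a ha.le) (by positivity)
  have hu0 := huniq u huV (isMinOn_iff.2 fun θ hθ => (hgu.trans_eq hg0.symm).trans (hmin hθ))
  simp [hu0] at hu

theorem ConvexOn.isCompact_setOf_mem_and_forall_le (hf : ConvexOn ℝ univ f)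
    (hfc : Continuous f) {g : E → ℝ}
    (hg : ∀ u, Tendsto (fun a : ℝ => f (a • u) / a ^ 2) atTop (𝓝 (g u)))
    {V : Submodule ℝ E} (hmin : IsMinOn g V 0) (huniq : ∀ u ∈ V, IsMinOn g V u → u = 0) :
    IsCompact {x | x ∈ V ∧ ∀ y, f x ≤ f y} := by
  have hclosed : IsClosed {x | ∀ y, f x ≤ f y} := by
    simp only [ofPred_forall]
    exact isClosed_iInter fun y => isClosed_le hfc continuous_const
  exact Metric.isCompact_of_isClosed_isBounded (V.closed_of_finiteDimensional.inter hclosed)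
    ((hf.isBounded_sublevel_of_isMinOn hfc hg hmin huniq (f 0)).subset
      fun x hx => ⟨hx.1, hx.2 0⟩)

end Recession

section InnerProductSpace

variable {E : Type*} [NormedAddCommGroup E] [InnerProductSpace ℝ E] {f : E → ℝ}

theorem ConvexOn.add_inner_le_of_hasGradientAt [CompleteSpace E] (hf : ConvexOn ℝ univ f)
    {x g : E} (hg : HasGradientAt f g x) (z : E) : f x + inner ℝ g z ≤ f (x + z) := by
  let ℓ : ℝ →ᵃ[ℝ] E := AffineMap.lineMap x (x + z)
  have hline : ConvexOn ℝ univ (f ∘ ℓ) := hf.comp_affineMap ℓ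
  have hderiv : HasDerivAt (f ∘ ℓ) (inner ℝ g z) 0 := by
    have hf' : HasFDerivAt f (InnerProductSpace.toDual ℝ E g) (ℓ 0) := by
      simpa [ℓ] using hg.hasFDerivAt
    simpa [ℓ] using hf'.comp_hasDerivAt 0 AffineMap.hasDerivAt_lineMap
  have := hline.le_slope_of_hasDerivAt (mem_univ 0) (mem_univ 1) zero_lt_one hderiv
  simp [ℓ, slope_def_field] at this
  linarith

theorem ConvexOn.apply_starProjection_le [CompleteSpace E] (hf : ConvexOn ℝ univ f)
    {gradf : E → E} (hgrad : ∀ x, HasGradientAt f (gradf x) x) {V : Submodule ℝ E}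
    [V.HasOrthogonalProjection] (hV : ∀ x ∈ V, gradf x ∈ V) (x : E) :
    f (V.starProjection x) ≤ f x := by
  have h := hf.add_inner_le_of_hasGradientAt (hgrad (V.starProjection x))
    (x - V.starProjection x)
  rwa [add_sub_cancel, Submodule.inner_right_of_mem_orthogonal
    (hV _ (V.starProjection_apply_mem x)) (V.sub_starProjection_mem_orthogonal x),
    add_zero] at h

theorem exists_mem_forall_le_of_starProjection_le [FiniteDimensional ℝ E]
    (hfc : Continuous f) {V : Submodule ℝ E}
    (hbdd : Bornology.IsBounded {x | x ∈ V ∧ f x ≤ f 0})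
    (hproj : ∀ x, f (V.starProjection x) ≤ f x) : ∃ x ∈ V, ∀ y, f x ≤ f y := by
  have hK : IsCompact {x | x ∈ V ∧ f x ≤ f 0} :=
    Metric.isCompact_of_isClosed_isBounded
      (V.closed_of_finiteDimensional.inter (isClosed_le hfc continuous_const)) hbdd
  obtain ⟨x, ⟨hxV, hx0⟩, hmin⟩ :=
    hK.exists_isMinOn ⟨0, V.zero_mem, le_rfl⟩ hfc.continuousOn
  have hminV : ∀ v ∈ V, f x ≤ f v := fun v hv =>
    (le_total (f v) (f 0)).elim (fun h => hmin ⟨hv, h⟩) hx0.trans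
  exact ⟨x, hxV, fun y => (hminV _ (V.starProjection_apply_mem y)).trans (hproj y)⟩

end InnerProductSpace

theorem stmt_12_general
    (n d : ℕ)
    (Φ : Matrix (Fin n) (Fin d) ℝ)
    (ξ : Fin n → ℝ) (hξ : ∀ i, 0 < ξ i)
    (Ξ : Matrix (Fin n) (Fin n) ℝ) (hΞ : Ξ = Matrix.diagonal ξ)
    (proj : (Fin n → ℝ) → (Fin n → ℝ))
    (hproj_mem : ∀ v : Fin n → ℝ, ∃ θ : Fin d → ℝ, proj v = Φ.mulVec θ)
    (hproj_orth : ∀ (v : Fin n → ℝ) (θ : Fin d → ℝ),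
      Φ.mulVec θ ⬝ᵥ Ξ.mulVec (v - proj v) = 0)
    (P : Matrix (Fin n) (Fin n) ℝ) (r : Fin n → ℝ)
    (T : (Fin n → ℝ) → (Fin n → ℝ)) (hT : ∀ v, T v = r + P.mulVec v)
    -- `p` is convex and differentiable with Lipschitz continuous gradient
    (p : EuclideanSpace ℝ (Fin d) → ℝ)
    (gradp : EuclideanSpace ℝ (Fin d) → EuclideanSpace ℝ (Fin d))
    (hp_conv : ConvexOn ℝ Set.univ p)
    (hp_grad : ∀ θ, HasGradientAt p (gradp θ) θ)
    -- `p_∞` is convex and differentiable with `p(aθ)/a² → p_∞(θ)`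
    (pinf : EuclideanSpace ℝ (Fin d) → ℝ)
    (hlim : ∀ θ : EuclideanSpace ℝ (Fin d),
      Filter.Tendsto (fun a : ℝ => p (a • θ) / a ^ 2) Filter.atTop (nhds (pinf θ)))
    -- `J_p(θ) = ½‖Π_ξ(T v_θ − v_θ)‖²_ξ + p(θ)`
    (Jp : EuclideanSpace ℝ (Fin d) → ℝ)
    (hJp : ∀ θ : EuclideanSpace ℝ (Fin d),
      Jp θ = (1 / 2) * (proj (T (Φ.mulVec θ) - Φ.mulVec θ) ⬝ᵥ
          Ξ.mulVec (proj (T (Φ.mulVec θ) - Φ.mulVec θ))) + p θ)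
    -- `f_∞(θ) = ½‖Π_ξ(P − I)Φθ‖²_ξ + p_∞(θ)`
    (finf : EuclideanSpace ℝ (Fin d) → ℝ)
    (hfinf : ∀ θ : EuclideanSpace ℝ (Fin d),
      finf θ = (1 / 2) * (proj (((P - 1) * Φ).mulVec θ) ⬝ᵥ
          Ξ.mulVec (proj (((P - 1) * Φ).mulVec θ))) + pinf θ) :
    -- part (i)
    (({θ : EuclideanSpace ℝ (Fin d) | ∀ θ', Jp θ ≤ Jp θ'}.Nonempty) →
      ((∀ θ : EuclideanSpace ℝ (Fin d), finf 0 ≤ finf θ) ∧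
        (∀ θ : EuclideanSpace ℝ (Fin d), (∀ θ', finf θ ≤ finf θ') → θ = 0)) →
      IsCompact {θ : EuclideanSpace ℝ (Fin d) | ∀ θ', Jp θ ≤ Jp θ'}) ∧
    -- part (ii)
    (({θ : EuclideanSpace ℝ (Fin d) | ∀ θ', Jp θ ≤ Jp θ'}.Nonempty) →
      (∀ θ : EuclideanSpace ℝ (Fin d),
        (θ : Fin d → ℝ) ∈ Submodule.span ℝ (Set.range (fun i : Fin n => Φ i)) →
        (gradp θ : Fin d → ℝ) ∈ Submodule.span ℝ (Set.range (fun i : Fin n => Φ i))) →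
      ((∀ θ : EuclideanSpace ℝ (Fin d),
          (θ : Fin d → ℝ) ∈ Submodule.span ℝ (Set.range (fun i : Fin n => Φ i)) →
          finf 0 ≤ finf θ) ∧
        (∀ θ : EuclideanSpace ℝ (Fin d),
          (θ : Fin d → ℝ) ∈ Submodule.span ℝ (Set.range (fun i : Fin n => Φ i)) →
          (∀ θ' : EuclideanSpace ℝ (Fin d),
            (θ' : Fin d → ℝ) ∈ Submodule.span ℝ (Set.range (fun i : Fin n => Φ i)) →
            finf θ ≤ finf θ') → θ = 0)) →
      ({θ : EuclideanSpace ℝ (Fin d) |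
          (θ : Fin d → ℝ) ∈ Submodule.span ℝ (Set.range (fun i : Fin n => Φ i)) ∧
          ∀ θ', Jp θ ≤ Jp θ'}.Nonempty ∧
        IsCompact {θ : EuclideanSpace ℝ (Fin d) |
          (θ : Fin d → ℝ) ∈ Submodule.span ℝ (Set.range (fun i : Fin n => Φ i)) ∧
          ∀ θ', Jp θ ≤ Jp θ'})) := by
  have hΞpos : Ξ.PosDef := hΞ ▸ PosDef.diagonal hξ
  have hproj := hΞpos.isLinearMap_of_forall_dotProduct_mulVec_sub_eq_zero hproj_mem hproj_orth
  let w : EuclideanSpace ℝ (Fin d) →ₗ[ℝ] Fin n → ℝ :=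
    hproj.mk' proj ∘ₗ (P - 1).mulVecLin ∘ₗ Φ.mulVecLin ∘ₗ
      (WithLp.linearEquiv 2 ℝ (Fin d → ℝ)).toLinearMap
  have hJ : Jp = fun θ => 1 / 2 * ((proj r + w θ) ⬝ᵥ Ξ *ᵥ (proj r + w θ)) + p θ := by
    funext θ
    rw [hJp, hT, add_sub_assoc, hproj.map_add]
    simp [w]
  have hJ_conv : ConvexOn ℝ univ Jp :=
    hJ ▸ convexOn_half_dotProduct_mulVec_add w (proj r) hΞpos.posSemidef hp_conv
  have hJ_cont : Continuous Jp := by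
    have hp_cont : Continuous p := Differentiable.continuous fun θ => (hp_grad θ).differentiableAt
    rw [hJ]
    fun_prop
  have hJ_rec (u : EuclideanSpace ℝ (Fin d)) :
      Tendsto (fun a : ℝ => Jp (a • u) / a ^ 2) atTop (𝓝 (finf u)) := by
    simp only [hJ, hfinf, ← mulVec_mulVec]
    exact tendsto_half_dotProduct_mulVec_add_div_sq w (proj r) (hlim u)
  let V : Submodule ℝ (EuclideanSpace ℝ (Fin d)) :=
    (Submodule.span ℝ (Set.range fun i : Fin n => Φ i)).comap
      (WithLp.linearEquiv 2 ℝ (Fin d → ℝ)).toLinearMap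
  refine ⟨fun _ ⟨hmin, huniq⟩ => ?_, fun _ hgrad ⟨hmin, huniq⟩ => ?_⟩
  · simpa using hJ_conv.isCompact_setOf_mem_and_forall_le hJ_cont hJ_rec (V := ⊤)
      (fun θ _ => hmin θ) (fun θ _ hθ => huniq θ fun θ' => hθ Submodule.mem_top)
  have hgradV : ∀ θ ∈ V, gradp θ ∈ V := fun θ hθ => hgrad θ hθ
  have hJ_proj (θ : EuclideanSpace ℝ (Fin d)) : Jp (V.starProjection θ) ≤ Jp θ := by
    have hw : w (V.starProjection θ) = w θ := congrArg (fun v => proj ((P - 1) *ᵥ v))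
      (mulVec_ofLp_starProjection (V := V) (fun i => Submodule.subset_span ⟨i, rfl⟩) θ)
    simp only [hJ, hw]
    exact add_le_add_right (hp_conv.apply_starProjection_le hp_grad hgradV θ) _
  obtain ⟨θ₀, hθ₀V, hθ₀⟩ := exists_mem_forall_le_of_starProjection_le hJ_cont
    (hJ_conv.isBounded_sublevel_of_isMinOn hJ_cont hJ_rec (V := V) hmin huniq (Jp 0)) hJ_proj
  exact ⟨⟨θ₀, hθ₀V, hθ₀⟩,
    hJ_conv.isCompact_setOf_mem_and_forall_le hJ_cont hJ_rec (V := V) hmin huniq⟩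

/-- (i) If the set of minimizers of `J_p` over `ℝ^d` is nonempty and
`θ = 0` is the unique minimizer of `f_∞` over `ℝ^d`, then the set of minimizers of `J_p` is
compact.  (ii) If instead the set of minimizers of `J_p` is nonempty, `∇p` maps
`span{φ(S)}` into itself, and `θ = 0` is the unique minimizer of `f_∞` over `span{φ(S)}`,
then the set of minimizers of `J_p` lying in `span{φ(S)}` is nonempty and compact. -/
theorem stmt_12
    (n d : ℕ) (hn : 0 < n) (hd : 0 < d)
    (Φ : Matrix (Fin n) (Fin d) ℝ) (hΦ : Φ ≠ 0)
    (ξ : Fin n → ℝ) (hξ : ∀ i, 0 < ξ i)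
    (Ξ : Matrix (Fin n) (Fin n) ℝ) (hΞ : Ξ = Matrix.diagonal ξ)
    (proj : (Fin n → ℝ) → (Fin n → ℝ))
    (hproj_mem : ∀ v : Fin n → ℝ, ∃ θ : Fin d → ℝ, proj v = Φ.mulVec θ)
    (hproj_orth : ∀ (v : Fin n → ℝ) (θ : Fin d → ℝ),
      Φ.mulVec θ ⬝ᵥ Ξ.mulVec (v - proj v) = 0)
    (P : Matrix (Fin n) (Fin n) ℝ) (r : Fin n → ℝ)
    (T : (Fin n → ℝ) → (Fin n → ℝ)) (hT : ∀ v, T v = r + P.mulVec v)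
    -- `p` is convex and differentiable with Lipschitz continuous gradient
    (p : EuclideanSpace ℝ (Fin d) → ℝ)
    (gradp : EuclideanSpace ℝ (Fin d) → EuclideanSpace ℝ (Fin d))
    (hp_conv : ConvexOn ℝ Set.univ p)
    (hp_grad : ∀ θ, HasGradientAt p (gradp θ) θ)
    (L : NNReal) (hp_lip : LipschitzWith L gradp)
    -- `p_∞` is convex and differentiable with `p(aθ)/a² → p_∞(θ)`
    (pinf : EuclideanSpace ℝ (Fin d) → ℝ)
    (hpinf_conv : ConvexOn ℝ Set.univ pinf)
    (hpinf_diff : Differentiable ℝ pinf)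
    (hlim : ∀ θ : EuclideanSpace ℝ (Fin d),
      Filter.Tendsto (fun a : ℝ => p (a • θ) / a ^ 2) Filter.atTop (nhds (pinf θ)))
    -- `J_p(θ) = ½‖Π_ξ(T v_θ − v_θ)‖²_ξ + p(θ)`
    (Jp : EuclideanSpace ℝ (Fin d) → ℝ)
    (hJp : ∀ θ : EuclideanSpace ℝ (Fin d),
      Jp θ = (1 / 2) * (proj (T (Φ.mulVec θ) - Φ.mulVec θ) ⬝ᵥ
          Ξ.mulVec (proj (T (Φ.mulVec θ) - Φ.mulVec θ))) + p θ)
    -- `f_∞(θ) = ½‖Π_ξ(P − I)Φθ‖²_ξ + p_∞(θ)`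
    (finf : EuclideanSpace ℝ (Fin d) → ℝ)
    (hfinf : ∀ θ : EuclideanSpace ℝ (Fin d),
      finf θ = (1 / 2) * (proj (((P - 1) * Φ).mulVec θ) ⬝ᵥ
          Ξ.mulVec (proj (((P - 1) * Φ).mulVec θ))) + pinf θ) :
    -- part (i)
    (({θ : EuclideanSpace ℝ (Fin d) | ∀ θ', Jp θ ≤ Jp θ'}.Nonempty) →
      ((∀ θ : EuclideanSpace ℝ (Fin d), finf 0 ≤ finf θ) ∧
        (∀ θ : EuclideanSpace ℝ (Fin d), (∀ θ', finf θ ≤ finf θ') → θ = 0)) →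
      IsCompact {θ : EuclideanSpace ℝ (Fin d) | ∀ θ', Jp θ ≤ Jp θ'}) ∧
    -- part (ii)
    (({θ : EuclideanSpace ℝ (Fin d) | ∀ θ', Jp θ ≤ Jp θ'}.Nonempty) →
      (∀ θ : EuclideanSpace ℝ (Fin d),
        (θ : Fin d → ℝ) ∈ Submodule.span ℝ (Set.range (fun i : Fin n => Φ i)) →
        (gradp θ : Fin d → ℝ) ∈ Submodule.span ℝ (Set.range (fun i : Fin n => Φ i))) →
      ((∀ θ : EuclideanSpace ℝ (Fin d),
          (θ : Fin d → ℝ) ∈ Submodule.span ℝ (Set.range (fun i : Fin n => Φ i)) →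
          finf 0 ≤ finf θ) ∧
        (∀ θ : EuclideanSpace ℝ (Fin d),
          (θ : Fin d → ℝ) ∈ Submodule.span ℝ (Set.range (fun i : Fin n => Φ i)) →
          (∀ θ' : EuclideanSpace ℝ (Fin d),
            (θ' : Fin d → ℝ) ∈ Submodule.span ℝ (Set.range (fun i : Fin n => Φ i)) →
            finf θ ≤ finf θ') → θ = 0)) →
      ({θ : EuclideanSpace ℝ (Fin d) |
          (θ : Fin d → ℝ) ∈ Submodule.span ℝ (Set.range (fun i : Fin n => Φ i)) ∧
          ∀ θ', Jp θ ≤ Jp θ'}.Nonempty ∧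
        IsCompact {θ : EuclideanSpace ℝ (Fin d) |
          (θ : Fin d → ℝ) ∈ Submodule.span ℝ (Set.range (fun i : Fin n => Φ i)) ∧
          ∀ θ', Jp θ ≤ Jp θ'})) :=
  stmt_12_general n d Φ ξ hξ Ξ hΞ proj hproj_mem hproj_orth P r T hT p gradp hp_conv hp_grad pinf
    hlim Jp hJp finf hfinf
end

section
/- Assume the set Θ_opt of minimizers of J_p over ℝ^d is nonempty. Then there exists a unique point x_opt ∈ span{φ(S)} such that the set of pairs (θ̄, x̄) ∈ ℝ^d × span{φ(S)} that are saddle points of ψ^o — i.e. satisfy ψ^o(θ, x̄) ≥ ψ^o(θ̄, x̄) ≥ ψ^o(θ̄, x) for all θ ∈ ℝ^d and all x ∈ ℝ^d — equals Θ_opt × {x_opt}; moreover, for any θ̄ ∈ Θ_opt, x_opt is the unique solution in span{φ(S)} of the linear system ΦᵀΞΦx = ΦᵀΞ(T^{(λ)}v_θ̄ − v_θ̄). -/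
/-! The identity `J_p(θ) = ψ^o(θ,x) + ½‖Π_ξ(T v_θ − v_θ) − Φx‖²_ξ` shows that `ψ^o(θ,·)` attains
its maximum `J_p(θ)` exactly at the `x` with `Φx = Π_ξ(T v_θ − v_θ)`. For such an `x̄` and a
minimizer `θ̄` of `J_p`, the convex function `ψ^o(·,x̄)` lies below `J_p`, touches it at `θ̄`, and
the gap grows only quadratically along segments from `θ̄` (as `θ ↦ Π_ξ(T v_θ − v_θ)` is affine),
so `θ̄` also minimizes `ψ^o(·,x̄)`. Comparing two minimizers in this way shows that
`Π_ξ(T v_θ − v_θ)` is constant on `Θ_opt`; since `Φ` is injective on its row space this pins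
down `x_opt`, and the linear system is the normal equation of the projection. -/

open Matrix Set Filter Topology

section RowSpace

variable {R ι κ : Type*} [Field R] [Fintype ι]

theorem Matrix.span_row_eq_range_transpose (Φ : Matrix ι κ R) :
    Submodule.span R (range Φ.row) = LinearMap.range Φᵀ.mulVecLin := by
  rw [range_mulVecLin, col_transpose]

variable [LinearOrder R] [IsStrictOrderedRing R] [Fintype κ]

theorem Matrix.injOn_mulVec_span_row (Φ : Matrix ι κ R) :
    InjOn Φ.mulVec (Submodule.span R (range Φ.row)) := by
  intro x hx y hy hxy
  obtain ⟨c, hc⟩ : x - y ∈ LinearMap.range Φᵀ.mulVecLin := by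
    rw [← Φ.span_row_eq_range_transpose]; exact Submodule.sub_mem _ hx hy
  have hsq : (x - y) ⬝ᵥ (x - y) = 0 := by
    nth_rw 1 [← hc]
    rw [mulVecLin_apply, dotProduct_comm, dotProduct_mulVec, vecMul_transpose, mulVec_sub, hxy,
      sub_self, zero_dotProduct]
  exact sub_eq_zero.1 (dotProduct_self_eq_zero.1 hsq)

theorem Matrix.exists_mem_span_row_mulVec_eq (Φ : Matrix ι κ R) (β : κ → R) :
    ∃ x ∈ Submodule.span R (range Φ.row), Φ *ᵥ x = Φ *ᵥ β := by
  have hrange : LinearMap.range (Φ * Φᵀ).mulVecLin = LinearMap.range Φ.mulVecLin :=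
    Submodule.eq_of_le_of_finrank_eq
      (by rw [mulVecLin_mul]; exact LinearMap.range_comp_le_range _ _) (rank_self_mul_transpose Φ)
  obtain ⟨c, hc⟩ : Φ *ᵥ β ∈ LinearMap.range (Φ * Φᵀ).mulVecLin := hrange ▸ ⟨β, rfl⟩
  refine ⟨Φᵀ *ᵥ c, Φ.span_row_eq_range_transpose ▸ ⟨c, rfl⟩, ?_⟩
  rw [mulVec_mulVec, ← hc, mulVecLin_apply]

end RowSpace

theorem nonneg_of_forall_nonneg_add_mul {a c : ℝ} (h : ∀ t ∈ Ioc (0 : ℝ) 1, 0 ≤ a + t * c) :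
    0 ≤ a := by
  have hlim : Tendsto (fun t => a + t * c) (𝓝[>] 0) (𝓝 a) := by
    refine Tendsto.mono_left ?_ nhdsWithin_le_nhds
    simpa using ((continuous_id.mul continuous_const).const_add a).tendsto 0
  exact ge_of_tendsto hlim (eventually_of_mem (Ioc_mem_nhdsGT one_pos) h)

theorem ConvexOn.le_of_isMin_of_le_add_sq {E : Type*} [AddCommGroup E] [Module ℝ E]
    {f g : E → ℝ} (hf : ConvexOn ℝ univ f) {a b : E} {c : ℝ} (hg : ∀ y, g a ≤ g y)
    (ha : f a ≤ g a) (hgap : ∀ t ∈ Ioc (0 : ℝ) 1,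
      g (AffineMap.lineMap a b t) ≤ f (AffineMap.lineMap a b t) + t ^ 2 * c) :
    f a ≤ f b := by
  suffices ∀ t ∈ Ioc (0 : ℝ) 1, 0 ≤ (f b - f a) + t * c by
    linarith [nonneg_of_forall_nonneg_add_mul this]
  intro t ht
  have hconv : f (AffineMap.lineMap a b t) ≤ (1 - t) * f a + t * f b := by
    rw [AffineMap.lineMap_apply_module]
    exact hf.2 (mem_univ a) (mem_univ b) (by linarith [ht.2]) ht.1.le (by ring)
  have key : 0 ≤ t * ((f b - f a) + t * c) := by
    linarith [hgap t ht, hg (AffineMap.lineMap a b t)]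
  exact nonneg_of_mul_nonneg_right (by linarith) ht.1

section WeightedInner

variable {ι : Type*} [Fintype ι] {Ξ : Matrix ι ι ℝ}

theorem Matrix.IsHermitian.dotProduct_mulVec_comm (hΞ : Ξ.IsHermitian) (u v : ι → ℝ) :
    u ⬝ᵥ Ξ *ᵥ v = v ⬝ᵥ Ξ *ᵥ u := by
  rw [dotProduct_mulVec, dotProduct_comm, ← mulVec_transpose,
    ← conjTranspose_eq_transpose_of_trivial, hΞ.eq]

theorem Matrix.IsHermitian.dotProduct_mulVec_sub_self (hΞ : Ξ.IsHermitian) (u v : ι → ℝ) :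
    (u - v) ⬝ᵥ Ξ *ᵥ (u - v) = u ⬝ᵥ Ξ *ᵥ u - 2 * (v ⬝ᵥ Ξ *ᵥ u) + v ⬝ᵥ Ξ *ᵥ v := by
  rw [mulVec_sub, dotProduct_sub, sub_dotProduct, sub_dotProduct, hΞ.dotProduct_mulVec_comm u v]
  ring

theorem Matrix.PosDef.dotProduct_mulVec_self_nonneg (hΞ : Ξ.PosDef) (u : ι → ℝ) :
    0 ≤ u ⬝ᵥ Ξ *ᵥ u := by
  simpa using hΞ.posSemidef.dotProduct_mulVec_nonneg u

theorem Matrix.PosDef.dotProduct_mulVec_self_eq_zero (hΞ : Ξ.PosDef) {u : ι → ℝ} :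
    u ⬝ᵥ Ξ *ᵥ u = 0 ↔ u = 0 := by
  refine ⟨fun h => by_contra fun hu => ?_, fun h => by simp [h]⟩
  simpa [h] using hΞ.dotProduct_mulVec_pos hu

end WeightedInner

section WeightedProjection

variable {ι κ : Type*} [Fintype ι] [Fintype κ] {Ξ : Matrix ι ι ℝ} {Φ : Matrix ι κ ℝ}
  {proj : (ι → ℝ) → ι → ℝ}

structure IsWeightedProj (Ξ : Matrix ι ι ℝ) (Φ : Matrix ι κ ℝ) (proj : (ι → ℝ) → ι → ℝ) :
    Prop where
  mem_range : ∀ v, ∃ θ, proj v = Φ *ᵥ θ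
  orthogonal : ∀ v θ, Φ *ᵥ θ ⬝ᵥ Ξ *ᵥ (v - proj v) = 0

namespace IsWeightedProj

theorem eq_of_orthogonal (h : IsWeightedProj Ξ Φ proj) (hΞ : Ξ.PosDef) {v : ι → ℝ} {θ : κ → ℝ}
    (horth : ∀ θ', Φ *ᵥ θ' ⬝ᵥ Ξ *ᵥ (v - Φ *ᵥ θ) = 0) : proj v = Φ *ᵥ θ := by
  obtain ⟨θ', hθ'⟩ := h.mem_range v
  have he : proj v - Φ *ᵥ θ = Φ *ᵥ (θ' - θ) := by rw [mulVec_sub, hθ']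
  rw [← sub_eq_zero, ← hΞ.dotProduct_mulVec_self_eq_zero]
  calc (proj v - Φ *ᵥ θ) ⬝ᵥ Ξ *ᵥ (proj v - Φ *ᵥ θ)
      = (proj v - Φ *ᵥ θ) ⬝ᵥ Ξ *ᵥ (v - Φ *ᵥ θ) - (proj v - Φ *ᵥ θ) ⬝ᵥ Ξ *ᵥ (v - proj v) := by
        rw [← dotProduct_sub, ← mulVec_sub, sub_sub_sub_cancel_left]
    _ = 0 := by rw [he, horth, h.orthogonal, sub_zero]

theorem map_add (h : IsWeightedProj Ξ Φ proj) (hΞ : Ξ.PosDef) (u v : ι → ℝ) :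
    proj (u + v) = proj u + proj v := by
  obtain ⟨θu, hu⟩ := h.mem_range u
  obtain ⟨θv, hv⟩ := h.mem_range v
  rw [hu, hv, ← mulVec_add]
  refine h.eq_of_orthogonal hΞ fun θ => ?_
  rw [mulVec_add, ← hu, ← hv, add_sub_add_comm, mulVec_add, dotProduct_add, h.orthogonal,
    h.orthogonal, add_zero]

theorem map_smul (h : IsWeightedProj Ξ Φ proj) (hΞ : Ξ.PosDef) (c : ℝ) (v : ι → ℝ) :
    proj (c • v) = c • proj v := by
  obtain ⟨θv, hv⟩ := h.mem_range v
  rw [hv, ← mulVec_smul]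
  refine h.eq_of_orthogonal hΞ fun θ => ?_
  rw [mulVec_smul, ← hv, ← smul_sub, mulVec_smul, dotProduct_smul, h.orthogonal, smul_zero]

def toLinearMap (h : IsWeightedProj Ξ Φ proj) (hΞ : Ξ.PosDef) : (ι → ℝ) →ₗ[ℝ] ι → ℝ where
  toFun := proj
  map_add' := h.map_add hΞ
  map_smul' := h.map_smul hΞ

theorem half_dotProduct_mulVec_self (h : IsWeightedProj Ξ Φ proj) (hΞ : Ξ.IsHermitian)
    (v : ι → ℝ) (x : κ → ℝ) :
    1 / 2 * (proj v ⬝ᵥ Ξ *ᵥ proj v) = Φ *ᵥ x ⬝ᵥ Ξ *ᵥ v - 1 / 2 * (Φ *ᵥ x ⬝ᵥ Ξ *ᵥ Φ *ᵥ x)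
      + 1 / 2 * ((proj v - Φ *ᵥ x) ⬝ᵥ Ξ *ᵥ (proj v - Φ *ᵥ x)) := by
  have hv : Φ *ᵥ x ⬝ᵥ Ξ *ᵥ v = Φ *ᵥ x ⬝ᵥ Ξ *ᵥ proj v := by
    rw [← sub_eq_zero, ← dotProduct_sub, ← mulVec_sub, h.orthogonal]
  rw [hv, hΞ.dotProduct_mulVec_sub_self]
  ring

theorem normal_equations_iff (h : IsWeightedProj Ξ Φ proj) (hΞ : Ξ.PosDef) (v : ι → ℝ)
    (x : κ → ℝ) : (Φᵀ * Ξ * Φ) *ᵥ x = (Φᵀ * Ξ) *ᵥ v ↔ Φ *ᵥ x = proj v := by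
  have horth : ∀ u, (∀ θ, Φ *ᵥ θ ⬝ᵥ Ξ *ᵥ u = 0) ↔ (Φᵀ * Ξ) *ᵥ u = 0 := fun u => by
    simp_rw [dotProduct_comm (Φ *ᵥ _), dotProduct_mulVec _ Φ, ← mulVec_transpose, mulVec_mulVec]
    exact dotProduct_eq_zero_iff
  rw [← mulVec_mulVec, eq_comm, ← sub_eq_zero, ← mulVec_sub, ← horth, eq_comm]
  exact ⟨h.eq_of_orthogonal hΞ, fun hx θ => hx ▸ h.orthogonal v θ⟩

end IsWeightedProj

end WeightedProjection

section SaddlePoint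

variable {ι κ : Type*} [Fintype ι] [Fintype κ]

def bellmanResidual (P : Matrix ι ι ℝ) (r : ι → ℝ) (Φ : Matrix ι κ ℝ) :
    (κ → ℝ) →ᵃ[ℝ] ι → ℝ where
  toFun θ := r + P *ᵥ (Φ *ᵥ θ) - Φ *ᵥ θ
  linear := (P * Φ - Φ).mulVecLin
  map_vadd' θ v := by
    simp only [vadd_eq_add, mulVec_add, mulVecLin_apply, sub_mulVec, ← mulVec_mulVec]
    abel

variable (Ξ : Matrix ι ι ℝ) (Φ : Matrix ι κ ℝ) (proj : (ι → ℝ) → ι → ℝ)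
  (δ : (κ → ℝ) →ᵃ[ℝ] ι → ℝ) (p : (κ → ℝ) → ℝ)

/- With `δ θ` standing for the Bellman residual `T^{(λ)} v_θ − v_θ`, these are `J_p` and `ψ^o`. -/
noncomputable def projBellmanObjective (θ : κ → ℝ) : ℝ :=
  1 / 2 * (proj (δ θ) ⬝ᵥ Ξ *ᵥ proj (δ θ)) + p θ

noncomputable def saddleObjective (θ x : κ → ℝ) : ℝ :=
  Φ *ᵥ x ⬝ᵥ Ξ *ᵥ δ θ - 1 / 2 * (Φ *ᵥ x ⬝ᵥ Ξ *ᵥ Φ *ᵥ x) + p θ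

variable {Ξ Φ proj δ p}

theorem projBellmanObjective_eq_saddleObjective_add (h : IsWeightedProj Ξ Φ proj)
    (hΞ : Ξ.IsHermitian) (θ x : κ → ℝ) :
    projBellmanObjective Ξ proj δ p θ = saddleObjective Ξ Φ δ p θ x
      + 1 / 2 * ((proj (δ θ) - Φ *ᵥ x) ⬝ᵥ Ξ *ᵥ (proj (δ θ) - Φ *ᵥ x)) := by
  rw [projBellmanObjective, saddleObjective, h.half_dotProduct_mulVec_self hΞ (δ θ) x]
  ring

theorem saddleObjective_le_projBellmanObjective (h : IsWeightedProj Ξ Φ proj) (hΞ : Ξ.PosDef)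
    (θ x : κ → ℝ) : saddleObjective Ξ Φ δ p θ x ≤ projBellmanObjective Ξ proj δ p θ := by
  rw [projBellmanObjective_eq_saddleObjective_add h hΞ.isHermitian θ x]
  linarith [hΞ.dotProduct_mulVec_self_nonneg (proj (δ θ) - Φ *ᵥ x)]

theorem saddleObjective_eq_projBellmanObjective_iff (h : IsWeightedProj Ξ Φ proj)
    (hΞ : Ξ.PosDef) {θ x : κ → ℝ} :
    saddleObjective Ξ Φ δ p θ x = projBellmanObjective Ξ proj δ p θ ↔ Φ *ᵥ x = proj (δ θ) := by
  rw [projBellmanObjective_eq_saddleObjective_add h hΞ.isHermitian θ x, eq_comm,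
    eq_comm (a := Φ *ᵥ x), ← sub_eq_zero (a := proj (δ θ)), ← hΞ.dotProduct_mulVec_self_eq_zero]
  constructor <;> intro h' <;> linarith

theorem convexOn_saddleObjective (hp : ConvexOn ℝ univ p) (x : κ → ℝ) :
    ConvexOn ℝ univ fun θ => saddleObjective Ξ Φ δ p θ x := by
  classical
  have hlin := ((Matrix.toLinearMap₂' ℝ Ξ (Φ *ᵥ x)).convexOn convex_univ).comp_affineMap δ
  refine ((hlin.add_const (-(1 / 2 * (Φ *ᵥ x ⬝ᵥ Ξ *ᵥ Φ *ᵥ x)))).add hp).congr fun θ _ => ?_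
  simp only [saddleObjective, Pi.add_apply, Function.comp_apply, toLinearMap₂'_apply',
    sub_eq_add_neg]

theorem projBellmanObjective_lineMap (h : IsWeightedProj Ξ Φ proj) (hΞ : Ξ.PosDef)
    {θ₀ x : κ → ℝ} (hx : Φ *ᵥ x = proj (δ θ₀)) (θ : κ → ℝ) (t : ℝ) :
    projBellmanObjective Ξ proj δ p (AffineMap.lineMap θ₀ θ t)
      = saddleObjective Ξ Φ δ p (AffineMap.lineMap θ₀ θ t) x
        + t ^ 2 * (1 / 2 * ((proj (δ θ) - proj (δ θ₀)) ⬝ᵥ Ξ *ᵥ (proj (δ θ) - proj (δ θ₀)))) := by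
  have hgap : proj (δ (AffineMap.lineMap θ₀ θ t)) - Φ *ᵥ x = t • (proj (δ θ) - proj (δ θ₀)) := by
    have hL : ∀ v, proj v = h.toLinearMap hΞ v := fun _ => rfl
    rw [δ.apply_lineMap, hx]
    simp only [hL, AffineMap.lineMap_apply_module', map_add, map_smul, map_sub,
      add_sub_cancel_right]
  rw [projBellmanObjective_eq_saddleObjective_add h hΞ.isHermitian _ x, hgap, mulVec_smul,
    smul_dotProduct, dotProduct_smul, smul_eq_mul, smul_eq_mul]
  ring

theorem saddleObjective_le_of_isMin (h : IsWeightedProj Ξ Φ proj) (hΞ : Ξ.PosDef)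
    (hp : ConvexOn ℝ univ p) {θ₀ x : κ → ℝ}
    (hθ₀ : ∀ θ, projBellmanObjective Ξ proj δ p θ₀ ≤ projBellmanObjective Ξ proj δ p θ)
    (hx : Φ *ᵥ x = proj (δ θ₀)) (θ : κ → ℝ) :
    saddleObjective Ξ Φ δ p θ₀ x ≤ saddleObjective Ξ Φ δ p θ x :=
  (convexOn_saddleObjective hp x).le_of_isMin_of_le_add_sq hθ₀
    (saddleObjective_le_projBellmanObjective h hΞ θ₀ x)
    fun t _ => (projBellmanObjective_lineMap h hΞ hx θ t).le

theorem proj_eq_of_isMin (h : IsWeightedProj Ξ Φ proj) (hΞ : Ξ.PosDef) (hp : ConvexOn ℝ univ p)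
    {θ₀ θ₁ : κ → ℝ}
    (hθ₀ : ∀ θ, projBellmanObjective Ξ proj δ p θ₀ ≤ projBellmanObjective Ξ proj δ p θ)
    (hθ₁ : ∀ θ, projBellmanObjective Ξ proj δ p θ₁ ≤ projBellmanObjective Ξ proj δ p θ) :
    proj (δ θ₀) = proj (δ θ₁) := by
  obtain ⟨x, hx⟩ := h.mem_range (δ θ₀)
  have hx₀ := (saddleObjective_eq_projBellmanObjective_iff (p := p) h hΞ).2 hx.symm
  rw [hx, ← (saddleObjective_eq_projBellmanObjective_iff (p := p) h hΞ)]
  refine le_antisymm (saddleObjective_le_projBellmanObjective h hΞ θ₁ x) ?_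
  calc projBellmanObjective Ξ proj δ p θ₁ ≤ projBellmanObjective Ξ proj δ p θ₀ := hθ₁ θ₀
    _ = saddleObjective Ξ Φ δ p θ₀ x := hx₀.symm
    _ ≤ saddleObjective Ξ Φ δ p θ₁ x := saddleObjective_le_of_isMin h hΞ hp hθ₀ hx.symm θ₁

theorem isSaddlePoint_iff (h : IsWeightedProj Ξ Φ proj) (hΞ : Ξ.PosDef) (hp : ConvexOn ℝ univ p)
    {θ₀ x₀ : κ → ℝ} :
    ((∀ θ, saddleObjective Ξ Φ δ p θ₀ x₀ ≤ saddleObjective Ξ Φ δ p θ x₀) ∧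
        ∀ x, saddleObjective Ξ Φ δ p θ₀ x ≤ saddleObjective Ξ Φ δ p θ₀ x₀) ↔
      (∀ θ, projBellmanObjective Ξ proj δ p θ₀ ≤ projBellmanObjective Ξ proj δ p θ) ∧
        Φ *ᵥ x₀ = proj (δ θ₀) := by
  constructor
  · rintro ⟨hmin, hmax⟩
    obtain ⟨x, hx⟩ := h.mem_range (δ θ₀)
    have hx₀ : saddleObjective Ξ Φ δ p θ₀ x₀ = projBellmanObjective Ξ proj δ p θ₀ := by
      refine le_antisymm (saddleObjective_le_projBellmanObjective h hΞ θ₀ x₀) ?_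
      rw [← (saddleObjective_eq_projBellmanObjective_iff h hΞ).2 hx.symm]
      exact hmax x
    refine ⟨fun θ => ?_, (saddleObjective_eq_projBellmanObjective_iff h hΞ).1 hx₀⟩
    rw [← hx₀]
    exact (hmin θ).trans (saddleObjective_le_projBellmanObjective h hΞ θ x₀)
  · rintro ⟨hθ₀, hx₀⟩
    refine ⟨saddleObjective_le_of_isMin h hΞ hp hθ₀ hx₀, fun x => ?_⟩
    rw [(saddleObjective_eq_projBellmanObjective_iff h hΞ).2 hx₀]
    exact saddleObjective_le_projBellmanObjective h hΞ θ₀ x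

theorem setOf_isSaddlePoint_eq (h : IsWeightedProj Ξ Φ proj) (hΞ : Ξ.PosDef)
    (hp : ConvexOn ℝ univ p) {θ₀ x₀ : κ → ℝ}
    (hθ₀ : ∀ θ, projBellmanObjective Ξ proj δ p θ₀ ≤ projBellmanObjective Ξ proj δ p θ)
    (hx₀_mem : x₀ ∈ Submodule.span ℝ (range Φ.row)) (hx₀ : Φ *ᵥ x₀ = proj (δ θ₀)) :
    {q : (κ → ℝ) × (κ → ℝ) | q.2 ∈ Submodule.span ℝ (range Φ.row) ∧
        (∀ θ, saddleObjective Ξ Φ δ p q.1 q.2 ≤ saddleObjective Ξ Φ δ p θ q.2) ∧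
        ∀ x, saddleObjective Ξ Φ δ p q.1 x ≤ saddleObjective Ξ Φ δ p q.1 q.2} =
      {θ | ∀ θ', projBellmanObjective Ξ proj δ p θ ≤ projBellmanObjective Ξ proj δ p θ'} ×ˢ
        {x₀} := by
  ext ⟨θ, x⟩
  simp only [mem_ofPred_eq, mem_prod, mem_singleton_iff, isSaddlePoint_iff h hΞ hp]
  constructor
  · rintro ⟨hx_mem, hθ, hx⟩
    refine ⟨hθ, Φ.injOn_mulVec_span_row hx_mem hx₀_mem ?_⟩
    rw [hx, hx₀, proj_eq_of_isMin h hΞ hp hθ₀ hθ]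
  · rintro ⟨hθ, rfl⟩
    exact ⟨hx₀_mem, hθ, hx₀.trans (proj_eq_of_isMin h hΞ hp hθ₀ hθ)⟩

end SaddlePoint

theorem stmt_14_general
    (n d : ℕ)
    (Φ : Matrix (Fin n) (Fin d) ℝ)
    (ξ : Fin n → ℝ) (hξ : ∀ i, 0 < ξ i)
    (Ξ : Matrix (Fin n) (Fin n) ℝ) (hΞ : Ξ = Matrix.diagonal ξ)
    (proj : (Fin n → ℝ) → (Fin n → ℝ))
    (hproj_mem : ∀ v : Fin n → ℝ, ∃ θ : Fin d → ℝ, proj v = Φ.mulVec θ)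
    (hproj_orth : ∀ (v : Fin n → ℝ) (θ : Fin d → ℝ),
      Φ.mulVec θ ⬝ᵥ Ξ.mulVec (v - proj v) = 0)
    (P : Matrix (Fin n) (Fin n) ℝ) (r : Fin n → ℝ)
    (T : (Fin n → ℝ) → (Fin n → ℝ)) (hT : ∀ v, T v = r + P.mulVec v)
    (p : (Fin d → ℝ) → ℝ)
    (hp_conv : ConvexOn ℝ Set.univ p)
    -- `J_p(θ) = ½‖Π_ξ(T v_θ − v_θ)‖²_ξ + p(θ)`
    (Jp : (Fin d → ℝ) → ℝ)
    (hJp : ∀ θ : Fin d → ℝ,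
      Jp θ = (1 / 2) * (proj (T (Φ.mulVec θ) - Φ.mulVec θ) ⬝ᵥ
          Ξ.mulVec (proj (T (Φ.mulVec θ) - Φ.mulVec θ))) + p θ)
    -- `ψ^o(θ,x) = ⟨Φx, T v_θ − v_θ⟩_ξ − ½‖Φx‖²_ξ + p(θ)`
    (ψ : (Fin d → ℝ) → (Fin d → ℝ) → ℝ)
    (hψ : ∀ θ x : Fin d → ℝ,
      ψ θ x = Φ.mulVec x ⬝ᵥ Ξ.mulVec (T (Φ.mulVec θ) - Φ.mulVec θ)
        - (1 / 2) * (Φ.mulVec x ⬝ᵥ Ξ.mulVec (Φ.mulVec x)) + p θ)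
    -- `Θ_opt` is nonempty
    (hne : {θ : Fin d → ℝ | ∀ θ', Jp θ ≤ Jp θ'}.Nonempty) :
    ∃ xopt : Fin d → ℝ,
      xopt ∈ Submodule.span ℝ (Set.range (fun i : Fin n => Φ i)) ∧
      -- the saddle points with second component in `span{φ(S)}` are `Θ_opt × {x_opt}`
      ({q : (Fin d → ℝ) × (Fin d → ℝ) |
          q.2 ∈ Submodule.span ℝ (Set.range (fun i : Fin n => Φ i)) ∧
          (∀ θ : Fin d → ℝ, ψ q.1 q.2 ≤ ψ θ q.2) ∧
          (∀ x : Fin d → ℝ, ψ q.1 x ≤ ψ q.1 q.2)} =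
        {θ : Fin d → ℝ | ∀ θ', Jp θ ≤ Jp θ'} ×ˢ {xopt}) ∧
      -- `x_opt` is the unique such point
      (∀ y : Fin d → ℝ, y ∈ Submodule.span ℝ (Set.range (fun i : Fin n => Φ i)) →
        ({q : (Fin d → ℝ) × (Fin d → ℝ) |
            q.2 ∈ Submodule.span ℝ (Set.range (fun i : Fin n => Φ i)) ∧
            (∀ θ : Fin d → ℝ, ψ q.1 q.2 ≤ ψ θ q.2) ∧
            (∀ x : Fin d → ℝ, ψ q.1 x ≤ ψ q.1 q.2)} =
          {θ : Fin d → ℝ | ∀ θ', Jp θ ≤ Jp θ'} ×ˢ {y}) → y = xopt) ∧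
      -- for any `θ̄ ∈ Θ_opt`, `x_opt` is the unique solution in span of the linear system
      (∀ θb : Fin d → ℝ, (∀ θ', Jp θb ≤ Jp θ') →
        (Φᵀ * Ξ * Φ).mulVec xopt = (Φᵀ * Ξ).mulVec (T (Φ.mulVec θb) - Φ.mulVec θb) ∧
        (∀ x : Fin d → ℝ, x ∈ Submodule.span ℝ (Set.range (fun i : Fin n => Φ i)) →
          (Φᵀ * Ξ * Φ).mulVec x = (Φᵀ * Ξ).mulVec (T (Φ.mulVec θb) - Φ.mulVec θb) →
          x = xopt)) := by
  subst hΞ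
  have hΞ : (diagonal ξ).PosDef := .diagonal hξ
  have hproj : IsWeightedProj (diagonal ξ) Φ proj := ⟨hproj_mem, hproj_orth⟩
  set δ := bellmanResidual P r Φ
  have hδ : ∀ θ, T (Φ *ᵥ θ) - Φ *ᵥ θ = δ θ := fun θ => by rw [hT]; rfl
  obtain rfl : Jp = projBellmanObjective (diagonal ξ) proj δ p :=
    funext fun θ => by rw [hJp, hδ]; rfl
  obtain rfl : ψ = saddleObjective (diagonal ξ) Φ δ p :=
    funext₂ fun θ x => by rw [hψ, hδ]; rfl
  simp only [hδ]
  obtain ⟨θ₀, hθ₀⟩ := hne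
  obtain ⟨β, hβ⟩ := hproj_mem (δ θ₀)
  obtain ⟨x₀, hx₀_mem, hx₀⟩ := Φ.exists_mem_span_row_mulVec_eq β
  have hx₀_proj : Φ *ᵥ x₀ = proj (δ θ₀) := hx₀.trans hβ.symm
  have hset := setOf_isSaddlePoint_eq hproj hΞ hp_conv hθ₀ hx₀_mem hx₀_proj
  refine ⟨x₀, hx₀_mem, hset, fun y _ hy => ?_, fun θ hθ => ?_⟩
  · exact singleton_eq_singleton_iff.1
      ((prod_eq_prod_iff_of_nonempty ⟨(θ₀, y), hθ₀, mem_singleton y⟩).1 (hy.symm.trans hset)).2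
  · have hx₀θ : Φ *ᵥ x₀ = proj (δ θ) := hx₀_proj.trans (proj_eq_of_isMin hproj hΞ hp_conv hθ₀ hθ)
    refine ⟨(hproj.normal_equations_iff hΞ _ x₀).2 hx₀θ, fun x hx hx_sol => ?_⟩
    exact Φ.injOn_mulVec_span_row hx hx₀_mem
      (((hproj.normal_equations_iff hΞ _ x).1 hx_sol).trans hx₀θ.symm)

/-- If the set `Θ_opt` of minimizers of `J_p` over `ℝ^d` is nonempty, then
there is a unique `x_opt ∈ span{φ(S)}` such that the set of saddle points `(θ̄,x̄)` of `ψ^o`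
with `x̄ ∈ span{φ(S)}` equals `Θ_opt × {x_opt}`; moreover, for any `θ̄ ∈ Θ_opt`, `x_opt` is
the unique solution in `span{φ(S)}` of `ΦᵀΞΦx = ΦᵀΞ(T v_θ̄ − v_θ̄)`. -/
theorem stmt_14
    (n d : ℕ) (hn : 0 < n) (hd : 0 < d)
    (Φ : Matrix (Fin n) (Fin d) ℝ) (hΦ : Φ ≠ 0)
    (ξ : Fin n → ℝ) (hξ : ∀ i, 0 < ξ i)
    (Ξ : Matrix (Fin n) (Fin n) ℝ) (hΞ : Ξ = Matrix.diagonal ξ)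
    (proj : (Fin n → ℝ) → (Fin n → ℝ))
    (hproj_mem : ∀ v : Fin n → ℝ, ∃ θ : Fin d → ℝ, proj v = Φ.mulVec θ)
    (hproj_orth : ∀ (v : Fin n → ℝ) (θ : Fin d → ℝ),
      Φ.mulVec θ ⬝ᵥ Ξ.mulVec (v - proj v) = 0)
    (P : Matrix (Fin n) (Fin n) ℝ) (r : Fin n → ℝ)
    (T : (Fin n → ℝ) → (Fin n → ℝ)) (hT : ∀ v, T v = r + P.mulVec v)
    (p : (Fin d → ℝ) → ℝ)
    (hp_conv : ConvexOn ℝ Set.univ p) (hp_diff : Differentiable ℝ p)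
    -- `J_p(θ) = ½‖Π_ξ(T v_θ − v_θ)‖²_ξ + p(θ)`
    (Jp : (Fin d → ℝ) → ℝ)
    (hJp : ∀ θ : Fin d → ℝ,
      Jp θ = (1 / 2) * (proj (T (Φ.mulVec θ) - Φ.mulVec θ) ⬝ᵥ
          Ξ.mulVec (proj (T (Φ.mulVec θ) - Φ.mulVec θ))) + p θ)
    -- `ψ^o(θ,x) = ⟨Φx, T v_θ − v_θ⟩_ξ − ½‖Φx‖²_ξ + p(θ)`
    (ψ : (Fin d → ℝ) → (Fin d → ℝ) → ℝ)
    (hψ : ∀ θ x : Fin d → ℝ,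
      ψ θ x = Φ.mulVec x ⬝ᵥ Ξ.mulVec (T (Φ.mulVec θ) - Φ.mulVec θ)
        - (1 / 2) * (Φ.mulVec x ⬝ᵥ Ξ.mulVec (Φ.mulVec x)) + p θ)
    -- `Θ_opt` is nonempty
    (hne : {θ : Fin d → ℝ | ∀ θ', Jp θ ≤ Jp θ'}.Nonempty) :
    ∃ xopt : Fin d → ℝ,
      xopt ∈ Submodule.span ℝ (Set.range (fun i : Fin n => Φ i)) ∧
      -- the saddle points with second component in `span{φ(S)}` are `Θ_opt × {x_opt}`
      ({q : (Fin d → ℝ) × (Fin d → ℝ) |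
          q.2 ∈ Submodule.span ℝ (Set.range (fun i : Fin n => Φ i)) ∧
          (∀ θ : Fin d → ℝ, ψ q.1 q.2 ≤ ψ θ q.2) ∧
          (∀ x : Fin d → ℝ, ψ q.1 x ≤ ψ q.1 q.2)} =
        {θ : Fin d → ℝ | ∀ θ', Jp θ ≤ Jp θ'} ×ˢ {xopt}) ∧
      -- `x_opt` is the unique such point
      (∀ y : Fin d → ℝ, y ∈ Submodule.span ℝ (Set.range (fun i : Fin n => Φ i)) →
        ({q : (Fin d → ℝ) × (Fin d → ℝ) |
            q.2 ∈ Submodule.span ℝ (Set.range (fun i : Fin n => Φ i)) ∧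
            (∀ θ : Fin d → ℝ, ψ q.1 q.2 ≤ ψ θ q.2) ∧
            (∀ x : Fin d → ℝ, ψ q.1 x ≤ ψ q.1 q.2)} =
          {θ : Fin d → ℝ | ∀ θ', Jp θ ≤ Jp θ'} ×ˢ {y}) → y = xopt) ∧
      -- for any `θ̄ ∈ Θ_opt`, `x_opt` is the unique solution in span of the linear system
      (∀ θb : Fin d → ℝ, (∀ θ', Jp θb ≤ Jp θ') →
        (Φᵀ * Ξ * Φ).mulVec xopt = (Φᵀ * Ξ).mulVec (T (Φ.mulVec θb) - Φ.mulVec θb) ∧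
        (∀ x : Fin d → ℝ, x ∈ Submodule.span ℝ (Set.range (fun i : Fin n => Φ i)) →
          (Φᵀ * Ξ * Φ).mulVec x = (Φᵀ * Ξ).mulVec (T (Φ.mulVec θb) - Φ.mulVec θb) →
          x = xopt)) :=
  stmt_14_general n d Φ ξ hξ Ξ hΞ proj hproj_mem hproj_orth P r T hT p hp_conv Jp hJp ψ hψ hne
end
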